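/- arXiv:0909.3509 — 10 statements merged into one kernel-verified Lean document; each statement's English description precedes it below -/
import Mathlib

section
/- Let t ≥ 1 be an integer and let M be the t×t integer matrix (with rows and columns indexed 1,…,t) whose entries are M_{i,j} = binom(1, 1+i−j) for 1 ≤ i ≤ t−1 (so the entry is 1 if j = i or j = i+1, and 0 otherwise), and whose last row is M_{t,j} = binom(t+1, t+1−j). Then det M = 1 + (−1)^{t+1}; that is, det M = 0 if t is even and det M = 2 if t is odd. -/
/-- Binomial coefficient `binom(n, k)` for an integer `k`, with the convention
that it is `0` whenever `k < 0` or `k > n`. -/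
def zchoose (n : ℕ) (k : ℤ) : ℤ := if 0 ≤ k then (n.choose k.toNat : ℤ) else 0

lemma aux (t : ℕ) (f : Fin (t+1) → ℤ) :
    (Matrix.of fun i j : Fin (t+1) =>
      if (i : ℕ) + 1 < t + 1 then
        (if (j : ℕ) = i ∨ (j : ℕ) = (i : ℕ) + 1 then (1:ℤ) else 0)
      else f j).det = ∑ j : Fin (t+1), (-1)^(t + (j:ℕ)) * f j := by
  induction t with
  | zero =>
    simp [Matrix.det_fin_one]
  | succ t ih =>
    set M : Matrix (Fin (t+2)) (Fin (t+2)) ℤ := Matrix.of fun i j : Fin (t+2) =>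
      if (i : ℕ) + 1 < t + 2 then
        (if (j : ℕ) = i ∨ (j : ℕ) = (i : ℕ) + 1 then (1:ℤ) else 0)
      else f j with hM
    have h1 : (M.submatrix (0 : Fin (t+2)).succAbove Fin.succ).det
        = ∑ j : Fin (t+1), (-1)^(t + (j:ℕ)) * f j.succ := by
      have e : M.submatrix (0 : Fin (t+2)).succAbove Fin.succ
          = Matrix.of (fun a b : Fin (t+1) =>
            if (a : ℕ) + 1 < t + 1 then
              (if (b : ℕ) = a ∨ (b : ℕ) = (a : ℕ) + 1 then (1:ℤ) else 0)
            else f b.succ) := by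
        ext a b
        simp only [Fin.succAbove_zero, Matrix.submatrix_apply, hM, Matrix.of_apply,
          Fin.val_succ]
        have c1 : (a : ℕ) + 1 + 1 < t + 2 ↔ (a : ℕ) + 1 < t + 1 := by omega
        have c2 : ((b : ℕ) + 1 = (a : ℕ) + 1 ∨ (b : ℕ) + 1 = (a : ℕ) + 1 + 1)
            ↔ ((b : ℕ) = a ∨ (b : ℕ) = (a : ℕ) + 1) := by omega
        rw [if_congr c1 (if_congr c2 rfl rfl) rfl]
      rw [e, ih]
    have h2 : (M.submatrix (Fin.last (t+1)).succAbove Fin.succ).det = 1 := by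
      have lt : (M.submatrix (Fin.last (t+1)).succAbove Fin.succ).BlockTriangular
          OrderDual.toDual := by
        intro i j hij
        have hij' : (i : ℕ) < (j : ℕ) := hij
        have hi := i.isLt
        simp only [Fin.succAbove_last, Matrix.submatrix_apply, hM, Matrix.of_apply,
          Fin.coe_castSucc, Fin.val_succ]
        rw [if_pos (by omega), if_neg (by omega)]
      rw [Matrix.det_of_lowerTriangular _ lt]
      apply Finset.prod_eq_one
      intro a _
      have ha := a.isLt
      simp only [Fin.succAbove_last, Matrix.submatrix_apply, hM, Matrix.of_apply,
        Fin.coe_castSucc, Fin.val_succ]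
      rw [if_pos (by omega), if_pos (by simp)]
    rw [Matrix.det_succ_column_zero, Fin.sum_univ_succ]
    have hz : ∀ b : Fin (t+1), b ≠ Fin.last t →
        (-1 : ℤ)^((b.succ : Fin (t+2)) : ℕ) * M b.succ 0
          * (M.submatrix b.succ.succAbove Fin.succ).det = 0 := by
      intro b hb
      have hb' : (b : ℕ) < t := by
        have := Fin.val_lt_last hb
        omega
      have : M b.succ 0 = 0 := by
        simp only [hM, Matrix.of_apply, Fin.val_succ, Fin.val_zero]
        rw [if_pos (by omega)]; exact if_neg (by omega)
      rw [this]; ring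
    rw [Finset.sum_eq_single (Fin.last t) (fun b _ hb => hz b hb)
      (fun h => absurd (Finset.mem_univ _) h)]
    have hM00 : M 0 0 = 1 := by
      simp only [hM, Matrix.of_apply, Fin.val_zero]
      rw [if_pos (by omega), if_pos (by simp)]
    have hsucc : (Fin.last t).succ = Fin.last (t+1) := rfl
    have hMl0 : M (Fin.last t).succ 0 = f 0 := by
      simp only [hM, Matrix.of_apply, hsucc, Fin.val_last, Fin.val_zero]
      rw [if_neg (by omega)]
    rw [hM00, hMl0, hsucc, h1, h2]
    conv_rhs => rw [Fin.sum_univ_succ]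
    simp only [Fin.val_zero, Fin.val_succ, Fin.val_last, pow_zero, one_mul, mul_one,
      add_zero]
    have hs : ∀ j : Fin (t+1), (-1:ℤ)^(t+1+((j:ℕ)+1)) * f j.succ
        = (-1)^(t+(j:ℕ)) * f j.succ := by
      intro j
      congr 1
      rw [show t+1+((j:ℕ)+1) = (t+(j:ℕ)) + 2 by ring, pow_add]
      norm_num
    rw [Finset.sum_congr rfl (fun j _ => hs j)]
    ring


lemma zchoose_one (k : ℤ) : zchoose 1 k = if k = 0 ∨ k = 1 then 1 else 0 := by
  unfold zchoose
  by_cases h0 : 0 ≤ k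
  · rw [if_pos h0]
    by_cases h : k = 0 ∨ k = 1
    · rcases h with h | h <;> subst h <;> simp
    · rw [if_neg h, Nat.choose_eq_zero_of_lt (by omega)]
      simp
  · rw [if_neg h0, if_neg (by omega)]

/-- The determinant of the matrix associated to the parameters `α = β = γ = 1`,
i.e. to the ideal `(x^{t+1}, y^{t+1}, z^{t+1}, xyz)`:
rows `1, …, t-1` (1-based) have entries `binom(1, 1+i-j)` and the last row has
entries `binom(t+1, t+1-j)`.  Its determinant is `1 + (-1)^{t+1}`. -/
theorem det_abg_one (t : ℕ) (ht : 1 ≤ t) :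
    (Matrix.of fun i j : Fin t =>
        if (i : ℕ) + 1 < t then
          zchoose 1 (1 + (i : ℤ) - (j : ℤ))
        else
          zchoose (t + 1) ((t : ℤ) + 1 - ((j : ℤ) + 1))).det
      = 1 + (-1) ^ (t + 1) := by
  obtain ⟨s, rfl⟩ : ∃ s, t = s + 1 := ⟨t - 1, by omega⟩
  have e : (Matrix.of fun i j : Fin (s+1) =>
        if (i : ℕ) + 1 < s + 1 then
          zchoose 1 (1 + (i : ℤ) - (j : ℤ))
        else
          zchoose (s + 1 + 1) ((((s+1 : ℕ)) : ℤ) + 1 - ((j : ℤ) + 1)))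
      = Matrix.of (fun i j : Fin (s+1) =>
        if (i : ℕ) + 1 < s + 1 then
          (if (j : ℕ) = i ∨ (j : ℕ) = (i : ℕ) + 1 then (1:ℤ) else 0)
        else (((s+2).choose (s + 1 - (j : ℕ)) : ℤ))) := by
    ext i j
    simp only [Matrix.of_apply]
    by_cases h : (i : ℕ) + 1 < s + 1
    · rw [if_pos h, if_pos h, zchoose_one]
      have hi : ((i : Fin (s+1)) : ℤ) = ((i : ℕ) : ℤ) := rfl
      exact if_congr (by omega) rfl rfl
    · rw [if_neg h, if_neg h]
      have hj := j.isLt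
      unfold zchoose
      rw [if_pos (by push_cast; omega)]
      have harg : ((((s+1 : ℕ)) : ℤ) + 1 - ((j : ℤ) + 1)).toNat = s + 1 - (j : ℕ) := by
        push_cast
        omega
      rw [harg]
  rw [e, aux s (fun j => (((s+2).choose (s + 1 - (j : ℕ)) : ℤ)))]
  rw [Fin.sum_univ_eq_sum_range (fun j => (-1:ℤ)^(s + j) * ((s+2).choose (s + 1 - j) : ℤ))]
  rw [← Finset.sum_range_reflect]
  have hrw : ∀ j ∈ Finset.range (s+1),
      (-1:ℤ)^(s + (s + 1 - 1 - j)) * ((s+2).choose (s + 1 - (s + 1 - 1 - j)) : ℤ)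
        = (-1:ℤ)^j * ((s+2).choose (j+1) : ℤ) := by
    intro j hj
    rw [Finset.mem_range] at hj
    have hj' : j ≤ s := by omega
    have h1 : s + 1 - (s + 1 - 1 - j) = j + 1 := by omega
    have h2 : (-1:ℤ)^(s + (s + 1 - 1 - j)) = (-1)^j := by
      have hE : s + (s + 1 - 1 - j) = 2*(s-j) + j := by omega
      rw [hE, pow_add, pow_mul]
      norm_num
    rw [h1, h2]
  rw [Finset.sum_congr rfl hrw]
  have key := Int.alternating_sum_range_choose_of_ne (n := s + 2) (by omega)
  rw [Finset.sum_range_succ'] at key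
  rw [show s + 2 = s + 1 + 1 from rfl, Finset.sum_range_succ] at key
  have hneg : ∀ j ∈ Finset.range (s+1),
      (-1:ℤ)^(j+1) * ((s+2).choose (j+1) : ℤ)
        = -((-1:ℤ)^j * ((s+2).choose (j+1) : ℤ)) := by
    intro j _
    rw [pow_succ]; ring
  rw [Finset.sum_congr rfl hneg, Finset.sum_neg_distrib] at key
  simp only [Nat.choose_self, Nat.choose_zero_right, Nat.cast_one, mul_one, pow_zero] at key
  have hfin : (-1:ℤ)^(s+1+1) = (-1)^(s+2) := rfl
  have : ∑ j ∈ Finset.range (s+1), (-1:ℤ)^j * ((s+2).choose (j+1) : ℤ)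
      = 1 + (-1)^(s+2) := by linarith [key]
  rw [this, hfin]
end

section
/- Let t ≥ 3 be an integer and let M be the t×t integer matrix (rows and columns indexed 1,…,t) with entries M_{i,j} = binom(3, 3+i−j) for 1 ≤ i ≤ t−3, M_{t−2,j} = binom(t+3, t+3−j), M_{t−1,j} = binom(t+3, t+2−j), and M_{t,j} = binom(t+3, t+1−j). Then det M = 0 if t is even, and det M = −(1/4)(t−1)²(t+1)(t+2)(t+4)² if t is odd (note that for odd t the quantity (t−1)² is divisible by 4, so this value is an integer). -/
lemma zchoose_natCast (n m : ℕ) : zchoose n (m : ℤ) = n.choose m := by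
  simp [zchoose]

lemma zchoose_of_neg {k : ℤ} (hk : k < 0) (n : ℕ) : zchoose n k = 0 := by
  simp [zchoose, not_le.mpr hk]

lemma zchoose_of_gt {n : ℕ} {k : ℤ} (hk : (n:ℤ) < k) : zchoose n k = 0 := by
  unfold zchoose
  rw [if_pos (by omega)]
  have h : n < k.toNat := by omega
  simp [Nat.choose_eq_zero_of_lt h]

lemma zchoose_succ (n : ℕ) (k : ℤ) : zchoose (n+1) k = zchoose n k + zchoose n (k-1) := by
  rcases lt_trichotomy k 0 with h | h | h
  · rw [zchoose_of_neg h, zchoose_of_neg h, zchoose_of_neg (by omega)]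
    ring
  · subst h
    rw [show (0:ℤ)-1 = -1 by ring, zchoose_of_neg (show (-1:ℤ) < 0 by norm_num)]
    unfold zchoose
    norm_num
  · unfold zchoose
    rw [if_pos (by omega), if_pos (by omega), if_pos (by omega)]
    have hk : k.toNat = (k-1).toNat + 1 := by omega
    rw [hk, Nat.choose_succ_succ]
    push_cast; ring

lemma two_mul_choose_two (n : ℕ) : 2 * ((n.choose 2 : ℤ)) = n * ((n:ℤ) - 1) := by
  induction n with
  | zero => simp
  | succ m ih =>
    rw [Nat.choose_succ_succ]
    push_cast [Nat.choose_one_right]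
    push_cast at ih
    linear_combination ih

lemma zchoose_eq_cast (n a : ℕ) (k : ℤ) (h : k = (a:ℤ)) : zchoose n k = n.choose a := by
  rw [h, zchoose_natCast]

lemma zchoose_symm (n a : ℕ) (k : ℤ) (h : k + a = n) (h2 : 0 ≤ k) :
    zchoose n k = n.choose a := by
  have h3 : k = ((n - a : ℕ) : ℤ) := by omega
  rw [h3, zchoose_natCast, Nat.choose_symm (by omega)]

def tv (n s m : ℕ) : ℤ :=
  (-1)^(m+1) * zchoose n ((m:ℤ) + (s:ℤ) - 1) + zchoose n ((s:ℤ) - 1)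

lemma tval (n N s : ℕ) (hN : N = n + 1) :
    ∀ m : ℕ, ∑ j ∈ Finset.range m, (-1:ℤ)^j * (N.choose (j+s) : ℤ) = tv n s m := by
  subst hN
  intro m
  induction m with
  | zero => simp [tv]
  | succ m ih =>
    rw [Finset.sum_range_succ, ih]
    have h1 : ((n+1).choose (m+s) : ℤ)
        = zchoose n ((m:ℤ)+(s:ℤ)) + zchoose n ((m:ℤ)+(s:ℤ)-1) := by
      rw [← zchoose_succ, show (m:ℤ)+(s:ℤ) = ((m+s : ℕ) : ℤ) by push_cast; ring,
        zchoose_natCast]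
    rw [h1, tv, tv]
    rw [show ((m+1 : ℕ):ℤ) + (s:ℤ) - 1 = (m:ℤ)+(s:ℤ) by push_cast; ring]
    ring

lemma pt1 (n N k K : ℕ) (hN : N = n + 1) (hK : K = k + 1) :
    ((k:ℤ)+1) * (N.choose K : ℤ) = ((n:ℤ)+1) * (n.choose k : ℤ) := by
  subst hN; subst hK
  have h := Nat.add_one_mul_choose_eq n k
  have h2 : (((n+1) * n.choose k : ℕ) : ℤ) = (((n+1).choose (k+1) * (k+1) : ℕ) : ℤ) := by
    exact_mod_cast congrArg (Nat.cast : ℕ → ℤ) h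
  push_cast at h2
  linear_combination (-1 : ℤ) * h2

lemma pt2 (n N k K : ℕ) (hN : N = n + 2) (hK : K = k + 2) :
    ((k:ℤ)+2) * ((k:ℤ)+1) * (N.choose K : ℤ)
      = ((n:ℤ)+2) * ((n:ℤ)+1) * (n.choose k : ℤ) := by
  subst hN; subst hK
  have h1 := pt1 (n+1) (n+2) (k+1) (k+2) (by omega) (by omega)
  have h2 := pt1 n (n+1) k (k+1) rfl rfl
  push_cast at h1 h2
  linear_combination ((k:ℤ)+1) * h1 + ((n:ℤ)+2) * h2

lemma sumW1 (n N s m : ℕ) (hN : N = n + 2) :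
    ∑ j ∈ Finset.range m, (-1:ℤ)^j * (j:ℤ) * (N.choose (j+(s+1)) : ℤ)
      = ((n:ℤ)+2) * tv n s m - ((s:ℤ)+1) * tv (n+1) (s+1) m := by
  have key : ∀ j : ℕ, (-1:ℤ)^j * (j:ℤ) * (N.choose (j+(s+1)) : ℤ)
      = ((n:ℤ)+2) * ((-1)^j * ((n+1).choose (j+s) : ℤ))
        - ((s:ℤ)+1) * ((-1)^j * (N.choose (j+(s+1)) : ℤ)) := by
    intro j
    have h := pt1 (n+1) N (j+s) (j+(s+1)) (by omega) (by omega)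
    push_cast at h
    linear_combination (-1:ℤ)^j * h
  rw [Finset.sum_congr rfl (fun j _ => key j), Finset.sum_sub_distrib,
    ← Finset.mul_sum, ← Finset.mul_sum,
    tval n (n+1) s rfl, tval (n+1) N (s+1) (by omega)]

lemma sumW2 (n N s m : ℕ) (hN : N = n + 3) :
    ∑ j ∈ Finset.range m, (-1:ℤ)^j * ((j:ℤ) * ((j:ℤ)-1)) * (N.choose (j+(s+2)) : ℤ)
      = ((n:ℤ)+3) * ((n:ℤ)+2) * tv n s m
        - 2 * ((s:ℤ)+2) * ((n:ℤ)+3) * tv (n+1) (s+1) m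
        + ((s:ℤ)+2) * ((s:ℤ)+3) * tv (n+2) (s+2) m := by
  have key : ∀ j : ℕ, (-1:ℤ)^j * ((j:ℤ) * ((j:ℤ)-1)) * (N.choose (j+(s+2)) : ℤ)
      = ((n:ℤ)+3) * ((n:ℤ)+2) * ((-1)^j * ((n+1).choose (j+s) : ℤ))
        - 2 * ((s:ℤ)+2) * ((n:ℤ)+3) * ((-1)^j * ((n+2).choose (j+(s+1)) : ℤ))
        + ((s:ℤ)+2) * ((s:ℤ)+3) * ((-1)^j * (N.choose (j+(s+2)) : ℤ)) := by
    intro j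
    have h1 := pt1 (n+2) N (j+(s+1)) (j+(s+2)) (by omega) (by omega)
    have h2 := pt2 (n+1) N (j+s) (j+(s+2)) (by omega) (by omega)
    push_cast at h1 h2
    linear_combination (-1:ℤ)^j * h2 - (2*((s:ℤ)+2)) * ((-1:ℤ)^j * h1)
  rw [Finset.sum_congr rfl (fun j _ => key j)]
  rw [Finset.sum_add_distrib, Finset.sum_sub_distrib,
    ← Finset.mul_sum, ← Finset.mul_sum, ← Finset.mul_sum,
    tval n (n+1) s rfl, tval (n+1) (n+2) (s+1) rfl, tval (n+2) N (s+2) (by omega)]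

lemma sumW2' (n N s m : ℕ) (hN : N = n + 3) :
    ∑ j ∈ Finset.range m, (-1:ℤ)^j * (((j:ℤ)+1) * (j:ℤ)) * (N.choose (j+(s+2)) : ℤ)
      = ((n:ℤ)+3) * ((n:ℤ)+2) * tv n s m
        - 2 * ((s:ℤ)+1) * ((n:ℤ)+3) * tv (n+1) (s+1) m
        + ((s:ℤ)+1) * ((s:ℤ)+2) * tv (n+2) (s+2) m := by
  have key : ∀ j : ℕ, (-1:ℤ)^j * (((j:ℤ)+1) * (j:ℤ)) * (N.choose (j+(s+2)) : ℤ)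
      = ((n:ℤ)+3) * ((n:ℤ)+2) * ((-1)^j * ((n+1).choose (j+s) : ℤ))
        - 2 * ((s:ℤ)+1) * ((n:ℤ)+3) * ((-1)^j * ((n+2).choose (j+(s+1)) : ℤ))
        + ((s:ℤ)+1) * ((s:ℤ)+2) * ((-1)^j * (N.choose (j+(s+2)) : ℤ)) := by
    intro j
    have h1 := pt1 (n+2) N (j+(s+1)) (j+(s+2)) (by omega) (by omega)
    have h2 := pt2 (n+1) N (j+s) (j+(s+2)) (by omega) (by omega)
    push_cast at h1 h2
    linear_combination (-1:ℤ)^j * h2 - (2*((s:ℤ)+1)) * ((-1:ℤ)^j * h1)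
  rw [Finset.sum_congr rfl (fun j _ => key j)]
  rw [Finset.sum_add_distrib, Finset.sum_sub_distrib,
    ← Finset.mul_sum, ← Finset.mul_sum, ← Finset.mul_sum,
    tval n (n+1) s rfl, tval (n+1) (n+2) (s+1) rfl, tval (n+2) N (s+2) (by omega)]

def Mof (t : ℕ) : Matrix (Fin t) (Fin t) ℤ :=
  Matrix.of fun i j : Fin t =>
    if (i : ℕ) + 3 < t then
      zchoose 3 (3 + (i : ℤ) - (j : ℤ))
    else if (i : ℕ) + 3 = t then
      zchoose (t + 3) ((t : ℤ) + 3 - ((j : ℤ) + 1))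
    else if (i : ℕ) + 2 = t then
      zchoose (t + 3) ((t : ℤ) + 2 - ((j : ℤ) + 1))
    else
      zchoose (t + 3) ((t : ℤ) + 1 - ((j : ℤ) + 1))

def Cmat (n : ℕ) : Matrix (Fin n) (Fin n) ℤ :=
  Matrix.of fun j k : Fin n => (-1)^((j:ℕ)+(k:ℕ)) * (((j:ℕ).choose (k:ℕ) : ℕ) : ℤ)

lemma Cmat_det (n : ℕ) : (Cmat n).det = 1 := by
  rw [Matrix.det_of_lowerTriangular (Cmat n)
    (by
      intro i j hij
      have h : (j:ℕ) < (i:ℕ) → False := by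
        intro h
        exact absurd hij (by simp [not_lt]; exact le_of_lt (by exact h))
      have hij' : (i:ℕ) < (j:ℕ) := by
        rcases lt_trichotomy ((i:ℕ)) ((j:ℕ)) with h1 | h1 | h1
        · exact h1
        · exfalso; have : i = j := Fin.ext h1; subst this; exact lt_irrefl _ hij
        · exact absurd h1 (fun hh => h hh)
      simp [Cmat, Nat.choose_eq_zero_of_lt hij'])]
  rw [Finset.prod_congr rfl (fun i _ => show (Cmat n) i i = 1 by
    simp [Cmat, Nat.choose_self, Even.neg_one_pow (⟨(i:ℕ), rfl⟩ : Even ((i:ℕ)+(i:ℕ)))])]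
  simp

lemma quadCube (i : ℕ) (k : ℤ) :
    zchoose (i+3) k - 3 * zchoose (i+2) k + 3 * zchoose (i+1) k - zchoose i k
      = zchoose i (k-3) := by
  rw [show i+3 = (i+2)+1 from rfl, show i+2 = (i+1)+1 from rfl]
  simp only [zchoose_succ]
  rw [show k-1-1-1 = k-3 by ring]
  ring

lemma band_entry (d : ℕ) (i k : Fin (d+3)) (hi : (i:ℕ) < d) :
    (Mof (d+3) * Cmat (d+3)) i k
      = (-1:ℤ)^((i:ℕ)+(k:ℕ)+1) * zchoose (i:ℕ) (((k:ℕ):ℤ) - 3) := by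
  rw [Matrix.mul_apply]
  have hterm : ∀ j : Fin (d+3), Mof (d+3) i j * Cmat (d+3) j k
      = (fun jv : ℕ => zchoose 3 (3 + ((i:ℕ):ℤ) - (jv:ℤ))
          * ((-1:ℤ)^(jv+(k:ℕ)) * ((jv.choose (k:ℕ) : ℕ) : ℤ))) ((j:ℕ)) := by
    intro j
    simp only [Mof, Cmat, Matrix.of_apply]
    rw [if_pos (by omega)]
  calc (∑ j : Fin (d+3), Mof (d+3) i j * Cmat (d+3) j k)
      = ∑ j : Fin (d+3), (fun jv : ℕ => zchoose 3 (3 + ((i:ℕ):ℤ) - (jv:ℤ))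
          * ((-1:ℤ)^(jv+(k:ℕ)) * ((jv.choose (k:ℕ) : ℕ) : ℤ))) ((j:ℕ)) :=
        Finset.sum_congr rfl (fun j _ => hterm j)
    _ = ∑ jv ∈ Finset.range (d+3), zchoose 3 (3 + ((i:ℕ):ℤ) - (jv:ℤ))
          * ((-1:ℤ)^(jv+(k:ℕ)) * ((jv.choose (k:ℕ) : ℕ) : ℤ)) :=
        Fin.sum_univ_eq_sum_range
          (fun jv : ℕ => zchoose 3 (3 + ((i:ℕ):ℤ) - (jv:ℤ))
            * ((-1:ℤ)^(jv+(k:ℕ)) * ((jv.choose (k:ℕ) : ℕ) : ℤ))) (d+3)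
    _ = (-1:ℤ)^((i:ℕ)+(k:ℕ)+1) * zchoose (i:ℕ) (((k:ℕ):ℤ) - 3) := by
        rw [Finset.range_eq_Ico,
          ← Finset.sum_Ico_consecutive _ (by omega : 0 ≤ (i:ℕ)+4) (by omega : (i:ℕ)+4 ≤ d+3),
          ← Finset.sum_Ico_consecutive _ (by omega : 0 ≤ (i:ℕ)) (by omega : (i:ℕ) ≤ (i:ℕ)+4)]
        have hz1 : ∑ jv ∈ Finset.Ico 0 (i:ℕ), zchoose 3 (3 + ((i:ℕ):ℤ) - (jv:ℤ))
            * ((-1:ℤ)^(jv+(k:ℕ)) * ((jv.choose (k:ℕ) : ℕ) : ℤ)) = 0 := by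
          apply Finset.sum_eq_zero
          intro jv hjv
          rw [Finset.mem_Ico] at hjv
          rw [zchoose_of_gt (by push_cast; omega)]
          ring
        have hz2 : ∑ jv ∈ Finset.Ico ((i:ℕ)+4) (d+3), zchoose 3 (3 + ((i:ℕ):ℤ) - (jv:ℤ))
            * ((-1:ℤ)^(jv+(k:ℕ)) * ((jv.choose (k:ℕ) : ℕ) : ℤ)) = 0 := by
          apply Finset.sum_eq_zero
          intro jv hjv
          rw [Finset.mem_Ico] at hjv
          rw [zchoose_of_neg (by push_cast; omega)]
          ring
        rw [hz1, hz2, zero_add, add_zero]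
        rw [Finset.sum_Ico_eq_sum_range, show (i:ℕ)+4-(i:ℕ) = 4 from by omega]
        rw [Finset.sum_range_succ, Finset.sum_range_succ, Finset.sum_range_succ,
          Finset.sum_range_succ, Finset.sum_range_zero, zero_add]
        rw [zchoose_eq_cast 3 3 _ (by push_cast; ring),
          zchoose_eq_cast 3 2 _ (by push_cast; ring),
          zchoose_eq_cast 3 1 _ (by push_cast; ring),
          zchoose_eq_cast 3 0 _ (by push_cast; ring)]
        norm_num
        rw [← zchoose_natCast ((i:ℕ)) ((k:ℕ)), ← zchoose_natCast ((i:ℕ)+1) ((k:ℕ)),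
          ← zchoose_natCast ((i:ℕ)+2) ((k:ℕ)), ← zchoose_natCast ((i:ℕ)+3) ((k:ℕ))]
        linear_combination (-(-1:ℤ)^((i:ℕ)+(k:ℕ))) * quadCube (i:ℕ) (((k:ℕ):ℤ))

lemma row_sum (d r : ℕ) (hr : r < 3) (i k : Fin (d+3)) (hi : (i:ℕ) = d + r) :
    (Mof (d+3) * Cmat (d+3)) i k
      = (-1:ℤ)^((k:ℕ)) * ∑ j ∈ Finset.range (d+3),
          (-1:ℤ)^j * (((d+3+3).choose (j+(r+1)) : ℕ) : ℤ) * ((j.choose (k:ℕ) : ℕ) : ℤ) := by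
  rw [Matrix.mul_apply]
  have hterm : ∀ j : Fin (d+3), Mof (d+3) i j * Cmat (d+3) j k
      = (fun jv : ℕ => (((d+3+3).choose (jv+(r+1)) : ℕ) : ℤ)
          * ((-1:ℤ)^(jv+(k:ℕ)) * ((jv.choose (k:ℕ) : ℕ) : ℤ))) ((j:ℕ)) := by
    intro j
    simp only [Mof, Cmat, Matrix.of_apply]
    have hjlt : (j:ℕ) < d + 3 := j.isLt
    interval_cases r
    · rw [if_neg (by omega), if_pos (by omega),
        zchoose_symm (d+3+3) ((j:ℕ)+(0+1)) _ (by push_cast; ring) (by push_cast; omega)]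
    · rw [if_neg (by omega), if_neg (by omega), if_pos (by omega),
        zchoose_symm (d+3+3) ((j:ℕ)+(1+1)) _ (by push_cast; ring) (by push_cast; omega)]
    · rw [if_neg (by omega), if_neg (by omega), if_neg (by omega),
        zchoose_symm (d+3+3) ((j:ℕ)+(2+1)) _ (by push_cast; ring) (by push_cast; omega)]
  calc (∑ j : Fin (d+3), Mof (d+3) i j * Cmat (d+3) j k)
      = ∑ j : Fin (d+3), (fun jv : ℕ => (((d+3+3).choose (jv+(r+1)) : ℕ) : ℤ)
          * ((-1:ℤ)^(jv+(k:ℕ)) * ((jv.choose (k:ℕ) : ℕ) : ℤ))) ((j:ℕ)) :=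
        Finset.sum_congr rfl (fun j _ => hterm j)
    _ = ∑ jv ∈ Finset.range (d+3), (((d+3+3).choose (jv+(r+1)) : ℕ) : ℤ)
          * ((-1:ℤ)^(jv+(k:ℕ)) * ((jv.choose (k:ℕ) : ℕ) : ℤ)) :=
        Fin.sum_univ_eq_sum_range
          (fun jv : ℕ => (((d+3+3).choose (jv+(r+1)) : ℕ) : ℤ)
            * ((-1:ℤ)^(jv+(k:ℕ)) * ((jv.choose (k:ℕ) : ℕ) : ℤ))) (d+3)
    _ = _ := by
        rw [Finset.mul_sum]
        exact Finset.sum_congr rfl (fun jv _ => by ring)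

def eqv (d : ℕ) : Fin d ⊕ Fin 3 ≃ Fin (d+3) := finSumFinEquiv

def rot3 (n : ℕ) : Equiv.Perm (Fin n) := finRotate n * finRotate n * finRotate n

lemma eqv_inl_val (d : ℕ) (a : Fin d) : ((eqv d (Sum.inl a)) : ℕ) = (a:ℕ) := by
  simp [eqv]

lemma eqv_inr_val (d : ℕ) (r : Fin 3) : ((eqv d (Sum.inr r)) : ℕ) = d + (r:ℕ) := by
  simp [eqv]

lemma finRotate_val (d : ℕ) (x : Fin (d+3)) :
    ((finRotate (d+3)) x : ℕ) = ((x:ℕ)+1) % (d+3) := by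
  rw [show (finRotate (d+3)) x = x + 1 from finRotate_succ_apply x]
  rw [Fin.val_add]
  congr 1

lemma rot3_val (d : ℕ) (x : Fin (d+3)) :
    ((rot3 (d+3)) x : ℕ) = ((x:ℕ)+3) % (d+3) := by
  show ((finRotate (d+3)) ((finRotate (d+3)) ((finRotate (d+3)) x)) : ℕ) = _
  rw [finRotate_val, finRotate_val, finRotate_val]
  rw [Nat.mod_add_mod]
  rw [show (((x:ℕ)+1) % (d+3) + 1 + 1) = (((x:ℕ)+1) % (d+3) + 2) from by omega]
  rw [Nat.mod_add_mod]

lemma rot_eqv_inl_val (d : ℕ) (b : Fin d) :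
    ((rot3 (d+3)) (eqv d (Sum.inl b)) : ℕ) = (b:ℕ)+3 := by
  rw [rot3_val, eqv_inl_val]
  exact Nat.mod_eq_of_lt (by omega)

lemma rot_eqv_inr_val (d : ℕ) (l : Fin 3) :
    ((rot3 (d+3)) (eqv d (Sum.inr l)) : ℕ) = (l:ℕ) := by
  rw [rot3_val, eqv_inr_val]
  rw [show d + (l:ℕ) + 3 = (d+3) + (l:ℕ) by omega, Nat.add_mod_left]
  exact Nat.mod_eq_of_lt (by omega)

lemma rot3_sign (d : ℕ) :
    ((Equiv.Perm.sign (rot3 (d+3)) : ℤˣ) : ℤ) = (-1:ℤ)^d := by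
  have hs : Equiv.Perm.sign (finRotate (d+3)) = (-1)^(d+2) := sign_finRotate (d+3)
  rw [rot3, map_mul, map_mul, hs]
  push_cast
  rw [← pow_add, ← pow_add, show d+2+(d+2)+(d+2) = d + 2*(d+3) by omega,
    pow_add, pow_mul]
  norm_num

def Lmat (d : ℕ) : Matrix (Fin d) (Fin d) ℤ :=
  Matrix.of fun a b : Fin d => (-1)^((a:ℕ)+(b:ℕ)) * (((a:ℕ).choose (b:ℕ) : ℕ) : ℤ)

def Dmat (d : ℕ) : Matrix (Fin 3) (Fin d) ℤ :=
  Matrix.of fun (r : Fin 3) (b : Fin d) =>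
    (Mof (d+3) * Cmat (d+3)) (eqv d (Sum.inr r)) ((rot3 (d+3)) (eqv d (Sum.inl b)))

def Bmat (d : ℕ) : Matrix (Fin 3) (Fin 3) ℤ :=
  Matrix.of fun (r l : Fin 3) =>
    (Mof (d+3) * Cmat (d+3)) (eqv d (Sum.inr r)) ((rot3 (d+3)) (eqv d (Sum.inr l)))

lemma Lmat_det (d : ℕ) : (Lmat d).det = 1 := by
  rw [Matrix.det_of_lowerTriangular (Lmat d)
    (by
      intro i j hij
      have hij' : (i:ℕ) < (j:ℕ) := hij
      simp [Lmat, Nat.choose_eq_zero_of_lt hij'])]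
  rw [Finset.prod_congr rfl (fun i _ => show (Lmat d) i i = 1 by
    simp [Lmat, Nat.choose_self, Even.neg_one_pow (⟨(i:ℕ), rfl⟩ : Even ((i:ℕ)+(i:ℕ)))])]
  simp

lemma block_decomp (d : ℕ) :
    (Mof (d+3) * Cmat (d+3)).submatrix (eqv d) ((rot3 (d+3)) ∘ (eqv d))
      = Matrix.fromBlocks (Lmat d) 0 (Dmat d) (Bmat d) := by
  ext p q
  cases p with
  | inl a =>
    cases q with
    | inl b =>
      have h := band_entry d (eqv d (Sum.inl a)) ((rot3 (d+3)) (eqv d (Sum.inl b)))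
        (by rw [eqv_inl_val]; omega)
      simp only [Matrix.submatrix_apply, Function.comp_apply,
        Matrix.fromBlocks_apply₁₁]
      rw [h, eqv_inl_val, rot_eqv_inl_val]
      simp only [Lmat, Matrix.of_apply]
      rw [show (((((b:ℕ)+3) : ℕ) : ℤ) - 3) = (((b:ℕ) : ℕ) : ℤ) by push_cast; ring,
        zchoose_natCast]
      ring
    | inr l =>
      have h := band_entry d (eqv d (Sum.inl a)) ((rot3 (d+3)) (eqv d (Sum.inr l)))
        (by rw [eqv_inl_val]; omega)
      simp only [Matrix.submatrix_apply, Function.comp_apply,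
        Matrix.fromBlocks_apply₁₂]
      rw [h, rot_eqv_inr_val]
      have hl : (l:ℕ) < 3 := l.isLt
      rw [zchoose_of_neg (by omega : (((l:ℕ) : ℕ) : ℤ) - 3 < 0)]
      simp
  | inr r =>
    cases q with
    | inl b =>
      simp only [Matrix.submatrix_apply, Function.comp_apply,
        Matrix.fromBlocks_apply₂₁, Dmat, Matrix.of_apply]
    | inr l =>
      simp only [Matrix.submatrix_apply, Function.comp_apply,
        Matrix.fromBlocks_apply₂₂, Bmat, Matrix.of_apply]

lemma detM_eq (d : ℕ) : (Mof (d+3)).det = (-1:ℤ)^d * (Bmat d).det := by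
  have h1 : ((Mof (d+3) * Cmat (d+3)).submatrix (eqv d) ((rot3 (d+3)) ∘ (eqv d))).det
      = (Bmat d).det := by
    rw [block_decomp, Matrix.det_fromBlocks_zero₁₂, Lmat_det, one_mul]
  have h2 : ((Mof (d+3) * Cmat (d+3)).submatrix (eqv d) ((rot3 (d+3)) ∘ (eqv d))).det
      = (-1:ℤ)^d * (Mof (d+3)).det := by
    have h3 : (Mof (d+3) * Cmat (d+3)).submatrix (eqv d) ((rot3 (d+3)) ∘ (eqv d))
        = ((Mof (d+3) * Cmat (d+3)).submatrix id (rot3 (d+3))).submatrix (eqv d) (eqv d) := by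
      rw [Matrix.submatrix_submatrix]
      rfl
    rw [h3, Matrix.det_submatrix_equiv_self, Matrix.det_permute', Matrix.det_mul,
      Cmat_det, mul_one]
    rw [rot3_sign d]
    push_cast [Units.val_pow_eq_pow_val]
    ring
  have h4 : (-1:ℤ)^d * (Mof (d+3)).det = (Bmat d).det := h2.symm.trans h1
  rw [← h4, ← mul_assoc, ← mul_pow]
  norm_num

lemma ent00 (d : ℕ) :
    ∑ j ∈ Finset.range (d+3), (-1:ℤ)^j * (((d+3+3).choose (j+(0+1)) : ℕ) : ℤ)
        * ((j.choose 0 : ℕ) : ℤ)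
      = (-1:ℤ)^d * (((d+5).choose 2 : ℕ) : ℤ) + 1 := by
  have h := tval (d+5) (d+3+3) (0+1) (by omega) (d+3)
  rw [Finset.sum_congr rfl (fun j _ =>
    show (-1:ℤ)^j * (((d+3+3).choose (j+(0+1)) : ℕ) : ℤ) * ((j.choose 0 : ℕ) : ℤ)
      = (-1:ℤ)^j * (((d+3+3).choose (j+(0+1)) : ℕ) : ℤ) from
        by simp), h]
  unfold tv
  rw [zchoose_symm (d+5) 2 (((d+3 : ℕ) : ℤ) + ((0+1 : ℕ) : ℤ) - 1)
      (by push_cast; try omega) (by push_cast; try omega),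
    zchoose_eq_cast (d+5) 0 (((0+1 : ℕ) : ℤ) - 1) (by push_cast; try omega)]
  push_cast [Nat.choose_zero_right]
  ring

lemma ent10 (d : ℕ) :
    ∑ j ∈ Finset.range (d+3), (-1:ℤ)^j * (((d+3+3).choose (j+(1+1)) : ℕ) : ℤ)
        * ((j.choose 0 : ℕ) : ℤ)
      = (-1:ℤ)^d * ((d:ℤ)+5) + ((d:ℤ)+5) := by
  have h := tval (d+5) (d+3+3) (1+1) (by omega) (d+3)
  rw [Finset.sum_congr rfl (fun j _ =>
    show (-1:ℤ)^j * (((d+3+3).choose (j+(1+1)) : ℕ) : ℤ) * ((j.choose 0 : ℕ) : ℤ)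
      = (-1:ℤ)^j * (((d+3+3).choose (j+(1+1)) : ℕ) : ℤ) from
        by simp), h]
  unfold tv
  rw [zchoose_symm (d+5) 1 (((d+3 : ℕ) : ℤ) + ((1+1 : ℕ) : ℤ) - 1)
      (by push_cast; try omega) (by push_cast; try omega),
    zchoose_eq_cast (d+5) 1 (((1+1 : ℕ) : ℤ) - 1) (by push_cast; try omega)]
  push_cast [Nat.choose_one_right]
  ring

lemma ent20 (d : ℕ) :
    ∑ j ∈ Finset.range (d+3), (-1:ℤ)^j * (((d+3+3).choose (j+(2+1)) : ℕ) : ℤ)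
        * ((j.choose 0 : ℕ) : ℤ)
      = (-1:ℤ)^d + (((d+5).choose 2 : ℕ) : ℤ) := by
  have h := tval (d+5) (d+3+3) (2+1) (by omega) (d+3)
  rw [Finset.sum_congr rfl (fun j _ =>
    show (-1:ℤ)^j * (((d+3+3).choose (j+(2+1)) : ℕ) : ℤ) * ((j.choose 0 : ℕ) : ℤ)
      = (-1:ℤ)^j * (((d+3+3).choose (j+(2+1)) : ℕ) : ℤ) from
        by simp), h]
  unfold tv
  rw [zchoose_symm (d+5) 0 (((d+3 : ℕ) : ℤ) + ((2+1 : ℕ) : ℤ) - 1)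
      (by push_cast; try omega) (by push_cast; try omega),
    zchoose_eq_cast (d+5) 2 (((2+1 : ℕ) : ℤ) - 1) (by push_cast; try omega)]
  push_cast [Nat.choose_zero_right]
  ring

lemma ent01 (d : ℕ) :
    ∑ j ∈ Finset.range (d+3), (-1:ℤ)^j * (((d+3+3).choose (j+(0+1)) : ℕ) : ℤ)
        * ((j.choose 1 : ℕ) : ℤ)
      = ((d:ℤ)+6) * ((-1:ℤ)^d * (((d+4).choose 2 : ℕ) : ℤ))
        - ((-1:ℤ)^d * (((d+5).choose 2 : ℕ) : ℤ) + 1) := by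
  have h := sumW1 (d+4) (d+3+3) 0 (d+3) (by omega)
  rw [Finset.sum_congr rfl (fun j _ =>
    show (-1:ℤ)^j * (((d+3+3).choose (j+(0+1)) : ℕ) : ℤ) * ((j.choose 1 : ℕ) : ℤ)
      = (-1:ℤ)^j * (j:ℤ) * (((d+3+3).choose (j+(0+1)) : ℕ) : ℤ) from by
        rw [Nat.choose_one_right]; ring), h]
  rw [show d+4+1 = d+5 from by omega]
  unfold tv
  rw [zchoose_symm (d+4) 2 (((d+3 : ℕ) : ℤ) + ((0 : ℕ) : ℤ) - 1)
      (by push_cast; try omega) (by push_cast; try omega),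
    zchoose_symm (d+5) 2 (((d+3 : ℕ) : ℤ) + ((0+1 : ℕ) : ℤ) - 1)
      (by push_cast; try omega) (by push_cast; try omega),
    zchoose_eq_cast (d+5) 0 (((0+1 : ℕ) : ℤ) - 1) (by push_cast; try omega),
    zchoose_of_neg (show ((0 : ℕ) : ℤ) - 1 < 0 from by norm_num)]
  push_cast [Nat.choose_zero_right]
  ring

lemma ent11 (d : ℕ) :
    ∑ j ∈ Finset.range (d+3), (-1:ℤ)^j * (((d+3+3).choose (j+(1+1)) : ℕ) : ℤ)
        * ((j.choose 1 : ℕ) : ℤ)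
      = ((d:ℤ)+6) * ((-1:ℤ)^d * ((d:ℤ)+4) + 1)
        - 2 * ((-1:ℤ)^d * ((d:ℤ)+5) + ((d:ℤ)+5)) := by
  have h := sumW1 (d+4) (d+3+3) 1 (d+3) (by omega)
  rw [Finset.sum_congr rfl (fun j _ =>
    show (-1:ℤ)^j * (((d+3+3).choose (j+(1+1)) : ℕ) : ℤ) * ((j.choose 1 : ℕ) : ℤ)
      = (-1:ℤ)^j * (j:ℤ) * (((d+3+3).choose (j+(1+1)) : ℕ) : ℤ) from by
        rw [Nat.choose_one_right]; ring), h]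
  rw [show d+4+1 = d+5 from by omega]
  unfold tv
  rw [zchoose_symm (d+4) 1 (((d+3 : ℕ) : ℤ) + ((1 : ℕ) : ℤ) - 1)
      (by push_cast; try omega) (by push_cast; try omega),
    zchoose_symm (d+5) 1 (((d+3 : ℕ) : ℤ) + ((1+1 : ℕ) : ℤ) - 1)
      (by push_cast; try omega) (by push_cast; try omega),
    zchoose_eq_cast (d+5) 1 (((1+1 : ℕ) : ℤ) - 1) (by push_cast; try omega),
    zchoose_eq_cast (d+4) 0 (((1 : ℕ) : ℤ) - 1) (by push_cast; try omega)]
  push_cast [Nat.choose_zero_right, Nat.choose_one_right]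
  ring

lemma ent21 (d : ℕ) :
    ∑ j ∈ Finset.range (d+3), (-1:ℤ)^j * (((d+3+3).choose (j+(2+1)) : ℕ) : ℤ)
        * ((j.choose 1 : ℕ) : ℤ)
      = ((d:ℤ)+6) * ((-1:ℤ)^d + ((d:ℤ)+4))
        - 3 * ((-1:ℤ)^d + (((d+5).choose 2 : ℕ) : ℤ)) := by
  have h := sumW1 (d+4) (d+3+3) 2 (d+3) (by omega)
  rw [Finset.sum_congr rfl (fun j _ =>
    show (-1:ℤ)^j * (((d+3+3).choose (j+(2+1)) : ℕ) : ℤ) * ((j.choose 1 : ℕ) : ℤ)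
      = (-1:ℤ)^j * (j:ℤ) * (((d+3+3).choose (j+(2+1)) : ℕ) : ℤ) from by
        rw [Nat.choose_one_right]; ring), h]
  rw [show d+4+1 = d+5 from by omega]
  unfold tv
  rw [zchoose_symm (d+4) 0 (((d+3 : ℕ) : ℤ) + ((2 : ℕ) : ℤ) - 1)
      (by push_cast; try omega) (by push_cast; try omega),
    zchoose_symm (d+5) 0 (((d+3 : ℕ) : ℤ) + ((2+1 : ℕ) : ℤ) - 1)
      (by push_cast; try omega) (by push_cast; try omega),
    zchoose_eq_cast (d+5) 2 (((2+1 : ℕ) : ℤ) - 1) (by push_cast; try omega),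
    zchoose_eq_cast (d+4) 1 (((2 : ℕ) : ℤ) - 1) (by push_cast; try omega)]
  push_cast [Nat.choose_zero_right, Nat.choose_one_right]
  ring

lemma ent12 (d : ℕ) :
    2 * ∑ j ∈ Finset.range (d+3), (-1:ℤ)^j * (((d+3+3).choose (j+(1+1)) : ℕ) : ℤ)
        * ((j.choose 2 : ℕ) : ℤ)
      = ((d:ℤ)+6) * ((d:ℤ)+5) * ((-1:ℤ)^d * ((d:ℤ)+3))
        - 4 * ((d:ℤ)+6) * ((-1:ℤ)^d * ((d:ℤ)+4) + 1)
        + 6 * ((-1:ℤ)^d * ((d:ℤ)+5) + ((d:ℤ)+5)) := by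
  have h := sumW2 (d+3) (d+3+3) 0 (d+3) (by omega)
  rw [Finset.mul_sum, Finset.sum_congr rfl (fun j _ =>
    show 2 * ((-1:ℤ)^j * (((d+3+3).choose (j+(1+1)) : ℕ) : ℤ) * ((j.choose 2 : ℕ) : ℤ))
      = (-1:ℤ)^j * ((j:ℤ) * ((j:ℤ)-1)) * (((d+3+3).choose (j+(0+2)) : ℕ) : ℤ) from by
        rw [show j+(0+2) = j+(1+1) from by omega]
        linear_combination ((-1:ℤ)^j * (((d+3+3).choose (j+(1+1)) : ℕ) : ℤ))
          * two_mul_choose_two j), h]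
  rw [show d+3+1 = d+4 from by omega, show d+3+2 = d+5 from by omega]
  unfold tv
  rw [zchoose_symm (d+3) 1 (((d+3 : ℕ) : ℤ) + ((0 : ℕ) : ℤ) - 1)
      (by push_cast; try omega) (by push_cast; try omega),
    zchoose_symm (d+4) 1 (((d+3 : ℕ) : ℤ) + ((0+1 : ℕ) : ℤ) - 1)
      (by push_cast; try omega) (by push_cast; try omega),
    zchoose_symm (d+5) 1 (((d+3 : ℕ) : ℤ) + ((0+2 : ℕ) : ℤ) - 1)
      (by push_cast; try omega) (by push_cast; try omega),
    zchoose_eq_cast (d+4) 0 (((0+1 : ℕ) : ℤ) - 1) (by push_cast; try omega),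
    zchoose_eq_cast (d+5) 1 (((0+2 : ℕ) : ℤ) - 1) (by push_cast; try omega),
    zchoose_of_neg (show ((0 : ℕ) : ℤ) - 1 < 0 from by norm_num)]
  push_cast [Nat.choose_zero_right, Nat.choose_one_right]
  ring

lemma ent22 (d : ℕ) :
    2 * ∑ j ∈ Finset.range (d+3), (-1:ℤ)^j * (((d+3+3).choose (j+(2+1)) : ℕ) : ℤ)
        * ((j.choose 2 : ℕ) : ℤ)
      = ((d:ℤ)+6) * ((d:ℤ)+5) * ((-1:ℤ)^d + 1)
        - 6 * ((d:ℤ)+6) * ((-1:ℤ)^d + ((d:ℤ)+4))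
        + 12 * ((-1:ℤ)^d + (((d+5).choose 2 : ℕ) : ℤ)) := by
  have h := sumW2 (d+3) (d+3+3) 1 (d+3) (by omega)
  rw [Finset.mul_sum, Finset.sum_congr rfl (fun j _ =>
    show 2 * ((-1:ℤ)^j * (((d+3+3).choose (j+(2+1)) : ℕ) : ℤ) * ((j.choose 2 : ℕ) : ℤ))
      = (-1:ℤ)^j * ((j:ℤ) * ((j:ℤ)-1)) * (((d+3+3).choose (j+(1+2)) : ℕ) : ℤ) from by
        rw [show j+(1+2) = j+(2+1) from by omega]
        linear_combination ((-1:ℤ)^j * (((d+3+3).choose (j+(2+1)) : ℕ) : ℤ))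
          * two_mul_choose_two j), h]
  rw [show d+3+1 = d+4 from by omega, show d+3+2 = d+5 from by omega]
  unfold tv
  rw [zchoose_symm (d+3) 0 (((d+3 : ℕ) : ℤ) + ((1 : ℕ) : ℤ) - 1)
      (by push_cast; try omega) (by push_cast; try omega),
    zchoose_symm (d+4) 0 (((d+3 : ℕ) : ℤ) + ((1+1 : ℕ) : ℤ) - 1)
      (by push_cast; try omega) (by push_cast; try omega),
    zchoose_symm (d+5) 0 (((d+3 : ℕ) : ℤ) + ((1+2 : ℕ) : ℤ) - 1)
      (by push_cast; try omega) (by push_cast; try omega),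
    zchoose_eq_cast (d+3) 0 (((1 : ℕ) : ℤ) - 1) (by push_cast; try omega),
    zchoose_eq_cast (d+4) 1 (((1+1 : ℕ) : ℤ) - 1) (by push_cast; try omega),
    zchoose_eq_cast (d+5) 2 (((1+2 : ℕ) : ℤ) - 1) (by push_cast; try omega)]
  push_cast [Nat.choose_zero_right, Nat.choose_one_right]
  ring

lemma ent02 (d : ℕ) :
    2 * ∑ j ∈ Finset.range (d+3), (-1:ℤ)^j * (((d+3+3).choose (j+(0+1)) : ℕ) : ℤ)
        * ((j.choose 2 : ℕ) : ℤ)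
      = -(((d:ℤ)+6) * ((d:ℤ)+5) * (-(-1:ℤ)^d * (((d+3).choose 2 : ℕ) : ℤ))
          - 2 * ((d:ℤ)+6) * (-(-1:ℤ)^d * (((d+4).choose 2 : ℕ) : ℤ) + 1)
          + 2 * (-(-1:ℤ)^d * (((d+5).choose 2 : ℕ) : ℤ) + ((d:ℤ)+5))) := by
  have h := sumW2' (d+3) (d+3+3) 0 (d+2) (by omega)
  have hstep : 2 * ∑ j ∈ Finset.range (d+3), (-1:ℤ)^j
        * (((d+3+3).choose (j+(0+1)) : ℕ) : ℤ) * ((j.choose 2 : ℕ) : ℤ)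
      = -∑ j ∈ Finset.range (d+2), (-1:ℤ)^j * (((j:ℤ)+1) * (j:ℤ))
          * (((d+3+3).choose (j+(0+2)) : ℕ) : ℤ) := by
    rw [Finset.mul_sum]
    have hr : ∑ j ∈ Finset.range (d+3), 2 * ((-1:ℤ)^j
          * (((d+3+3).choose (j+(0+1)) : ℕ) : ℤ) * ((j.choose 2 : ℕ) : ℤ))
        = ∑ j ∈ Finset.range (d+2+1), 2 * ((-1:ℤ)^j
          * (((d+3+3).choose (j+(0+1)) : ℕ) : ℤ) * ((j.choose 2 : ℕ) : ℤ)) := rfl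
    rw [hr, Finset.sum_range_succ' (fun j => 2 * ((-1:ℤ)^j
        * (((d+3+3).choose (j+(0+1)) : ℕ) : ℤ) * ((j.choose 2 : ℕ) : ℤ))) (d+2)]
    norm_num
    rw [Finset.sum_congr rfl (fun j _ =>
      show 2 * ((-1:ℤ)^(j+1) * (((d+3+3).choose (j+1+(0+1)) : ℕ) : ℤ)
            * (((j+1).choose 2 : ℕ) : ℤ))
        = -((-1:ℤ)^j * (((j:ℤ)+1) * (j:ℤ)) * (((d+3+3).choose (j+(0+2)) : ℕ) : ℤ)) from by
          rw [show j+(0+2) = j+1+(0+1) from by omega]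
          have h2 := two_mul_choose_two (j+1)
          push_cast at h2 ⊢
          linear_combination (-((-1:ℤ)^j * (((d+3+3).choose (j+1+1) : ℕ) : ℤ))) * h2)]
    rw [Finset.sum_neg_distrib]
  rw [hstep, h]
  rw [show d+3+1 = d+4 from by omega, show d+3+2 = d+5 from by omega]
  unfold tv
  rw [zchoose_symm (d+3) 2 (((d+2 : ℕ) : ℤ) + ((0 : ℕ) : ℤ) - 1)
      (by push_cast; try omega) (by push_cast; try omega),
    zchoose_symm (d+4) 2 (((d+2 : ℕ) : ℤ) + ((0+1 : ℕ) : ℤ) - 1)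
      (by push_cast; try omega) (by push_cast; try omega),
    zchoose_symm (d+5) 2 (((d+2 : ℕ) : ℤ) + ((0+2 : ℕ) : ℤ) - 1)
      (by push_cast; try omega) (by push_cast; try omega),
    zchoose_eq_cast (d+4) 0 (((0+1 : ℕ) : ℤ) - 1) (by push_cast; try omega),
    zchoose_eq_cast (d+5) 1 (((0+2 : ℕ) : ℤ) - 1) (by push_cast; try omega),
    zchoose_of_neg (show ((0 : ℕ) : ℤ) - 1 < 0 from by norm_num)]
  push_cast [Nat.choose_zero_right, Nat.choose_one_right]
  ring

lemma bval00 (d : ℕ) : Bmat d 0 0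
    = (-1:ℤ)^d * (((d+5).choose 2 : ℕ) : ℤ) + 1 := by
  show (Mof (d+3) * Cmat (d+3)) (eqv d (Sum.inr 0)) ((rot3 (d+3)) (eqv d (Sum.inr 0))) = _
  rw [row_sum d 0 (by norm_num) _ _ (by rw [eqv_inr_val]; norm_num), rot_eqv_inr_val,
    Fin.val_zero, pow_zero, one_mul]
  exact ent00 d

lemma bval10 (d : ℕ) : Bmat d 1 0
    = (-1:ℤ)^d * ((d:ℤ)+5) + ((d:ℤ)+5) := by
  show (Mof (d+3) * Cmat (d+3)) (eqv d (Sum.inr 1)) ((rot3 (d+3)) (eqv d (Sum.inr 0))) = _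
  rw [row_sum d 1 (by norm_num) _ _ (by rw [eqv_inr_val]; norm_num), rot_eqv_inr_val,
    Fin.val_zero, pow_zero, one_mul]
  exact ent10 d

lemma bval20 (d : ℕ) : Bmat d 2 0
    = (-1:ℤ)^d + (((d+5).choose 2 : ℕ) : ℤ) := by
  show (Mof (d+3) * Cmat (d+3)) (eqv d (Sum.inr 2)) ((rot3 (d+3)) (eqv d (Sum.inr 0))) = _
  rw [row_sum d 2 (by norm_num) _ _ (by rw [eqv_inr_val]; norm_num), rot_eqv_inr_val,
    Fin.val_zero, pow_zero, one_mul]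
  exact ent20 d

lemma bval01 (d : ℕ) : Bmat d 0 1
    = -(((d:ℤ)+6) * ((-1:ℤ)^d * (((d+4).choose 2 : ℕ) : ℤ))
        - ((-1:ℤ)^d * (((d+5).choose 2 : ℕ) : ℤ) + 1)) := by
  show (Mof (d+3) * Cmat (d+3)) (eqv d (Sum.inr 0)) ((rot3 (d+3)) (eqv d (Sum.inr 1))) = _
  rw [row_sum d 0 (by norm_num) _ _ (by rw [eqv_inr_val]; norm_num), rot_eqv_inr_val,
    Fin.val_one, pow_one, ent01 d]
  ring

lemma bval11 (d : ℕ) : Bmat d 1 1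
    = -(((d:ℤ)+6) * ((-1:ℤ)^d * ((d:ℤ)+4) + 1)
        - 2 * ((-1:ℤ)^d * ((d:ℤ)+5) + ((d:ℤ)+5))) := by
  show (Mof (d+3) * Cmat (d+3)) (eqv d (Sum.inr 1)) ((rot3 (d+3)) (eqv d (Sum.inr 1))) = _
  rw [row_sum d 1 (by norm_num) _ _ (by rw [eqv_inr_val]; norm_num), rot_eqv_inr_val,
    Fin.val_one, pow_one, ent11 d]
  ring

lemma bval21 (d : ℕ) : Bmat d 2 1
    = -(((d:ℤ)+6) * ((-1:ℤ)^d + ((d:ℤ)+4))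
        - 3 * ((-1:ℤ)^d + (((d+5).choose 2 : ℕ) : ℤ))) := by
  show (Mof (d+3) * Cmat (d+3)) (eqv d (Sum.inr 2)) ((rot3 (d+3)) (eqv d (Sum.inr 1))) = _
  rw [row_sum d 2 (by norm_num) _ _ (by rw [eqv_inr_val]; norm_num), rot_eqv_inr_val,
    Fin.val_one, pow_one, ent21 d]
  ring

lemma bval02 (d : ℕ) : 2 * Bmat d 0 2
    = -(((d:ℤ)+6) * ((d:ℤ)+5) * (-(-1:ℤ)^d * (((d+3).choose 2 : ℕ) : ℤ))
        - 2 * ((d:ℤ)+6) * (-(-1:ℤ)^d * (((d+4).choose 2 : ℕ) : ℤ) + 1)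
        + 2 * (-(-1:ℤ)^d * (((d+5).choose 2 : ℕ) : ℤ) + ((d:ℤ)+5))) := by
  have hb : Bmat d 0 2 = (-1:ℤ)^((2:Fin 3):ℕ) * ∑ j ∈ Finset.range (d+3),
      (-1:ℤ)^j * (((d+3+3).choose (j+(0+1)) : ℕ) : ℤ) * ((j.choose ((2:Fin 3):ℕ) : ℕ) : ℤ) := by
    show (Mof (d+3) * Cmat (d+3)) (eqv d (Sum.inr 0)) ((rot3 (d+3)) (eqv d (Sum.inr 2))) = _
    rw [row_sum d 0 (by norm_num) _ _ (by rw [eqv_inr_val]; norm_num), rot_eqv_inr_val]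
  rw [hb]
  have h2 : ((2:Fin 3):ℕ) = 2 := rfl
  rw [h2, pow_two]
  have := ent02 d
  linear_combination this

lemma bval12 (d : ℕ) : 2 * Bmat d 1 2
    = ((d:ℤ)+6) * ((d:ℤ)+5) * ((-1:ℤ)^d * ((d:ℤ)+3))
        - 4 * ((d:ℤ)+6) * ((-1:ℤ)^d * ((d:ℤ)+4) + 1)
        + 6 * ((-1:ℤ)^d * ((d:ℤ)+5) + ((d:ℤ)+5)) := by
  have hb : Bmat d 1 2 = (-1:ℤ)^((2:Fin 3):ℕ) * ∑ j ∈ Finset.range (d+3),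
      (-1:ℤ)^j * (((d+3+3).choose (j+(1+1)) : ℕ) : ℤ) * ((j.choose ((2:Fin 3):ℕ) : ℕ) : ℤ) := by
    show (Mof (d+3) * Cmat (d+3)) (eqv d (Sum.inr 1)) ((rot3 (d+3)) (eqv d (Sum.inr 2))) = _
    rw [row_sum d 1 (by norm_num) _ _ (by rw [eqv_inr_val]; norm_num), rot_eqv_inr_val]
  rw [hb]
  have h2 : ((2:Fin 3):ℕ) = 2 := rfl
  rw [h2, pow_two]
  have := ent12 d
  linear_combination this

lemma bval22 (d : ℕ) : 2 * Bmat d 2 2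
    = ((d:ℤ)+6) * ((d:ℤ)+5) * ((-1:ℤ)^d + 1)
        - 6 * ((d:ℤ)+6) * ((-1:ℤ)^d + ((d:ℤ)+4))
        + 12 * ((-1:ℤ)^d + (((d+5).choose 2 : ℕ) : ℤ)) := by
  have hb : Bmat d 2 2 = (-1:ℤ)^((2:Fin 3):ℕ) * ∑ j ∈ Finset.range (d+3),
      (-1:ℤ)^j * (((d+3+3).choose (j+(2+1)) : ℕ) : ℤ) * ((j.choose ((2:Fin 3):ℕ) : ℕ) : ℤ) := by
    show (Mof (d+3) * Cmat (d+3)) (eqv d (Sum.inr 2)) ((rot3 (d+3)) (eqv d (Sum.inr 2))) = _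
    rw [row_sum d 2 (by norm_num) _ _ (by rw [eqv_inr_val]; norm_num), rot_eqv_inr_val]
  rw [hb]
  have h2 : ((2:Fin 3):ℕ) = 2 := rfl
  rw [h2, pow_two]
  have := ent22 d
  linear_combination this

theorem aux_det (d : ℕ) : 4 * (Mof (d+3)).det
    = if Even (d+3) then 0
      else -(((d+3 : ℕ) : ℤ) - 1) ^ 2 * (((d+3 : ℕ) : ℤ) + 1) * (((d+3 : ℕ) : ℤ) + 2)
        * (((d+3 : ℕ) : ℤ) + 4) ^ 2 := by
  rw [detM_eq d, Matrix.det_fin_three,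
    bval00 d, bval10 d, bval20 d, bval01 d, bval11 d, bval21 d]
  rcases Nat.even_or_odd d with he | ho
  · obtain ⟨u, hu⟩ := he; subst hu
    have hε : (-1:ℤ)^(u+u) = 1 := Even.neg_one_pow ⟨u, rfl⟩
    have c3 : (((u+u+3).choose 2 : ℕ) : ℤ) = (2*(u:ℤ)+3)*((u:ℤ)+1) := by
      have h := two_mul_choose_two (u+u+3)
      have h2 : ((u+u+3 : ℕ) : ℤ) * (((u+u+3 : ℕ) : ℤ) - 1)
          = 2 * ((2*(u:ℤ)+3)*((u:ℤ)+1)) := by push_cast; ring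
      linarith
    have c4 : (((u+u+4).choose 2 : ℕ) : ℤ) = ((u:ℤ)+2)*(2*(u:ℤ)+3) := by
      have h := two_mul_choose_two (u+u+4)
      have h2 : ((u+u+4 : ℕ) : ℤ) * (((u+u+4 : ℕ) : ℤ) - 1)
          = 2 * (((u:ℤ)+2)*(2*(u:ℤ)+3)) := by push_cast; ring
      linarith
    have c5 : (((u+u+5).choose 2 : ℕ) : ℤ) = (2*(u:ℤ)+5)*((u:ℤ)+2) := by
      have h := two_mul_choose_two (u+u+5)
      have h2 : ((u+u+5 : ℕ) : ℤ) * (((u+u+5 : ℕ) : ℤ) - 1)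
          = 2 * ((2*(u:ℤ)+5)*((u:ℤ)+2)) := by push_cast; ring
      linarith
    have h02 := bval02 (u+u)
    have h12 := bval12 (u+u)
    have h22 := bval22 (u+u)
    rw [hε, c3, c4, c5] at h02
    rw [hε] at h12
    rw [hε, c5] at h22
    have e02 : Bmat (u+u) 0 2
        = 4*(u:ℤ)^4+28*(u:ℤ)^3+67*(u:ℤ)^2+63*(u:ℤ)+20 := by
      have h3 : 2 * Bmat (u+u) 0 2
          = 2 * (4*(u:ℤ)^4+28*(u:ℤ)^3+67*(u:ℤ)^2+63*(u:ℤ)+20) := by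
        rw [h02]; push_cast; ring
      linarith
    have e12 : Bmat (u+u) 1 2 = 4*(u:ℤ)^3+20*(u:ℤ)^2+31*(u:ℤ)+15 := by
      have h3 : 2 * Bmat (u+u) 1 2
          = 2 * (4*(u:ℤ)^3+20*(u:ℤ)^2+31*(u:ℤ)+15) := by
        rw [h12]; push_cast; ring
      linarith
    have e22 : Bmat (u+u) 2 2 = 4*(u:ℤ)^2+10*(u:ℤ)+6 := by
      have h3 : 2 * Bmat (u+u) 2 2 = 2 * (4*(u:ℤ)^2+10*(u:ℤ)+6) := by
        rw [h22]; push_cast; ring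
      linarith
    rw [if_neg (by rintro ⟨c, hc⟩; omega)]
    rw [hε, c4, c5, e02, e12, e22]
    push_cast
    ring
  · obtain ⟨u, hu⟩ := ho; subst hu
    have hε : (-1:ℤ)^(2*u+1) = -1 := Odd.neg_one_pow ⟨u, rfl⟩
    have c3 : (((2*u+1+3).choose 2 : ℕ) : ℤ) = ((u:ℤ)+2)*(2*(u:ℤ)+3) := by
      have h := two_mul_choose_two (2*u+1+3)
      have h2 : ((2*u+1+3 : ℕ) : ℤ) * (((2*u+1+3 : ℕ) : ℤ) - 1)
          = 2 * (((u:ℤ)+2)*(2*(u:ℤ)+3)) := by push_cast; ring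
      linarith
    have c4 : (((2*u+1+4).choose 2 : ℕ) : ℤ) = (2*(u:ℤ)+5)*((u:ℤ)+2) := by
      have h := two_mul_choose_two (2*u+1+4)
      have h2 : ((2*u+1+4 : ℕ) : ℤ) * (((2*u+1+4 : ℕ) : ℤ) - 1)
          = 2 * ((2*(u:ℤ)+5)*((u:ℤ)+2)) := by push_cast; ring
      linarith
    have c5 : (((2*u+1+5).choose 2 : ℕ) : ℤ) = ((u:ℤ)+3)*(2*(u:ℤ)+5) := by
      have h := two_mul_choose_two (2*u+1+5)
      have h2 : ((2*u+1+5 : ℕ) : ℤ) * (((2*u+1+5 : ℕ) : ℤ) - 1)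
          = 2 * (((u:ℤ)+3)*(2*(u:ℤ)+5)) := by push_cast; ring
      linarith
    have h02 := bval02 (2*u+1)
    have h12 := bval12 (2*u+1)
    have h22 := bval22 (2*u+1)
    rw [hε, c3, c4, c5] at h02
    rw [hε] at h12
    rw [hε, c5] at h22
    have e02 : Bmat (2*u+1) 0 2
        = -(4*(u:ℤ)^4+36*(u:ℤ)^3+115*(u:ℤ)^2+153*(u:ℤ)+70) := by
      have h3 : 2 * Bmat (2*u+1) 0 2
          = 2 * (-(4*(u:ℤ)^4+36*(u:ℤ)^3+115*(u:ℤ)^2+153*(u:ℤ)+70)) := by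
        rw [h02]; push_cast; ring
      linarith
    have e12 : Bmat (2*u+1) 1 2 = -(4*(u:ℤ)^3+26*(u:ℤ)^2+50*(u:ℤ)+28) := by
      have h3 : 2 * Bmat (2*u+1) 1 2
          = 2 * (-(4*(u:ℤ)^3+26*(u:ℤ)^2+50*(u:ℤ)+28)) := by
        rw [h12]; push_cast; ring
      linarith
    have e22 : Bmat (2*u+1) 2 2 = 0 := by
      have h3 : 2 * Bmat (2*u+1) 2 2 = 2 * (0:ℤ) := by
        rw [h22]; push_cast; ring
      linarith
    rw [if_pos ⟨u+2, by omega⟩]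
    rw [hε, c4, c5, e02, e12, e22]
    push_cast
    ring


/-- The determinant of the matrix associated to the parameters `α = β = γ = 3`,
i.e. to the ideal `(x^{t+3}, y^{t+3}, z^{t+3}, x³y³z³)`:
rows `1, …, t-3` (1-based) have entries `binom(3, 3+i-j)`, row `t-2` has entries
`binom(t+3, t+3-j)`, row `t-1` has entries `binom(t+3, t+2-j)`, and row `t` has
entries `binom(t+3, t+1-j)`.  Its determinant is `0` if `t` is even and
`-(1/4)(t-1)²(t+1)(t+2)(t+4)²` if `t` is odd (for odd `t` the factor `(t-1)²`
is divisible by `4`, so we state the odd case multiplied through by `4`). -/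
theorem det_abg_three (t : ℕ) (ht : 3 ≤ t) :
    4 * (Matrix.of fun i j : Fin t =>
        if (i : ℕ) + 3 < t then
          zchoose 3 (3 + (i : ℤ) - (j : ℤ))
        else if (i : ℕ) + 3 = t then
          zchoose (t + 3) ((t : ℤ) + 3 - ((j : ℤ) + 1))
        else if (i : ℕ) + 2 = t then
          zchoose (t + 3) ((t : ℤ) + 2 - ((j : ℤ) + 1))
        else
          zchoose (t + 3) ((t : ℤ) + 1 - ((j : ℤ) + 1))).det
      = if Even t then 0
        else -((t : ℤ) - 1) ^ 2 * ((t : ℤ) + 1) * ((t : ℤ) + 2) * ((t : ℤ) + 4) ^ 2 := by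
  obtain ⟨d, rfl⟩ : ∃ d, t = d + 3 := ⟨t - 3, by omega⟩
  exact aux_det d
end

section
/- Let T ≥ B ≥ 0 and n ≥ 1 be integers, and let N be the n×n integer matrix with entries N_{i,j} = binom(T, B+i−j) for 1 ≤ i, j ≤ n. Then H(B+n) · H(T−B+n) · H(T) · det N = H(n) · H(B) · H(T−B) · H(T+n); equivalently, det N = H(n)H(B)H(T−B)H(T+n) / (H(B+n)H(T−B+n)H(T)). -/
/-- The hyperfactorial `H(n) = ∏_{i=0}^{n-1} i!`, with `H(0) = 1`. -/
def hyperfac (n : ℕ) : ℕ := ∏ i ∈ Finset.range n, Nat.factorial i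

lemma zchoose_pascal (T : ℕ) (z : ℤ) :
    zchoose (T + 1) (z + 1) = zchoose T (z + 1) + zchoose T z := by
  unfold zchoose
  by_cases h : 0 ≤ z
  · have h1 : (0:ℤ) ≤ z + 1 := by omega
    have h2 : (z + 1).toNat = z.toNat + 1 := by omega
    rw [if_pos h1, if_pos h1, if_pos h, h2]
    push_cast [Nat.choose_succ_succ]
    ring
  · rw [if_neg h]
    by_cases h1 : 0 ≤ z + 1
    · have h2 : z + 1 = 0 := by omega
      rw [h2]
      simp
    · rw [if_neg h1, if_neg h1]
      ring

lemma zchoose_row (i : ℕ) : ∀ (T : ℕ) (z : ℤ),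
    zchoose T (z + i) =
      ∑ k ∈ Finset.range (i + 1),
        (-1 : ℤ) ^ (i + k) * (i.choose k) * zchoose (T + k) (z + k) := by
  induction i with
  | zero => intro T z; simp
  | succ i ih =>
    intro T z
    rw [Finset.sum_range_succ']
    have e1 : ∀ k ∈ Finset.range (i + 1),
        (-1 : ℤ) ^ (i + 1 + (k + 1)) * ((i+1).choose (k+1)) * zchoose (T + (k+1)) (z + ((k:ℕ) + 1 : ℕ))
        = (-1 : ℤ) ^ (i + k) * (i.choose k) * zchoose ((T+1) + k) ((z+1) + k)
          + (-1 : ℤ) ^ (i + k) * (i.choose (k+1)) * zchoose (T + (k+1)) (z + (k+1)) := by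
      intro k _
      have hs : (-1 : ℤ) ^ (i + 1 + (k + 1)) = (-1 : ℤ) ^ (i + k) := by
        have : i + 1 + (k + 1) = (i + k) + 2 := by ring
        rw [this, pow_add]; ring
      have harg : z + ((k : ℤ) + 1) = (z + 1) + k := by ring
      have harg2 : T + (k + 1) = (T + 1) + k := by ring
      rw [hs, Nat.choose_succ_succ]
      push_cast
      rw [harg, harg2]
      ring
    rw [Finset.sum_congr rfl e1, Finset.sum_add_distrib]
    have S1 : ∑ k ∈ Finset.range (i + 1),
        (-1 : ℤ) ^ (i + k) * (i.choose k) * zchoose ((T+1) + k) ((z+1) + k)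
        = zchoose (T+1) ((z+1) + i) := (ih (T+1) (z+1)).symm
    have S2 : ∑ k ∈ Finset.range (i + 1),
        (-1 : ℤ) ^ (i + k) * (i.choose (k+1)) * zchoose (T + (k+1)) (z + ((k:ℤ) + 1))
        = -(zchoose T (z + i)) + (-1:ℤ)^i * zchoose T z := by
      have e2 : ∀ k ∈ Finset.range (i + 1),
          (-1 : ℤ) ^ (i + k) * (i.choose (k+1)) * zchoose (T + (k+1)) (z + ((k:ℤ) + 1))
          = -((fun k => (-1:ℤ)^(i+k) * (i.choose k) * zchoose (T+k) (z+(k:ℤ))) (k+1)) := by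
        intro k _
        simp only []
        have hik : i + (k+1) = (i+k)+1 := by omega
        rw [hik, pow_succ]
        push_cast
        ring
      rw [Finset.sum_congr rfl e2, Finset.sum_neg_distrib]
      have step : (∑ k ∈ Finset.range (i+1),
            (fun k => (-1:ℤ)^(i+k) * (i.choose k) * zchoose (T+k) (z+(k:ℤ))) (k+1))
          = (∑ k ∈ Finset.range (i+2),
            (fun k => (-1:ℤ)^(i+k) * (i.choose k) * zchoose (T+k) (z+(k:ℤ))) k)
            - (fun k => (-1:ℤ)^(i+k) * (i.choose k) * zchoose (T+k) (z+(k:ℤ))) 0 := by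
        rw [Finset.sum_range_succ'
          (fun k => (-1:ℤ)^(i+k) * (i.choose k) * zchoose (T+k) (z+(k:ℤ))) (i+1)]
        ring
      rw [step, Finset.sum_range_succ]
      simp only []
      rw [← ih T z]
      simp [Nat.choose_succ_self]
      ring
    rw [S1, S2]
    have key := zchoose_pascal T (z + i)
    have harg : z + ((i:ℤ) + 1) = (z + i) + 1 := by ring
    push_cast
    rw [harg]
    simp only [Nat.choose_zero_right]
    push_cast
    have hz1 : z + 1 + i = z + i + 1 := by ring
    rw [hz1, key]
    rw [pow_succ]
    ring

lemma zchoose_col (j : ℕ) : ∀ (T : ℕ) (w : ℤ),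
    zchoose T (w - j) =
      ∑ l ∈ Finset.range (j + 1),
        (-1 : ℤ) ^ (j + l) * (j.choose l) * zchoose (T + l) w := by
  induction j with
  | zero => intro T w; simp
  | succ j ih =>
    intro T w
    rw [Finset.sum_range_succ']
    have e1 : ∀ l ∈ Finset.range (j + 1),
        (-1 : ℤ) ^ (j + 1 + (l + 1)) * ((j+1).choose (l+1)) * zchoose (T + (l+1)) w
        = (-1 : ℤ) ^ (j + l) * (j.choose l) * zchoose ((T+1) + l) w
          + (-1 : ℤ) ^ (j + l) * (j.choose (l+1)) * zchoose (T + (l+1)) w := by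
      intro l _
      have hs : (-1 : ℤ) ^ (j + 1 + (l + 1)) = (-1 : ℤ) ^ (j + l) := by
        have h : j + 1 + (l + 1) = (j + l) + 2 := by ring
        rw [h, pow_add]; ring
      have harg : T + (l + 1) = (T + 1) + l := by ring
      rw [hs, Nat.choose_succ_succ, harg]
      push_cast
      ring
    rw [Finset.sum_congr rfl e1, Finset.sum_add_distrib]
    have S1 : ∑ l ∈ Finset.range (j + 1),
        (-1 : ℤ) ^ (j + l) * (j.choose l) * zchoose ((T+1) + l) w
        = zchoose (T+1) (w - j) := (ih (T+1) w).symm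
    have S2 : ∑ l ∈ Finset.range (j + 1),
        (-1 : ℤ) ^ (j + l) * (j.choose (l+1)) * zchoose (T + (l+1)) w
        = -(zchoose T (w - j)) + (-1:ℤ)^j * zchoose T w := by
      have e2 : ∀ l ∈ Finset.range (j + 1),
          (-1 : ℤ) ^ (j + l) * (j.choose (l+1)) * zchoose (T + (l+1)) w
          = -((fun l => (-1:ℤ)^(j+l) * (j.choose l) * zchoose (T+l) w) (l+1)) := by
        intro l _
        simp only []
        have hjl : j + (l+1) = (j+l)+1 := by omega
        rw [hjl, pow_succ]
        ring
      rw [Finset.sum_congr rfl e2, Finset.sum_neg_distrib]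
      have step : (∑ l ∈ Finset.range (j+1),
            (fun l => (-1:ℤ)^(j+l) * (j.choose l) * zchoose (T+l) w) (l+1))
          = (∑ l ∈ Finset.range (j+2),
            (fun l => (-1:ℤ)^(j+l) * (j.choose l) * zchoose (T+l) w) l)
            - (fun l => (-1:ℤ)^(j+l) * (j.choose l) * zchoose (T+l) w) 0 := by
        rw [Finset.sum_range_succ'
          (fun l => (-1:ℤ)^(j+l) * (j.choose l) * zchoose (T+l) w) (j+1)]
        ring
      rw [step, Finset.sum_range_succ]
      simp only []
      rw [← ih T w]
      simp [Nat.choose_succ_self]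
      ring
    rw [S1, S2]
    have harg : w - ((j:ℤ) + 1) = (w - j - 1) := by ring
    have harg2 : w - (j:ℤ) = (w - j - 1) + 1 := by ring
    push_cast
    rw [harg, harg2, zchoose_pascal T (w - j - 1)]
    simp only [Nat.choose_zero_right]
    push_cast
    ring

lemma vandermonde_nat_det (n : ℕ) (hn : 1 ≤ n) :
    (Matrix.vandermonde fun i : Fin n => ((i : ℕ) : ℤ)).det = (hyperfac n : ℤ) := by
  obtain ⟨m, rfl⟩ : ∃ m, n = m + 1 := ⟨n - 1, by omega⟩
  rw [Matrix.det_vandermonde_id_eq_superFactorial]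
  norm_cast
  rw [hyperfac, Nat.prod_range_succ_factorial]

/-- For integers `T ≥ B ≥ 0` and `n ≥ 1`, the `n × n` matrix `N` with entries
`N_{i,j} = binom(T, B+i-j)` has determinant
`H(n)H(B)H(T-B)H(T+n) / (H(B+n)H(T-B+n)H(T))`, stated in multiplied-out form. -/

theorem det_binomial_matrix (T B n : ℕ) (hBT : B ≤ T) (hn : 1 ≤ n) :
    (hyperfac (B + n) * hyperfac (T - B + n) * hyperfac T : ℤ) *
        (Matrix.of fun i j : Fin n => zchoose T ((B : ℤ) + (i : ℤ) - (j : ℤ))).det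
      = (hyperfac n * hyperfac B * hyperfac (T - B) * hyperfac (T + n) : ℤ) := by
  -- matrices
  set L : Matrix (Fin n) (Fin n) ℤ :=
    Matrix.of fun i k : Fin n => (-1 : ℤ) ^ ((i : ℕ) + (k : ℕ)) * ((i : ℕ).choose k) with hL
  set U : Matrix (Fin n) (Fin n) ℤ :=
    Matrix.of fun l j : Fin n => (-1 : ℤ) ^ ((j : ℕ) + (l : ℕ)) * ((j : ℕ).choose l) with hU
  set M2 : Matrix (Fin n) (Fin n) ℤ :=
    Matrix.of fun k j : Fin n => zchoose (T + (k : ℕ)) ((B : ℤ) + (k : ℤ) - (j : ℤ)) with hM2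
  set M3 : Matrix (Fin n) (Fin n) ℤ :=
    Matrix.of fun k l : Fin n => zchoose (T + (k : ℕ) + (l : ℕ)) ((B : ℤ) + (k : ℤ)) with hM3
  -- Step 1: M = L * M2
  have step1 : (Matrix.of fun i j : Fin n => zchoose T ((B : ℤ) + (i : ℤ) - (j : ℤ))) = L * M2 := by
    ext i j
    rw [Matrix.mul_apply]
    have harg : (B : ℤ) + (i : ℤ) - (j : ℤ) = ((B : ℤ) - (j : ℤ)) + ((i : ℕ) : ℤ) := by
      push_cast; ring
    rw [Matrix.of_apply, harg, zchoose_row (i : ℕ) T ((B : ℤ) - (j : ℤ))]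
    have hsub : Finset.range ((i : ℕ) + 1) ⊆ Finset.range n :=
      Finset.range_subset_range.mpr i.isLt
    rw [Finset.sum_subset hsub (by
      intro k hk hk2
      simp only [Finset.mem_range] at hk hk2
      have : (i : ℕ) < k := by omega
      rw [Nat.choose_eq_zero_of_lt this]
      simp)]
    rw [← Fin.sum_univ_eq_sum_range (fun k =>
      (-1 : ℤ) ^ ((i : ℕ) + k) * ((i : ℕ).choose k) * zchoose (T + k) ((B : ℤ) - (j : ℤ) + k)) n]
    apply Finset.sum_congr rfl
    intro k _
    simp only [hL, hM2, Matrix.of_apply]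
    have : (B : ℤ) + (k : ℤ) - (j : ℤ) = (B : ℤ) - (j : ℤ) + ((k : ℕ) : ℤ) := by push_cast; ring
    rw [this]
  -- Step 2: M2 = M3 * U
  have step2 : M2 = M3 * U := by
    ext k j
    rw [Matrix.mul_apply]
    have harg : (B : ℤ) + (k : ℤ) - (j : ℤ) = ((B : ℤ) + (k : ℤ)) - ((j : ℕ) : ℤ) := by
      push_cast; ring
    rw [hM2, Matrix.of_apply, harg, zchoose_col (j : ℕ) (T + (k : ℕ)) ((B : ℤ) + (k : ℤ))]
    have hsub : Finset.range ((j : ℕ) + 1) ⊆ Finset.range n :=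
      Finset.range_subset_range.mpr j.isLt
    rw [Finset.sum_subset hsub (by
      intro l hl hl2
      simp only [Finset.mem_range] at hl hl2
      have : (j : ℕ) < l := by omega
      rw [Nat.choose_eq_zero_of_lt this]
      simp)]
    rw [← Fin.sum_univ_eq_sum_range (fun l =>
      (-1 : ℤ) ^ ((j : ℕ) + l) * ((j : ℕ).choose l) * zchoose (T + (k : ℕ) + l) ((B : ℤ) + (k : ℤ))) n]
    apply Finset.sum_congr rfl
    intro l _
    simp only [hL, hM3, hU, Matrix.of_apply]
    ring
  -- determinants of triangular factors
  have detL : L.det = 1 := by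
    rw [Matrix.det_of_lowerTriangular L (by
      intro i j hij
      have h2 : (i : ℕ) < (j : ℕ) := hij
      simp only [hL, Matrix.of_apply]
      rw [Nat.choose_eq_zero_of_lt h2]
      simp)]
    apply Finset.prod_eq_one
    intro i _
    simp only [hL, Matrix.of_apply, Nat.choose_self, Nat.cast_one, mul_one, ← two_mul, pow_mul]
    simp
  have detU : U.det = 1 := by
    rw [Matrix.det_of_upperTriangular (by
      intro l j hlj
      have h2 : (j : ℕ) < (l : ℕ) := hlj
      simp only [hU, Matrix.of_apply]
      rw [Nat.choose_eq_zero_of_lt h2]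
      simp)]
    apply Finset.prod_eq_one
    intro i _
    simp only [hU, Matrix.of_apply, Nat.choose_self, Nat.cast_one, mul_one, ← two_mul, pow_mul]
    simp
  have detM : (Matrix.of fun i j : Fin n => zchoose T ((B : ℤ) + (i : ℤ) - (j : ℤ))).det = M3.det := by
    rw [step1, step2, Matrix.det_mul, Matrix.det_mul, detL, detU, one_mul, mul_one]
  -- Step 3: scaling to the Hankel matrix of factorials
  set d1 : Fin n → ℤ := fun i => ((B + (i : ℕ)).factorial : ℤ) with hd1
  set d2 : Fin n → ℤ := fun j => ((T - B + (j : ℕ)).factorial : ℤ) with hd2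
  set d3 : Fin n → ℤ := fun i => ((T + (i : ℕ)).factorial : ℤ) with hd3
  set M4 : Matrix (Fin n) (Fin n) ℤ :=
    Matrix.of fun i j : Fin n => (((T + (i : ℕ) + (j : ℕ)).factorial : ℕ) : ℤ) with hM4
  set M5 : Matrix (Fin n) (Fin n) ℤ :=
    Matrix.of fun i j : Fin n => (((T + (i : ℕ) + 1).ascFactorial (j : ℕ) : ℕ) : ℤ) with hM5
  have step3 : Matrix.diagonal d1 * M3 * Matrix.diagonal d2 = M4 := by
    ext i j
    rw [Matrix.mul_diagonal, Matrix.diagonal_mul]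
    simp only [hd1, hd2, hM3, hM4, Matrix.of_apply]
    have hz : zchoose (T + (i : ℕ) + (j : ℕ)) ((B : ℤ) + (i : ℤ)) =
        ((T + (i : ℕ) + (j : ℕ)).choose (B + (i : ℕ)) : ℤ) := by
      have h : ((B : ℤ) + (i : ℤ)).toNat = B + (i : ℕ) := by omega
      unfold zchoose
      rw [if_pos (by positivity), h]
    rw [hz]
    have h1 : B + (i : ℕ) ≤ T + (i : ℕ) + (j : ℕ) := by omega
    have h2 := Nat.choose_mul_factorial_mul_factorial h1
    have h3 : T + (i : ℕ) + (j : ℕ) - (B + (i : ℕ)) = T - B + (j : ℕ) := by omega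
    rw [h3] at h2
    push_cast [← h2]
    ring
  have det4 : M4.det = (∏ i, d1 i) * M3.det * ∏ j, d2 j := by
    rw [← step3, Matrix.det_mul, Matrix.det_mul, Matrix.det_diagonal, Matrix.det_diagonal]
  have step4 : Matrix.diagonal d3 * M5 = M4 := by
    ext i j
    rw [Matrix.diagonal_mul]
    simp only [hd3, hM5, hM4, Matrix.of_apply]
    have h := Nat.factorial_mul_ascFactorial (T + (i : ℕ)) (j : ℕ)
    have h2 : T + (i : ℕ) + (j : ℕ) = (T + (i : ℕ)) + (j : ℕ) := by omega
    rw [h2]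
    exact_mod_cast h
  have det5 : M4.det = (∏ i, d3 i) * M5.det := by
    rw [← step4, Matrix.det_mul, Matrix.det_diagonal]
  -- Step 5: Vandermonde evaluation of M5
  have hM5det : M5.det = (hyperfac n : ℤ) := by
    have hdeg : ∀ j : Fin n,
        ((ascPochhammer ℤ (j : ℕ)).comp (Polynomial.X + Polynomial.C ((T : ℤ) + 1))).natDegree
          = (j : ℕ) := by
      intro j
      rw [Polynomial.natDegree_comp, ascPochhammer_natDegree, Polynomial.natDegree_X_add_C,
        mul_one]
    have hmonic : ∀ j : Fin n,
        ((ascPochhammer ℤ (j : ℕ)).comp (Polynomial.X + Polynomial.C ((T : ℤ) + 1))).Monic :=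
      fun j => Polynomial.Monic.comp_X_add_C (monic_ascPochhammer ℤ (j : ℕ)) _
    have hvdm := Matrix.det_eval_matrixOfPolynomials_eq_det_vandermonde
      (fun i : Fin n => ((i : ℕ) : ℤ))
      (fun j : Fin n => (ascPochhammer ℤ (j : ℕ)).comp (Polynomial.X + Polynomial.C ((T : ℤ) + 1)))
      hdeg hmonic
    have hof : (Matrix.of fun i j : Fin n =>
        ((ascPochhammer ℤ (j : ℕ)).comp (Polynomial.X + Polynomial.C ((T : ℤ) + 1))).eval
          ((i : ℕ) : ℤ)) = M5 := by
      ext i j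
      simp only [hM5, Matrix.of_apply, Polynomial.eval_comp, Polynomial.eval_add,
        Polynomial.eval_X, Polynomial.eval_C]
      have harg : ((i : ℕ) : ℤ) + ((T : ℤ) + 1) = ((T + (i : ℕ) + 1 : ℕ) : ℤ) := by
        push_cast; ring
      rw [harg, ← ascPochhammer_eval_cast, ascPochhammer_nat_eq_ascFactorial]
    rw [hof] at hvdm
    rw [← hvdm, vandermonde_nat_det n hn]
  -- hyperfactorial splitting
  have hP1 : (hyperfac (B + n) : ℤ) = (hyperfac B : ℤ) * ∏ i : Fin n, d1 i := by
    have h : hyperfac (B + n) = hyperfac B * ∏ i ∈ Finset.range n, (B + i).factorial := by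
      rw [hyperfac, hyperfac, Finset.prod_range_add]
    rw [h, Nat.cast_mul, Nat.cast_prod, hd1,
      Fin.prod_univ_eq_prod_range (fun i => ((B + i).factorial : ℤ)) n]
  have hP2 : (hyperfac (T - B + n) : ℤ) = (hyperfac (T - B) : ℤ) * ∏ j : Fin n, d2 j := by
    have h : hyperfac (T - B + n) = hyperfac (T - B) * ∏ i ∈ Finset.range n, (T - B + i).factorial := by
      rw [hyperfac, hyperfac, Finset.prod_range_add]
    rw [h, Nat.cast_mul, Nat.cast_prod, hd2,
      Fin.prod_univ_eq_prod_range (fun i => ((T - B + i).factorial : ℤ)) n]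
  have hP3 : (hyperfac (T + n) : ℤ) = (hyperfac T : ℤ) * ∏ i : Fin n, d3 i := by
    have h : hyperfac (T + n) = hyperfac T * ∏ i ∈ Finset.range n, (T + i).factorial := by
      rw [hyperfac, hyperfac, Finset.prod_range_add]
    rw [h, Nat.cast_mul, Nat.cast_prod, hd3,
      Fin.prod_univ_eq_prod_range (fun i => ((T + i).factorial : ℤ)) n]
  have key : (∏ i, d1 i) * M3.det * (∏ j, d2 j) = (∏ i, d3 i) * (hyperfac n : ℤ) := by
    rw [← det4, det5, hM5det]
  rw [detM, hP1, hP2, hP3]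
  linear_combination ((hyperfac B : ℤ) * (hyperfac (T - B) : ℤ) * (hyperfac T : ℤ)) * key
end

section
/- Let α, β, t be integers with 1 ≤ α ≤ β, let γ = 2(α+β), assume t ≥ α+β, and set δ = t − (α+β). Let M be the δ×δ integer matrix with entries M_{i,j} = binom(γ, α+β+i−j) for 1 ≤ i, j ≤ δ. Then H(γ) · H(t)² · det M = H(δ) · H(α+β)² · H(γ+δ); equivalently, det M = H(δ)H(α+β)²H(γ+δ) / (H(γ)H(t)²). -/
open Finset Polynomial Matrix

lemma fact_mul_prod (p : ℕ) : ∀ k : ℕ,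
    p.factorial * ∏ l ∈ range k, (p + 1 + l) = (p + k).factorial := by
  intro k
  induction k with
  | zero => simp
  | succ k ih =>
      rw [prod_range_succ, ← mul_assoc, ih]
      have : p + (k+1) = (p + k) + 1 := by omega
      rw [this, Nat.factorial_succ]
      ring

lemma hyperfac_add (c n : ℕ) :
    hyperfac c * ∏ i ∈ range n, (c + i).factorial = hyperfac (c + n) := by
  rw [hyperfac, hyperfac, prod_range_add]

lemma main_det (a n : ℕ) (ha : 1 ≤ a) :
    (hyperfac (2*a) * hyperfac (a+n) ^ 2 : ℤ) *
      (Matrix.of fun i j : Fin n =>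
        zchoose (2*a) ((a : ℤ) + (i : ℤ) - (j : ℤ))).det
    = (hyperfac n * hyperfac a ^ 2 * hyperfac (2*a+n) : ℤ) := by
  rcases Nat.eq_zero_or_pos n with rfl | hn
  · simp [hyperfac]; ring
  -- the polynomials Q j
  set Q : Fin n → Polynomial ℤ := fun j =>
    (∏ l ∈ range (j : ℕ), (X + C ((a : ℤ) - (j : ℕ) + 1 + l))) *
    (∏ m ∈ range (n - 1 - (j : ℕ)), (C ((a : ℤ) + (j : ℕ) + 1 + m) - X)) with hQ
  have hdeg : ∀ j : Fin n, (Q j).natDegree < n := by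
    intro j
    have h1 : (∏ l ∈ range (j : ℕ), (X + C ((a : ℤ) - (j : ℕ) + 1 + l))).natDegree
        ≤ (j : ℕ) := by
      refine le_trans (natDegree_prod_le _ _) ?_
      calc ∑ l ∈ range (j : ℕ), (X + C ((a : ℤ) - (j : ℕ) + 1 + (l:ℤ))).natDegree
          ≤ ∑ _l ∈ range (j : ℕ), 1 := by
            refine Finset.sum_le_sum fun l _ => ?_
            refine le_trans (natDegree_add_le _ _) ?_
            rw [natDegree_X, natDegree_C]; simp
        _ = (j : ℕ) := by simp
    have h2 : (∏ m ∈ range (n - 1 - (j : ℕ)),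
        (C ((a : ℤ) + (j : ℕ) + 1 + m) - X)).natDegree ≤ n - 1 - (j : ℕ) := by
      refine le_trans (natDegree_prod_le _ _) ?_
      calc ∑ m ∈ range (n - 1 - (j:ℕ)), (C ((a : ℤ) + (j:ℕ) + 1 + (m:ℤ)) - X).natDegree
          ≤ ∑ _m ∈ range (n - 1 - (j:ℕ)), 1 := by
            refine Finset.sum_le_sum fun m _ => ?_
            refine le_trans (natDegree_sub_le _ _) ?_
            rw [natDegree_X, natDegree_C]; simp
        _ = n - 1 - (j:ℕ) := by simp
    have hj := j.isLt
    simp only [hQ]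
    exact lt_of_le_of_lt (le_trans natDegree_mul_le (add_le_add h1 h2)) (by omega)
  -- the coefficient matrix
  set Cm : Matrix (Fin n) (Fin n) ℤ := Matrix.of (fun k j => (Q j).coeff (k : ℕ)) with hCm
  have hfac : ∀ v : Fin n → ℤ,
      (Matrix.of fun i j => (Q j).eval (v i)) = vandermonde v * Cm := by
    intro v
    ext i j
    rw [Matrix.mul_apply, Matrix.of_apply, eval_eq_sum_range' (hdeg j) (v i)]
    rw [← Fin.sum_univ_eq_sum_range (fun k => (Q j).coeff k * v i ^ k) n]
    exact Finset.sum_congr rfl fun k _ => by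
      simp [vandermonde_apply, hCm, mul_comm]
  -- the two evaluation matrices have equal determinants
  have hdet12 : (Matrix.of fun i j : Fin n => (Q j).eval ((i : ℕ) : ℤ)).det
      = (Matrix.of fun i j : Fin n => (Q j).eval ((a : ℤ) + (i : ℕ))).det := by
    rw [hfac (fun i : Fin n => ((i : ℕ) : ℤ)), hfac (fun i : Fin n => (a : ℤ) + (i : ℕ))]
    rw [Matrix.det_mul, Matrix.det_mul, det_vandermonde, det_vandermonde]
    congr 1
    refine Finset.prod_congr rfl fun i _ => Finset.prod_congr rfl fun k _ => by ring
  -- triangularity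
  have htri : ∀ i j : Fin n, (j : ℕ) < (i : ℕ) →
      (Q j).eval ((a : ℤ) + (i : ℕ)) = 0 := by
    intro i j hij
    simp only [hQ]
    simp only [eval_mul, eval_prod, eval_add, eval_sub, eval_X, eval_C]
    apply mul_eq_zero_of_right
    refine Finset.prod_eq_zero (Finset.mem_range.2 (show (i:ℕ) - (j:ℕ) - 1 < n - 1 - (j:ℕ) by
      have := i.isLt; omega)) ?_
    have := i.isLt
    -- cast handled by omega
    omega
  -- diagonal entries
  have hdiag : ∀ i : Fin n, (Q i).eval ((a : ℤ) + (i : ℕ))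
      = ((∏ l ∈ range (i : ℕ), (2*a + 1 + l) : ℕ) : ℤ) * ((n - 1 - (i : ℕ)).factorial : ℤ) := by
    intro i
    simp only [hQ]
    simp only [eval_mul, eval_prod, eval_add, eval_sub, eval_X, eval_C]
    rw [← prod_range_add_one_eq_factorial]
    push_cast
    congr 1
    · exact Finset.prod_congr rfl fun l _ => by ring
    · exact Finset.prod_congr rfl fun m _ => by ring
  -- key entrywise identity
  have hkey : ∀ i j : Fin n,
      (((a + (i:ℕ)).factorial * (a + n - 1 - (i:ℕ)).factorial : ℕ) : ℤ) *
        zchoose (2*a) ((a : ℤ) + (i : ℤ) - (j : ℤ))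
      = (((2*a).factorial : ℕ) : ℤ) * (Q j).eval ((i : ℕ) : ℤ) := by
    intro i j
    have hI := i.isLt
    have hJ := j.isLt
    simp only [hQ, eval_mul, eval_prod, eval_add, eval_sub, eval_X, eval_C]
    by_cases h1 : a + (i:ℕ) < (j:ℕ)
    · rw [zchoose, if_neg (by omega), mul_zero]
      symm
      apply mul_eq_zero_of_right
      apply mul_eq_zero_of_left
      refine Finset.prod_eq_zero
        (Finset.mem_range.2 (show (j:ℕ) - (a + (i:ℕ)) - 1 < (j:ℕ) by omega)) ?_
      omega
    · by_cases h2 : a + (j:ℕ) < (i:ℕ)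
      · rw [zchoose, if_pos (by omega)]
        have htn : (((a:ℤ) + (i:ℤ) - (j:ℤ))).toNat = a + (i:ℕ) - (j:ℕ) := by
          omega
        rw [htn, Nat.choose_eq_zero_of_lt (by omega)]
        push_cast
        rw [mul_zero]
        symm
        apply mul_eq_zero_of_right
        apply mul_eq_zero_of_right
        refine Finset.prod_eq_zero
          (Finset.mem_range.2 (show (i:ℕ) - (a + (j:ℕ)) - 1 < n - 1 - (j:ℕ) by omega)) ?_
        omega
      · rw [zchoose, if_pos (by omega)]
        have htn : (((a:ℤ) + (i:ℤ) - (j:ℤ))).toNat = a + (i:ℕ) - (j:ℕ) := by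
          omega
        rw [htn]
        set p := a + (i:ℕ) - (j:ℕ) with hp
        set q := a + (j:ℕ) - (i:ℕ) with hq
        have e1 : (∏ l ∈ range (j:ℕ), (((i:ℕ):ℤ) + ((a:ℤ) - ((j:ℕ):ℤ) + 1 + (l:ℤ))))
            = ((∏ l ∈ range (j:ℕ), (p + 1 + l) : ℕ) : ℤ) := by
          push_cast
          exact Finset.prod_congr rfl fun l _ => by omega
        have e2 : (∏ m ∈ range (n - 1 - (j:ℕ)),
              (((a:ℤ) + ((j:ℕ):ℤ) + 1 + (m:ℤ)) - ((i:ℕ):ℤ)))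
            = ((∏ m ∈ range (n - 1 - (j:ℕ)), (q + 1 + m) : ℕ) : ℤ) := by
          push_cast
          exact Finset.prod_congr rfl fun m _ => by omega
        rw [e1, e2]
        have n1 : p.factorial * ∏ l ∈ range (j:ℕ), (p+1+l) = (a+(i:ℕ)).factorial := by
          rw [fact_mul_prod]; congr 1; omega
        have n2 : q.factorial * ∏ m ∈ range (n-1-(j:ℕ)), (q+1+m)
            = (a+n-1-(i:ℕ)).factorial := by
          rw [fact_mul_prod]; congr 1; omega
        have n3 : (2*a).choose p * p.factorial * q.factorial = (2*a).factorial := by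
          have h := Nat.choose_mul_factorial_mul_factorial (show p ≤ 2*a by omega)
          have hq2 : 2*a - p = q := by omega
          rwa [hq2] at h
        have key : ((a+(i:ℕ)).factorial * (a+n-1-(i:ℕ)).factorial) * (2*a).choose p
            = (2*a).factorial * ((∏ l ∈ range (j:ℕ), (p+1+l)) *
              (∏ m ∈ range (n-1-(j:ℕ)), (q+1+m))) := by
          rw [← n1, ← n2, ← n3]; ring
        exact_mod_cast key
  -- assemble
  set A : Matrix (Fin n) (Fin n) ℤ :=
    Matrix.of (fun i j : Fin n => zchoose (2*a) ((a:ℤ) + (i:ℤ) - (j:ℤ))) with hAdef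
  set P1 : Matrix (Fin n) (Fin n) ℤ :=
    Matrix.of (fun i j : Fin n => (Q j).eval ((i:ℕ):ℤ)) with hP1
  set P2 : Matrix (Fin n) (Fin n) ℤ :=
    Matrix.of (fun i j : Fin n => (Q j).eval ((a:ℤ) + ((i:ℕ):ℤ))) with hP2
  have hscale : Matrix.of (fun i j : Fin n =>
        (((a + (i:ℕ)).factorial * (a + n - 1 - (i:ℕ)).factorial : ℕ) : ℤ) * A i j)
      = Matrix.of (fun i j : Fin n => (((2*a).factorial : ℕ) : ℤ) * P1 i j) := by
    ext i j
    simp only [Matrix.of_apply, hAdef, hP1]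
    exact hkey i j
  have hdetscale := congrArg Matrix.det hscale
  rw [Matrix.det_mul_column, Matrix.det_mul_column, Finset.prod_const, Finset.card_univ,
    Fintype.card_fin] at hdetscale
  have hP12 : P1.det = P2.det := hdet12
  have htriang : P2.det = ∏ i : Fin n, P2 i i := by
    refine Matrix.det_of_upperTriangular ?_
    intro i j hij
    simp only [hP2, Matrix.of_apply]
    exact htri i j hij
  have hdiagval : (∏ i : Fin n, P2 i i)
      = ∏ i : Fin n, (((∏ l ∈ range (i:ℕ), (2*a + 1 + l) : ℕ) : ℤ) *
          (((n - 1 - (i:ℕ)).factorial : ℕ) : ℤ)) :=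
    Finset.prod_congr rfl fun i _ => hdiag i
  have hfinal : (∏ i : Fin n,
        (((a + (i:ℕ)).factorial * (a + n - 1 - (i:ℕ)).factorial : ℕ) : ℤ)) * A.det
      = (((2*a).factorial : ℕ) : ℤ) ^ n *
        ∏ i : Fin n, (((∏ l ∈ range (i:ℕ), (2*a + 1 + l) : ℕ) : ℤ) *
          (((n - 1 - (i:ℕ)).factorial : ℕ) : ℤ)) := by
    rw [hdetscale, hP12, htriang, hdiagval]
  -- convert Fin products to range products
  rw [Fin.prod_univ_eq_prod_range
      (fun k => (((a + k).factorial * (a + n - 1 - k).factorial : ℕ) : ℤ)) n,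
    Fin.prod_univ_eq_prod_range
      (fun k => (((∏ l ∈ range k, (2*a + 1 + l) : ℕ) : ℤ) *
        (((n - 1 - k).factorial : ℕ) : ℤ))) n] at hfinal
  -- the numeric identity over ℕ
  have t1 : (2*a).factorial ^ n *
        ∏ i ∈ range n, ((∏ l ∈ range i, (2*a + 1 + l)) * (n - 1 - i).factorial)
      = (∏ i ∈ range n, (2*a + i).factorial) * hyperfac n := by
    rw [Finset.prod_mul_distrib]
    have hc : (2*a).factorial ^ n = ∏ _i ∈ range n, (2*a).factorial := by
      rw [Finset.prod_const, Finset.card_range]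
    rw [hc, ← mul_assoc, ← Finset.prod_mul_distrib]
    congr 1
    · exact Finset.prod_congr rfl fun i _ => fact_mul_prod (2*a) i
    · rw [hyperfac]
      exact Finset.prod_range_reflect Nat.factorial n
  have t2 : ∏ i ∈ range n, (a + n - 1 - i).factorial
      = ∏ i ∈ range n, (a + i).factorial := by
    rw [← Finset.prod_range_reflect (fun i => (a+i).factorial) n]
    refine Finset.prod_congr rfl fun i hi => ?_
    have := Finset.mem_range.1 hi
    congr 1
    omega
  have N : hyperfac (2*a) * hyperfac (a+n)^2 *
        ((2*a).factorial ^ n *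
          ∏ i ∈ range n, ((∏ l ∈ range i, (2*a+1+l)) * (n-1-i).factorial))
      = hyperfac n * hyperfac a^2 * hyperfac (2*a+n) *
        ∏ i ∈ range n, ((a+i).factorial * (a+n-1-i).factorial) := by
    rw [t1, Finset.prod_mul_distrib, t2, ← hyperfac_add a n, ← hyperfac_add (2*a) n]
    ring
  have hcne : (∏ i ∈ range n,
        (((a + i).factorial * (a + n - 1 - i).factorial : ℕ) : ℤ)) ≠ 0 := by
    refine Finset.prod_ne_zero_iff.2 fun i _ => ?_
    exact_mod_cast Nat.mul_ne_zero (Nat.factorial_ne_zero _) (Nat.factorial_ne_zero _)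
  refine mul_left_cancel₀ hcne ?_
  have NZ := congrArg (fun x : ℕ => (x : ℤ)) N
  push_cast at NZ hfinal ⊢
  linear_combination ((hyperfac (2*a) : ℤ) * (hyperfac (a+n):ℤ)^2) * hfinal + NZ

/-- The `γ`-maximal case: for `1 ≤ α ≤ β`, `γ = 2(α+β)`, `t ≥ α+β` and
`δ = t - (α+β)`, the `δ × δ` matrix with entries `M_{i,j} = binom(γ, α+β+i-j)`
has determinant `H(δ)H(α+β)²H(γ+δ) / (H(γ)H(t)²)`, stated in multiplied-out
form. -/
theorem det_gamma_maximal (α β t γ δ : ℕ)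
    (hα : 1 ≤ α) (hαβ : α ≤ β) (hγ : γ = 2 * (α + β))
    (ht : α + β ≤ t) (hδ : δ = t - (α + β)) :
    (hyperfac γ * hyperfac t ^ 2 : ℤ) *
        (Matrix.of fun i j : Fin δ =>
          zchoose γ ((α : ℤ) + (β : ℤ) + (i : ℤ) - (j : ℤ))).det
      = (hyperfac δ * hyperfac (α + β) ^ 2 * hyperfac (γ + δ) : ℤ) := by
  have ha : 1 ≤ α + β := by omega
  have ht' : t = (α + β) + δ := by omega
  have hγδ : γ + δ = 2 * (α + β) + δ := by omega
  subst hγ ht'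
  rw [hγδ]
  have := main_det (α + β) δ ha
  push_cast at this ⊢
  convert this using 4
end

section
/- Let α, β, t be integers with 1 ≤ α ≤ β, let γ = 2(α+β), assume t ≥ α+β, and set δ = t − (α+β). Let M be the δ×δ integer matrix with entries M_{i,j} = binom(γ, α+β+i−j) for 1 ≤ i, j ≤ δ. Then det M > 0, and for every prime number p with p ≥ t + α + β, p does not divide det M. -/
open Polynomial in
lemma zc_sparse_aux {K : Type*} [Field K] {c : K} (hc : c ≠ 0) :
    ∀ N : ℕ, ∀ g : K[X], g.natDegree ≤ N → g ≠ 0 →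
      (∀ n : ℕ, 0 < n → n ≤ g.natDegree → (n : K) ≠ 0) →
      g.rootMultiplicity c < g.support.card := by
  have const_case : ∀ g : K[X], g.natDegree = 0 → g ≠ 0 →
      g.rootMultiplicity c < g.support.card := by
    intro g h0 hg
    have hroot : ¬ g.IsRoot c := by
      intro h
      have hC := Polynomial.eq_C_of_natDegree_eq_zero h0
      rw [Polynomial.IsRoot, hC] at h
      simp at h
      exact hg (by rw [hC, h, map_zero])
    rw [Polynomial.rootMultiplicity_eq_zero hroot]
    exact Finset.card_pos.mpr (Polynomial.support_nonempty.mpr hg)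
  intro N
  induction N with
  | zero =>
    intro g hdeg hg _
    exact const_case g (Nat.le_zero.mp hdeg) hg
  | succ N ih =>
    intro g hdeg hg hchar
    by_cases h0 : g.natDegree = 0
    · exact const_case g h0 hg
    by_cases hc0 : g.coeff 0 = 0
    · -- g = X * q
      obtain ⟨q, hq⟩ := Polynomial.X_dvd_iff.mpr hc0
      have hqne : q ≠ 0 := by
        rintro rfl
        rw [mul_zero] at hq
        exact hg hq
      have hdq : g.natDegree = 1 + q.natDegree := by
        rw [hq, Polynomial.natDegree_mul Polynomial.X_ne_zero hqne, Polynomial.natDegree_X]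
      have hmult : g.rootMultiplicity c = q.rootMultiplicity c := by
        rw [hq, Polynomial.rootMultiplicity_mul (hq ▸ hg),
          Polynomial.rootMultiplicity_eq_zero (by simpa [Polynomial.IsRoot] using hc), zero_add]
      have hsupp : g.support = q.support.image (· + 1) := by
        rw [hq]
        ext n
        rcases n with _ | n
        · simp [Polynomial.mul_coeff_zero]
        · simp only [Polynomial.mem_support_iff, Polynomial.coeff_X_mul, Finset.mem_image]
          constructor
          · intro h; exact ⟨n, h, rfl⟩
          · rintro ⟨a, ha, hval⟩
            have han : a = n := by omega
            subst han; exact ha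
      have hcardeq : g.support.card = q.support.card := by
        rw [hsupp, Finset.card_image_of_injective _ (add_left_injective 1)]
      have hih := ih q (by omega) hqne (fun n hn hn' => hchar n hn (by omega))
      omega
    · -- derivative step
      have hlead : g.coeff g.natDegree ≠ 0 := by
        rw [← Polynomial.leadingCoeff]
        exact Polynomial.leadingCoeff_ne_zero.mpr hg
      have hgd : Polynomial.derivative g ≠ 0 := by
        intro hzero
        have h1 : g.natDegree - 1 + 1 = g.natDegree := by omega
        have hcd : (Polynomial.derivative g).coeff (g.natDegree - 1) =
            g.coeff g.natDegree * (g.natDegree : K) := by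
          have h2 : ((g.natDegree - 1 : ℕ) : K) + 1 = (g.natDegree : K) := by
            exact_mod_cast congrArg (Nat.cast : ℕ → K) h1
          rw [Polynomial.coeff_derivative, h1, h2]
        rw [hzero] at hcd
        exact (mul_ne_zero hlead (hchar g.natDegree (by omega) le_rfl)) hcd.symm
      have hmult : g.rootMultiplicity c ≤ (Polynomial.derivative g).rootMultiplicity c + 1 := by
        have := Polynomial.rootMultiplicity_sub_one_le_derivative_rootMultiplicity_of_ne_zero g c hgd
        omega
      have h0supp : (0 : ℕ) ∈ g.support := Polynomial.mem_support_iff.mpr hc0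
      have hsub : (Polynomial.derivative g).support ⊆ (g.support.erase 0).image (· - 1) := by
        intro n hn
        have hco : g.coeff (n + 1) ≠ 0 := by
          intro h
          apply Polynomial.mem_support_iff.mp hn
          rw [Polynomial.coeff_derivative, h, zero_mul]
        exact Finset.mem_image.mpr ⟨n + 1,
          Finset.mem_erase.mpr ⟨Nat.succ_ne_zero n, Polynomial.mem_support_iff.mpr hco⟩, by omega⟩
      have hcard : (Polynomial.derivative g).support.card < g.support.card := by
        calc (Polynomial.derivative g).support.card
            ≤ ((g.support.erase 0).image (· - 1)).card := Finset.card_le_card hsub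
          _ ≤ (g.support.erase 0).card := Finset.card_image_le
          _ < g.support.card := by
              rw [Finset.card_erase_of_mem h0supp]
              exact Nat.sub_lt (Finset.card_pos.mpr ⟨0, h0supp⟩) one_pos
      have hdlt : (Polynomial.derivative g).natDegree < g.natDegree :=
        Polynomial.natDegree_derivative_lt h0
      have hih := ih (Polynomial.derivative g) (by omega) hgd
        (fun n hn hn' => hchar n hn (by omega))
      omega

lemma zchoose_sub_cast (n a b : ℕ) :
    zchoose n ((a : ℤ) - b) = if b ≤ a then (n.choose (a - b) : ℤ) else 0 := by
  unfold zchoose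
  split_ifs with h1 h2
  · have : ((a : ℤ) - b).toNat = a - b := by omega
    rw [this]
  · exfalso; omega
  · exfalso; omega
  · rfl

open Polynomial in
lemma det_zc_ne_zero {K : Type*} [Field K] (m δ : ℕ) (hδ : 0 < δ)
    (hchar : ∀ n : ℕ, 0 < n → n < 2 * m + δ → (n : K) ≠ 0) :
    (Matrix.of fun i j : Fin δ =>
      ((zchoose (2 * m) ((m : ℤ) + i - j) : ℤ) : K)).det ≠ 0 := by
  intro h0
  obtain ⟨v, hv, hMv⟩ := Matrix.exists_mulVec_eq_zero_iff.mpr h0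
  classical
  set f : K[X] := ∑ j : Fin δ, C (v j) * X ^ (j : ℕ) with hf
  have hfcoeff : ∀ j : Fin δ, f.coeff (j : ℕ) = v j := by
    intro j
    rw [hf, Polynomial.finset_sum_coeff]
    rw [Finset.sum_eq_single j]
    · simp
    · intro b _ hbj
      rw [Polynomial.coeff_C_mul, Polynomial.coeff_X_pow, if_neg (by
        exact fun h => hbj (Fin.ext h.symm)), mul_zero]
    · intro h; exact absurd (Finset.mem_univ j) h
  have hfne : f ≠ 0 := by
    obtain ⟨j, hj⟩ := Function.ne_iff.mp hv
    intro h
    apply hj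
    rw [← hfcoeff j, h]
    simp
  set g : K[X] := (X + 1) ^ (2 * m) * f with hgdef
  have hX1 : (X + 1 : K[X]) ≠ 0 := fun h => by
    simpa using congrArg (fun p => Polynomial.coeff p 0) h
  have hgne : g ≠ 0 := mul_ne_zero (pow_ne_zero _ hX1) hfne
  have hgco : ∀ n : ℕ, g.coeff n =
      ∑ j : Fin δ, v j * (if (j : ℕ) ≤ n then ((2 * m).choose (n - j) : K) else 0) := by
    intro n
    rw [hgdef, hf, Finset.mul_sum, Polynomial.finset_sum_coeff]
    refine Finset.sum_congr rfl fun j _ => ?_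
    have hre : (X + 1 : K[X]) ^ (2 * m) * (C (v j) * X ^ (j : ℕ)) =
        C (v j) * ((X + 1) ^ (2 * m) * X ^ (j : ℕ)) := by ring
    rw [hre, Polynomial.coeff_C_mul, Polynomial.coeff_mul_X_pow']
    split_ifs with h
    · rw [Polynomial.coeff_X_add_one_pow]
    · rw [mul_zero]
  -- entries of the matrix equal the g-coefficients
  have hker : ∀ i : Fin δ, g.coeff (m + i) = 0 := by
    intro i
    have h1 : ∑ j : Fin δ, (Matrix.of fun i j : Fin δ =>
        ((zchoose (2 * m) ((m : ℤ) + i - j) : ℤ) : K)) i j * v j = 0 := by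
      have := congrFun hMv i
      simpa [Matrix.mulVec, dotProduct] using this
    have hentry : ∀ j : Fin δ, ((zchoose (2 * m) ((m : ℤ) + i - j) : ℤ) : K) =
        (if (j : ℕ) ≤ m + i then ((2 * m).choose (m + i - j) : K) else 0) := by
      intro j
      have harg : (m : ℤ) + i - j = ((m + (i : ℕ) : ℕ) : ℤ) - ((j : ℕ) : ℤ) := by
        push_cast; ring
      rw [harg, zchoose_sub_cast]
      split_ifs with h
      · push_cast; rfl
      · simp
    rw [hgco]
    have heq : ∑ j : Fin δ, v j * (if (j : ℕ) ≤ m + i then ((2 * m).choose (m + i - j) : K) else 0)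
        = ∑ j : Fin δ, (Matrix.of fun i j : Fin δ =>
            ((zchoose (2 * m) ((m : ℤ) + i - j) : ℤ) : K)) i j * v j :=
      Finset.sum_congr rfl fun j _ => by rw [Matrix.of_apply, hentry, mul_comm]
    rw [heq, h1]
  have hgdeg : g.natDegree ≤ 2 * m + δ - 1 := by
    rw [Polynomial.natDegree_le_iff_coeff_eq_zero]
    intro n hn
    rw [hgco]
    refine Finset.sum_eq_zero fun j _ => ?_
    rw [if_pos (by omega), Nat.choose_eq_zero_of_lt (by omega), Nat.cast_zero, mul_zero]
  have hsupp : g.support ⊆ Finset.range m ∪ (Finset.range m).image (fun k => m + δ + k) := by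
    intro n hn
    have hco := Polynomial.mem_support_iff.mp hn
    rcases lt_or_ge n m with h | h
    · exact Finset.mem_union_left _ (Finset.mem_range.mpr h)
    rcases lt_or_ge n (m + δ) with h2 | h2
    · exfalso
      have : n = m + (⟨n - m, by omega⟩ : Fin δ) := by simp; omega
      rw [this] at hco
      exact hco (hker _)
    · have h3 : n ≤ 2 * m + δ - 1 := by
        by_contra h4
        exact hco (Polynomial.coeff_eq_zero_of_natDegree_lt (by omega))
      exact Finset.mem_union_right _ (Finset.mem_image.mpr ⟨n - (m + δ),
        Finset.mem_range.mpr (by omega), by omega⟩)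
  have hcard : g.support.card ≤ 2 * m := by
    calc g.support.card ≤ (Finset.range m ∪ (Finset.range m).image (fun k => m + δ + k)).card :=
          Finset.card_le_card hsupp
      _ ≤ (Finset.range m).card + ((Finset.range m).image (fun k => m + δ + k)).card :=
          Finset.card_union_le _ _
      _ ≤ m + m := add_le_add (by simp) (le_trans Finset.card_image_le (by simp))
      _ = 2 * m := by omega
  have hmult : 2 * m ≤ g.rootMultiplicity (-1 : K) := by
    rw [Polynomial.le_rootMultiplicity_iff hgne]
    have : (X - C (-1 : K)) = X + 1 := by simp [sub_neg_eq_add]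
    rw [this]
    exact Dvd.intro f rfl
  have hsparse := zc_sparse_aux (c := (-1 : K)) (by simp) (2 * m + δ - 1) g hgdeg hgne
    (fun n hn hn' => hchar n hn (by omega))
  omega

lemma if_choose_flip (m a b : ℕ) :
    (if a ≤ b then m.choose (b - a) else 0) = (if b ≤ m + a then m.choose (m + a - b) else 0) := by
  rcases le_or_gt a b with h1 | h1 <;> rcases le_or_gt b (m + a) with h2 | h2
  · rw [if_pos h1, if_pos h2, ← Nat.choose_symm (show b - a ≤ m by omega)]
    congr 1
    omega
  · rw [if_pos h1, if_neg (by omega)]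
    exact Nat.choose_eq_zero_of_lt (by omega)
  · rw [if_neg (by omega), if_pos h2]
    exact (Nat.choose_eq_zero_of_lt (by omega)).symm
  · rw [if_neg (by omega), if_neg (by omega)]

lemma if_choose_flip_real (m a b : ℕ) :
    (if a ≤ b then (m.choose (b - a) : ℝ) else 0) =
      (if b ≤ m + a then (m.choose (m + a - b) : ℝ) else 0) := by
  have h := congrArg (Nat.cast : ℕ → ℝ) (if_choose_flip m a b)
  simpa [apply_ite (Nat.cast : ℕ → ℝ)] using h

open Polynomial in
lemma det_zc_pos (m δ : ℕ) (hδ : 0 < δ) :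
    0 < (Matrix.of fun i j : Fin δ => zchoose (2 * m) ((m : ℤ) + i - j)).det := by
  classical
  set M : Matrix (Fin δ) (Fin δ) ℤ :=
    Matrix.of fun i j : Fin δ => zchoose (2 * m) ((m : ℤ) + i - j) with hM
  set MR : Matrix (Fin δ) (Fin δ) ℝ :=
    Matrix.of fun i j : Fin δ => ((zchoose (2 * m) ((m : ℤ) + i - j) : ℤ) : ℝ) with hMR
  have hQ : ∀ M₀ a k : ℕ, ((X + 1 : ℝ[X]) ^ M₀ * X ^ a).coeff k =
      if a ≤ k then (M₀.choose (k - a) : ℝ) else 0 := by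
    intro M₀ a k
    rw [Polynomial.coeff_mul_X_pow']
    split_ifs with h
    · rw [Polynomial.coeff_X_add_one_pow]
    · rfl
  set B : Matrix (Fin δ) (Fin (m + δ)) ℝ :=
    Matrix.of (fun (i : Fin δ) (k : Fin (m + δ)) =>
      ((X + 1 : ℝ[X]) ^ m * X ^ (i : ℕ)).coeff (k : ℕ)) with hBdef
  have hGram : MR = B * B.conjTranspose := by
    ext i j
    have hi : (i : ℕ) < δ := i.isLt
    have hj : (j : ℕ) < δ := j.isLt
    rw [Matrix.mul_apply]
    simp only [Matrix.conjTranspose_apply, star_trivial, hBdef, Matrix.of_apply]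
    have hBR : ∀ k : Fin (m + δ),
        ((X + 1 : ℝ[X]) ^ m * X ^ (j : ℕ)).coeff (k : ℕ) =
          ((X + 1 : ℝ[X]) ^ m * X ^ (δ - 1 - (j : ℕ))).coeff (m + δ - 1 - (k : ℕ)) := by
      intro k
      have hk : (k : ℕ) < m + δ := k.isLt
      rw [hQ, hQ, if_choose_flip_real m (j : ℕ) (k : ℕ)]
      by_cases h : (k : ℕ) ≤ m + (j : ℕ)
      · rw [if_pos h, if_pos (by omega)]
        have harg : m + δ - 1 - (k : ℕ) - (δ - 1 - (j : ℕ)) = m + (j : ℕ) - (k : ℕ) := by omega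
        rw [harg]
      · rw [if_neg h, if_neg (by omega)]
    calc (MR i j : ℝ)
        = ((X + 1 : ℝ[X]) ^ (2 * m) * X ^ ((i : ℕ) + (δ - 1 - (j : ℕ)))).coeff (m + δ - 1) := by
          rw [hQ]
          rw [hMR, Matrix.of_apply]
          have harg : (m : ℤ) + i - j = ((m + (i : ℕ) : ℕ) : ℤ) - ((j : ℕ) : ℤ) := by
            push_cast; ring
          rw [harg, zchoose_sub_cast]
          set i' := (i : ℕ)
          set j' := (j : ℕ)
          by_cases hA : i' ≤ m + j' <;> by_cases hB : j' ≤ m + i'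
          · rw [if_pos (by omega : i' + (δ - 1 - j') ≤ m + δ - 1), if_pos hB]
            have h1 : m + δ - 1 - (i' + (δ - 1 - j')) = m + j' - i' := by omega
            have h2 : (2 * m).choose (m + j' - i') = (2 * m).choose (m + i' - j') := by
              rw [← Nat.choose_symm (show m + j' - i' ≤ 2 * m by omega)]
              congr 1
              omega
            rw [h1, h2]
            push_cast
            rfl
          · rw [if_pos (by omega : i' + (δ - 1 - j') ≤ m + δ - 1), if_neg hB]
            have h1 : m + δ - 1 - (i' + (δ - 1 - j')) = m + j' - i' := by omega
            rw [h1, Nat.choose_eq_zero_of_lt (by omega), Nat.cast_zero, Int.cast_zero]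
          · rw [if_neg (by omega : ¬ i' + (δ - 1 - j') ≤ m + δ - 1), if_pos hB,
              Nat.choose_eq_zero_of_lt (by omega)]
            push_cast
            rfl
          · omega
      _ = (((X + 1 : ℝ[X]) ^ m * X ^ (i : ℕ)) *
            ((X + 1 : ℝ[X]) ^ m * X ^ (δ - 1 - (j : ℕ)))).coeff (m + δ - 1) := by
          congr 1
          rw [two_mul, pow_add, pow_add]
          ring
      _ = ∑ k ∈ Finset.range (m + δ), ((X + 1 : ℝ[X]) ^ m * X ^ (i : ℕ)).coeff k *
            ((X + 1 : ℝ[X]) ^ m * X ^ (δ - 1 - (j : ℕ))).coeff (m + δ - 1 - k) := by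
          rw [Polynomial.coeff_mul, Finset.Nat.sum_antidiagonal_eq_sum_range_succ_mk]
          rw [show (m + δ - 1).succ = m + δ by omega]
      _ = ∑ k : Fin (m + δ), ((X + 1 : ℝ[X]) ^ m * X ^ (i : ℕ)).coeff (k : ℕ) *
            ((X + 1 : ℝ[X]) ^ m * X ^ (j : ℕ)).coeff (k : ℕ) := by
          have hfin := Fin.sum_univ_eq_sum_range (fun k => ((X + 1 : ℝ[X]) ^ m * X ^ (i : ℕ)).coeff k *
            ((X + 1 : ℝ[X]) ^ m * X ^ (δ - 1 - (j : ℕ))).coeff (m + δ - 1 - k)) (m + δ)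
          rw [← hfin]
          exact Finset.sum_congr rfl fun k _ => by rw [hBR k]
    rfl
  have hps := Matrix.posSemidef_self_mul_conjTranspose B
  have hdet_nonneg : 0 ≤ MR.det := by
    rw [hGram, hps.1.det_eq_prod_eigenvalues]
    exact Finset.prod_nonneg fun k _ => by exact_mod_cast hps.eigenvalues_nonneg k
  have hdet_ne : MR.det ≠ 0 :=
    det_zc_ne_zero m δ hδ (fun n hn _ => Nat.cast_ne_zero.mpr (by omega))
  have hmap := RingHom.map_det (Int.castRingHom ℝ) M
  have hMRmap : (Int.castRingHom ℝ).mapMatrix M = MR := by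
    ext i j
    simp [hM, hMR, RingHom.mapMatrix_apply, Matrix.map_apply]
  rw [hMRmap] at hmap
  have : (0 : ℝ) < ((M.det : ℤ) : ℝ) := by
    rw [show ((M.det : ℤ) : ℝ) = MR.det from hmap]
    exact lt_of_le_of_ne hdet_nonneg (Ne.symm hdet_ne)
  exact_mod_cast this

/-- The `γ`-maximal case: for `1 ≤ α ≤ β`, `γ = 2(α+β)`, `t ≥ α+β` and
`δ = t - (α+β)`, the determinant of the `δ × δ` matrix with entries
`M_{i,j} = binom(γ, α+β+i-j)` is positive, and it is not divisible by any
prime `p ≥ t + α + β`. -/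
theorem det_gamma_maximal_pos_and_prime (α β t γ δ : ℕ)
    (hα : 1 ≤ α) (hαβ : α ≤ β) (hγ : γ = 2 * (α + β))
    (ht : α + β ≤ t) (hδ : δ = t - (α + β)) :
    0 < (Matrix.of fun i j : Fin δ =>
          zchoose γ ((α : ℤ) + (β : ℤ) + (i : ℤ) - (j : ℤ))).det ∧
    ∀ p : ℕ, p.Prime → t + α + β ≤ p →
      ¬ (p : ℤ) ∣ (Matrix.of fun i j : Fin δ =>
          zchoose γ ((α : ℤ) + (β : ℤ) + (i : ℤ) - (j : ℤ))).det := by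
  have hmat : (Matrix.of fun i j : Fin δ => zchoose γ ((α : ℤ) + (β : ℤ) + (i : ℤ) - (j : ℤ)))
      = Matrix.of fun i j : Fin δ => zchoose (2 * (α + β)) (((α + β : ℕ) : ℤ) + i - j) := by
    subst hγ
    ext i j
    have harg : (α : ℤ) + (β : ℤ) + (i : ℤ) - (j : ℤ) = ((α + β : ℕ) : ℤ) + i - j := by
      push_cast
      ring
    simp only [Matrix.of_apply, harg]
  rw [hmat]
  rcases Nat.eq_zero_or_pos δ with hδ0 | hδpos
  · subst hδ0
    rw [Matrix.det_isEmpty]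
    refine ⟨one_pos, fun p hp _ hdvd => ?_⟩
    have h1 : (p : ℤ) ≤ 1 := Int.le_of_dvd one_pos hdvd
    have h2 : 2 ≤ p := hp.two_le
    have h3 : p ≤ 1 := by exact_mod_cast h1
    omega
  · refine ⟨det_zc_pos (α + β) δ hδpos, fun p hp hple hdvd => ?_⟩
    haveI : Fact p.Prime := ⟨hp⟩
    have hchar : ∀ n : ℕ, 0 < n → n < 2 * (α + β) + δ → ((n : ZMod p) ≠ 0) := by
      intro n hn hlt h
      have hd := (ZMod.natCast_eq_zero_iff n p).mp h
      have := Nat.le_of_dvd hn hd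
      omega
    have hne := det_zc_ne_zero (K := ZMod p) (α + β) δ hδpos hchar
    apply hne
    have hmap := RingHom.map_det (Int.castRingHom (ZMod p))
      (Matrix.of fun i j : Fin δ => zchoose (2 * (α + β)) (((α + β : ℕ) : ℤ) + i - j))
    have heq : (Int.castRingHom (ZMod p)).mapMatrix
        (Matrix.of fun i j : Fin δ => zchoose (2 * (α + β)) (((α + β : ℕ) : ℤ) + i - j))
        = Matrix.of fun i j : Fin δ =>
            ((zchoose (2 * (α + β)) (((α + β : ℕ) : ℤ) + i - j) : ℤ) : ZMod p) := by
      ext i j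
      simp [RingHom.mapMatrix_apply, Matrix.map_apply]
    rw [← heq, ← hmap]
    simpa using (ZMod.intCast_zmod_eq_zero_iff_dvd _ p).mpr hdvd
end

section
/- Let α, β, γ be integers with 1 ≤ α ≤ β ≤ γ ≤ 2(α+β) and with α+β+γ divisible by 3. Set t = (α+β+γ)/3 and λ = (2(α+β)−γ)/3. Let M be the λ×λ integer matrix with entries M_{i,j} = binom(γ+t, β+t+1−i−j) for 1 ≤ i, j ≤ λ. Then H(α+t) · H(β+t) · H(γ+t) · det M = (−1)^{λ(λ−1)/2} · H(2t−γ) · H(2t−β) · H(2t−α) · H(α+β+γ); equivalently, det M = (−1)^{binom(λ,2)} H(2t−γ)H(2t−β)H(2t−α)H(α+β+γ) / (H(α+t)H(β+t)H(γ+t)). -/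
open Polynomial Finset


lemma hyperfac_add_s6 (x m : ℕ) :
    hyperfac (x + m) = hyperfac x * ∏ i ∈ Finset.range m, Nat.factorial (x + i) := by
  induction m with
  | zero => simp [hyperfac]
  | succ m ih =>
      rw [← Nat.add_assoc, hyperfac, Finset.prod_range_succ, ← hyperfac, ih,
        Finset.prod_range_succ, mul_assoc]

lemma hyperfac_succ_eq (m : ℕ) : hyperfac (m + 1) = Nat.superFactorial m := by
  induction m with
  | zero => simp [hyperfac]
  | succ m ih =>
      rw [Nat.superFactorial_succ, ← ih, hyperfac, Finset.prod_range_succ, ← hyperfac, mul_comm]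

lemma vand_id (n : ℕ) :
    (Matrix.vandermonde (fun i : Fin n => (i : ℚ))).det = (hyperfac n : ℚ) := by
  cases n with
  | zero => simp [hyperfac, Matrix.det_isEmpty]
  | succ m => rw [Matrix.det_vandermonde_id_eq_superFactorial, hyperfac_succ_eq]

lemma newton : ∀ (d : ℕ) (z : ℕ → ℚ) (h : ℚ[X]), h.natDegree ≤ d →
    ∃ coef : ℕ → ℚ, coef 0 = h.eval (z 0) ∧
      h = ∑ m ∈ Finset.range (d + 1), C (coef m) * ∏ u ∈ Finset.range m, (X - C (z u)) := by
  intro d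
  induction d with
  | zero =>
      intro z h hd
      refine ⟨fun _ => h.eval (z 0), rfl, ?_⟩
      rw [Polynomial.eq_C_of_natDegree_le_zero hd]
      simp
  | succ d ih =>
      intro z h hd
      obtain ⟨q, hq⟩ := Polynomial.X_sub_C_dvd_sub_C_eval (a := z 0) (p := h)
      have hh : h = C (h.eval (z 0)) + (X - C (z 0)) * q := by linear_combination hq
      have hqd : q.natDegree ≤ d := by
        by_cases h0 : q = 0
        · simp [h0]
        · have h1 : ((X - C (z 0)) * q).natDegree = 1 + q.natDegree := by
            rw [Polynomial.natDegree_mul (Polynomial.X_sub_C_ne_zero _) h0,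
              Polynomial.natDegree_X_sub_C]
          have h2 : ((X - C (z 0)) * q).natDegree ≤ d + 1 := by
            rw [← hq]
            exact le_trans (Polynomial.natDegree_sub_le _ _) (by simp [hd])
          omega
      obtain ⟨cf, _, hcf⟩ := ih (fun k => z (k + 1)) q hqd
      refine ⟨fun m => if m = 0 then h.eval (z 0) else cf (m - 1), rfl, ?_⟩
      rw [Finset.sum_range_succ']
      simp only [if_true, eq_self_iff_true, ite_true, Nat.add_sub_cancel, Nat.succ_ne_zero, ite_false]
      have key : ∑ i ∈ Finset.range (d + 1),
          C (cf i) * ∏ u ∈ Finset.range (i + 1), (X - C (z u))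
          = (X - C (z 0)) * q := by
        rw [hcf, Finset.mul_sum]
        refine Finset.sum_congr rfl fun i _ => ?_
        rw [Finset.prod_range_succ']
        ring
      rw [key, Finset.prod_range_zero, mul_one]
      linear_combination hh

lemma det_poly_core {n : ℕ} (a : ℕ → ℚ) (x : Fin n → ℚ) (e : Fin n → ℚ[X])
    (hdeg : ∀ j : Fin n, (e j).natDegree = n - 1 - (j : ℕ)) :
    (Matrix.of fun i j : Fin n =>
        ((∏ u ∈ Finset.range (j : ℕ), (X - C (a u))) * e j).eval (x i)).det
      = (∏ j : Fin n, (e j).eval (a (j : ℕ))) * (Matrix.vandermonde x).det := by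
  classical
  have hnew : ∀ j : Fin n, ∃ coef : ℕ → ℚ, coef 0 = (e j).eval (a (j : ℕ)) ∧
      e j = ∑ m ∈ Finset.range (n - (j : ℕ)), C (coef m) *
        ∏ u ∈ Finset.range m, (X - C (a ((j : ℕ) + u))) := by
    intro j
    obtain ⟨coef, h0, hx⟩ := newton (n - 1 - (j : ℕ)) (fun k => a ((j : ℕ) + k)) (e j)
      (le_of_eq (hdeg j))
    refine ⟨coef, by simpa using h0, ?_⟩
    have hr : n - 1 - (j : ℕ) + 1 = n - (j : ℕ) := by have := j.2; omega
    rw [← hr]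
    exact hx
  choose cf hcf0 hcf using hnew
  set Tm : Matrix (Fin n) (Fin n) ℚ :=
    Matrix.of (fun i m : Fin n => (∏ u ∈ Finset.range (m : ℕ), (X - C (a u))).eval (x i)) with hTm
  set Cm : Matrix (Fin n) (Fin n) ℚ :=
    Matrix.of (fun m j : Fin n =>
      if (j : ℕ) ≤ (m : ℕ) then cf j ((m : ℕ) - (j : ℕ)) else 0) with hCm
  have hGTC : (Matrix.of fun i j : Fin n =>
      ((∏ u ∈ Finset.range (j : ℕ), (X - C (a u))) * e j).eval (x i)) = Tm * Cm := by
    ext i j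
    rw [Matrix.mul_apply]
    have hsum : ∑ m : Fin n, Tm i m * Cm m j
        = ∑ m ∈ Finset.range n, (∏ u ∈ Finset.range m, (X - C (a u))).eval (x i) *
            (if (j : ℕ) ≤ m then cf j (m - (j : ℕ)) else 0) := by
      exact Fin.sum_univ_eq_sum_range
        (fun m => (∏ u ∈ Finset.range m, (X - C (a u))).eval (x i) *
            (if (j : ℕ) ≤ m then cf j (m - (j : ℕ)) else 0)) n
    rw [hsum]
    have hsplit : Finset.range n = Finset.range ((j : ℕ) + (n - (j : ℕ))) := by
      congr 1
      have := j.2; omega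
    rw [hsplit, Finset.sum_range_add]
    have hz : ∀ m ∈ Finset.range (j : ℕ),
        (∏ u ∈ Finset.range m, (X - C (a u))).eval (x i) *
            (if (j : ℕ) ≤ m then cf j (m - (j : ℕ)) else 0) = 0 := by
      intro m hm
      rw [Finset.mem_range] at hm
      rw [if_neg (by omega), mul_zero]
    rw [Finset.sum_eq_zero hz, zero_add]
    have hterm : ∀ m ∈ Finset.range (n - (j : ℕ)),
        (∏ u ∈ Finset.range ((j : ℕ) + m), (X - C (a u))).eval (x i) *
            (if (j : ℕ) ≤ (j : ℕ) + m then cf j ((j : ℕ) + m - (j : ℕ)) else 0)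
        = (∏ u ∈ Finset.range (j : ℕ), (X - C (a u))).eval (x i) *
            (cf j m * (∏ u ∈ Finset.range m, (X - C (a ((j : ℕ) + u)))).eval (x i)) := by
      intro m hm
      rw [if_pos (by omega), Finset.prod_range_add, Polynomial.eval_mul]
      have : (j : ℕ) + m - (j : ℕ) = m := by omega
      rw [this]
      ring
    rw [Finset.sum_congr rfl hterm, ← Finset.mul_sum]
    simp only [Matrix.of_apply, Polynomial.eval_mul]
    congr 1
    conv_lhs => rw [hcf j]
    rw [Polynomial.eval_finset_sum]
    refine Finset.sum_congr rfl fun m _ => ?_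
    rw [Polynomial.eval_mul, Polynomial.eval_C]
  rw [hGTC, Matrix.det_mul]
  have hCdet : Cm.det = ∏ j : Fin n, (e j).eval (a (j : ℕ)) := by
    rw [Matrix.det_of_lowerTriangular Cm ?ht]
    · refine Finset.prod_congr rfl fun j _ => ?_
      have : Cm j j = cf j 0 := by
        rw [hCm, Matrix.of_apply, if_pos le_rfl, Nat.sub_self]
      rw [this, hcf0]
    · intro i j hij
      have : (i : ℕ) < (j : ℕ) := hij
      rw [hCm, Matrix.of_apply, if_neg (by omega)]
  have hTdet : Tm.det = (Matrix.vandermonde x).det := by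
    rw [hTm]
    refine (Matrix.det_eval_matrixOfPolynomials_eq_det_vandermonde x
      (fun m : Fin n => ∏ u ∈ Finset.range (m : ℕ), (X - C (a u))) ?_ ?_).symm
    · intro m
      rw [Polynomial.natDegree_prod_of_monic _ _ (fun u _ => Polynomial.monic_X_sub_C _)]
      simp [Polynomial.natDegree_X_sub_C]
    · intro m
      exact Polynomial.monic_prod_of_monic _ _ (fun u _ => Polynomial.monic_X_sub_C _)
  rw [hCdet, hTdet, mul_comm]

lemma det_binom (N c n : ℕ) (hcn : n ≤ c + 1) (hcN : c + n ≤ N + 1) :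
    (∏ i ∈ Finset.range n, ((c + i).factorial * (N - c + i).factorial : ℚ)) *
      (Matrix.of fun i j : Fin n =>
        (N.choose (c + n - 1 - (i : ℕ) - (j : ℕ)) : ℚ)).det
    = (-1 : ℚ) ^ (n.choose 2) *
        ∏ i ∈ Finset.range n, ((N + i).factorial * i.factorial : ℚ) := by
  classical
  set a : ℕ → ℚ := fun u => ((c + n - 1 - u : ℕ) : ℚ) with ha
  set e : Fin n → ℚ[X] :=
    fun j => ∏ w ∈ Finset.range (n - 1 - (j : ℕ)), (X + C ((N - c - w : ℕ) : ℚ)) with he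
  have hdeg : ∀ j : Fin n, (e j).natDegree = n - 1 - (j : ℕ) := by
    intro j
    rw [he, Polynomial.natDegree_prod_of_monic _ _ (fun u _ => Polynomial.monic_X_add_C _)]
    rw [Finset.sum_congr rfl (fun u _ => Polynomial.natDegree_X_add_C _)]
    simp
  -- entrywise identity
  have hentry : ∀ i j : Fin n,
      (((c + n - 1 - (i : ℕ)).factorial * (N - c + (i : ℕ)).factorial : ℕ) : ℚ) *
        (N.choose (c + n - 1 - (i : ℕ) - (j : ℕ)) : ℚ)
      = ((N.factorial : ℚ) * (-1 : ℚ) ^ (j : ℕ)) *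
        ((∏ u ∈ Finset.range (j : ℕ), (X - C (a u))) * e j).eval ((i : ℕ) : ℚ) := by
    intro i j
    have hi := i.2
    have hj := j.2
    rw [Polynomial.eval_mul]
    have h1 : (∏ u ∈ Finset.range (j : ℕ), (X - C (a u))).eval ((i : ℕ) : ℚ)
        = (-1 : ℚ) ^ (j : ℕ) * (((c + n - 1 - (i : ℕ)).descFactorial (j : ℕ) : ℕ) : ℚ) := by
      rw [Polynomial.eval_prod, Nat.descFactorial_eq_prod_range, Nat.cast_prod, ha,
        Finset.pow_eq_prod_const, ← Finset.prod_mul_distrib]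
      refine Finset.prod_congr rfl fun u hu => ?_
      rw [Finset.mem_range] at hu
      simp only [Polynomial.eval_sub, Polynomial.eval_X, Polynomial.eval_C]
      push_cast [Nat.cast_sub (show u ≤ c + n - 1 - (i:ℕ) by omega),
        Nat.cast_sub (show u ≤ c + n - 1 by omega),
        Nat.cast_sub (show (i:ℕ) ≤ c + n - 1 by omega),
        Nat.cast_sub (show 1 ≤ c + n by omega)]
      ring
    have h2 : (e j).eval ((i : ℕ) : ℚ)
        = (((N - c + (i : ℕ)).descFactorial (n - 1 - (j : ℕ)) : ℕ) : ℚ) := by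
      rw [he, Polynomial.eval_prod, Nat.descFactorial_eq_prod_range, Nat.cast_prod]
      refine Finset.prod_congr rfl fun w hw => ?_
      rw [Finset.mem_range] at hw
      simp only [Polynomial.eval_add, Polynomial.eval_X, Polynomial.eval_C]
      push_cast [show w ≤ N - c + (i:ℕ) by omega, show w ≤ N - c by omega]
      ring
    rw [h1, h2]
    have hnat : (c + n - 1 - (i : ℕ)).factorial * (N - c + (i : ℕ)).factorial *
        N.choose (c + n - 1 - (i : ℕ) - (j : ℕ))
        = N.factorial * ((c + n - 1 - (i : ℕ)).descFactorial (j : ℕ) *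
            (N - c + (i : ℕ)).descFactorial (n - 1 - (j : ℕ))) := by
      set s₁ := c + n - 1 - (i : ℕ) with hs₁
      set s₂ := N - c + (i : ℕ) with hs₂
      set k := s₁ - (j : ℕ) with hk
      have hf1 : (s₁ - (j:ℕ)).factorial * s₁.descFactorial (j:ℕ) = s₁.factorial :=
        Nat.factorial_mul_descFactorial (by omega)
      have hf2 : (s₂ - (n - 1 - (j:ℕ))).factorial * s₂.descFactorial (n - 1 - (j:ℕ))
          = s₂.factorial := Nat.factorial_mul_descFactorial (by omega)
      have hs2k : s₂ - (n - 1 - (j:ℕ)) = N - k := by omega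
      have hck : N.choose k * k.factorial * (N - k).factorial = N.factorial :=
        Nat.choose_mul_factorial_mul_factorial (by omega)
      calc s₁.factorial * s₂.factorial * N.choose k
          = (N.choose k * k.factorial * (N-k).factorial) *
              (s₁.descFactorial (j:ℕ) * s₂.descFactorial (n - 1 - (j:ℕ))) := by
            rw [← hf1, ← hf2, hs2k]; ring
        _ = _ := by rw [hck]
    calc (((c + n - 1 - (i : ℕ)).factorial * (N - c + (i : ℕ)).factorial : ℕ) : ℚ) *
          (N.choose (c + n - 1 - (i : ℕ) - (j : ℕ)) : ℚ)
        = (((c + n - 1 - (i : ℕ)).factorial * (N - c + (i : ℕ)).factorial *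
            N.choose (c + n - 1 - (i : ℕ) - (j : ℕ)) : ℕ) : ℚ) := by push_cast; ring
      _ = ((N.factorial * ((c + n - 1 - (i : ℕ)).descFactorial (j : ℕ) *
            (N - c + (i : ℕ)).descFactorial (n - 1 - (j : ℕ))) : ℕ) : ℚ) := by rw [hnat]
      _ = _ := by
            have hsq : (-1 : ℚ) ^ (j:ℕ) * (-1 : ℚ) ^ (j:ℕ) = 1 := by
              rw [← pow_add]; exact Even.neg_one_pow ⟨_, rfl⟩
            push_cast
            linear_combination (-((N.factorial : ℚ) *
              ((c + n - 1 - (i:ℕ)).descFactorial (j:ℕ) : ℚ) *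
              ((N - c + (i:ℕ)).descFactorial (n - 1 - (j:ℕ)) : ℚ))) * hsq
  -- matrix equality
  have hMeq : (Matrix.of fun i j : Fin n =>
        (((c + n - 1 - (i : ℕ)).factorial * (N - c + (i : ℕ)).factorial : ℕ) : ℚ) *
          (N.choose (c + n - 1 - (i : ℕ) - (j : ℕ)) : ℚ))
      = Matrix.of fun i j : Fin n =>
          ((N.factorial : ℚ) * (-1 : ℚ) ^ (j : ℕ)) *
          (Matrix.of fun i j : Fin n =>
            ((∏ u ∈ Finset.range (j : ℕ), (X - C (a u))) * e j).eval ((i : ℕ) : ℚ)) i j := by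
    ext i j
    exact hentry i j
  have hdetL : (Matrix.of fun i j : Fin n =>
        (((c + n - 1 - (i : ℕ)).factorial * (N - c + (i : ℕ)).factorial : ℕ) : ℚ) *
          (N.choose (c + n - 1 - (i : ℕ) - (j : ℕ)) : ℚ)).det
      = (∏ i : Fin n, (((c + n - 1 - (i : ℕ)).factorial * (N - c + (i : ℕ)).factorial : ℕ) : ℚ)) *
        (Matrix.of fun i j : Fin n =>
          (N.choose (c + n - 1 - (i : ℕ) - (j : ℕ)) : ℚ)).det :=
    Matrix.det_mul_column _ _
  have hdetR : (Matrix.of fun i j : Fin n =>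
          ((N.factorial : ℚ) * (-1 : ℚ) ^ (j : ℕ)) *
          (Matrix.of fun i j : Fin n =>
            ((∏ u ∈ Finset.range (j : ℕ), (X - C (a u))) * e j).eval ((i : ℕ) : ℚ)) i j).det
      = (∏ j : Fin n, ((N.factorial : ℚ) * (-1 : ℚ) ^ (j : ℕ))) *
        (Matrix.of fun i j : Fin n =>
            ((∏ u ∈ Finset.range (j : ℕ), (X - C (a u))) * e j).eval ((i : ℕ) : ℚ)).det :=
    Matrix.det_mul_row _ _
  have hcore := det_poly_core a (fun i : Fin n => ((i : ℕ) : ℚ)) e hdeg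
  have hL := congrArg Matrix.det hMeq
  rw [hdetL, hdetR, hcore, vand_id] at hL
  -- row factor product
  have hP : (∏ i : Fin n, (((c + n - 1 - (i : ℕ)).factorial * (N - c + (i : ℕ)).factorial : ℕ) : ℚ))
      = ∏ i ∈ Finset.range n, ((c + i).factorial * (N - c + i).factorial : ℚ) := by
    rw [Fin.prod_univ_eq_prod_range
      (fun i => (((c + n - 1 - i).factorial * (N - c + i).factorial : ℕ) : ℚ)) n]
    push_cast
    rw [Finset.prod_mul_distrib, Finset.prod_mul_distrib]
    congr 1
    rw [← Finset.prod_range_reflect (fun i => ((c + i).factorial : ℚ)) n]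
    refine Finset.prod_congr rfl fun i hi => ?_
    rw [Finset.mem_range] at hi
    congr 2
    omega
  -- column factor product
  have hQ : (∏ j : Fin n, ((N.factorial : ℚ) * (-1 : ℚ) ^ (j : ℕ)))
      = ((N.factorial : ℚ)) ^ n * (-1 : ℚ) ^ (n.choose 2) := by
    rw [Finset.prod_mul_distrib, Finset.prod_const, Finset.prod_pow_eq_pow_sum]
    congr 1
    · simp
    · congr 1
      rw [Fin.sum_univ_eq_sum_range (fun i => i) n, Finset.sum_range_id, Nat.choose_two_right]
  -- diagonal product
  have heaj : ∀ j : Fin n, (e j).eval (a (j : ℕ))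
      = (((N + n - 1 - (j : ℕ)).descFactorial (n - 1 - (j : ℕ)) : ℕ) : ℚ) := by
    intro j
    have hj := j.2
    rw [he, Polynomial.eval_prod, Nat.descFactorial_eq_prod_range, Nat.cast_prod]
    refine Finset.prod_congr rfl fun w hw => ?_
    rw [Finset.mem_range] at hw
    simp only [Polynomial.eval_add, Polynomial.eval_X, Polynomial.eval_C, ha]
    push_cast [Nat.cast_sub (show w ≤ N + n - 1 - (j:ℕ) by omega),
      Nat.cast_sub (show (j:ℕ) ≤ N + n - 1 by omega),
      Nat.cast_sub (show 1 ≤ N + n by omega),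
      Nat.cast_sub (show w ≤ N - c by omega),
      Nat.cast_sub (show c ≤ N by omega),
      Nat.cast_sub (show (j:ℕ) ≤ c + n - 1 by omega),
      Nat.cast_sub (show 1 ≤ c + n by omega)]
    ring
  have hD : (∏ j : Fin n, (e j).eval (a (j : ℕ)))
      = ∏ j ∈ Finset.range n, (((N + j).descFactorial j : ℕ) : ℚ) := by
    rw [Finset.prod_congr rfl (fun j _ => heaj j),
      Fin.prod_univ_eq_prod_range
        (fun j => (((N + n - 1 - j).descFactorial (n - 1 - j) : ℕ) : ℚ)) n,
      ← Finset.prod_range_reflect (fun j => (((N + j).descFactorial j : ℕ) : ℚ)) n]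
    refine Finset.prod_congr rfl fun j hj => ?_
    rw [Finset.mem_range] at hj
    congr 2 <;> omega
  rw [hP, hQ, hD] at hL
  rw [hL]
  -- final product algebra
  have hfin : ((N.factorial : ℚ)) ^ n * (∏ j ∈ Finset.range n, (((N + j).descFactorial j : ℕ) : ℚ))
      * (hyperfac n : ℚ) = ∏ i ∈ Finset.range n, ((N + i).factorial * i.factorial : ℚ) := by
    have h1 : ((N.factorial : ℚ)) ^ n * (∏ j ∈ Finset.range n, (((N + j).descFactorial j : ℕ) : ℚ))
        = ∏ j ∈ Finset.range n, (((N + j).factorial : ℕ) : ℚ) := by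
      rw [show ((N.factorial : ℚ)) ^ n = ∏ _j ∈ Finset.range n, (N.factorial : ℚ) by
        rw [Finset.prod_const, Finset.card_range], ← Finset.prod_mul_distrib]
      refine Finset.prod_congr rfl fun j _ => ?_
      rw [← Nat.cast_mul]
      congr 1
      have := Nat.factorial_mul_descFactorial (show j ≤ N + j by omega)
      rw [show N + j - j = N by omega] at this
      rw [mul_comm] at this ⊢
      exact this
    rw [h1, hyperfac, Nat.cast_prod, ← Finset.prod_mul_distrib]
  rw [← hfin]
  ring

/-- The `t`-minimal case: for `1 ≤ α ≤ β ≤ γ ≤ 2(α+β)` with `3 ∣ α+β+γ`,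
`t = (α+β+γ)/3` and `lam = (2(α+β)-γ)/3` (encoded by `3t = α+β+γ` and
`3·lam + γ = 2(α+β)`), the `lam × lam` matrix with entries
`M_{i,j} = binom(γ+t, β+t+1-i-j)` has determinant
`(-1)^{binom(lam,2)} H(2t-γ)H(2t-β)H(2t-α)H(α+β+γ) / (H(α+t)H(β+t)H(γ+t))`,
stated in multiplied-out form. -/
theorem det_t_minimal (α β γ t lam : ℕ)
    (hα : 1 ≤ α) (hαβ : α ≤ β) (hβγ : β ≤ γ) (hγ : γ ≤ 2 * (α + β))
    (ht : 3 * t = α + β + γ) (hlam : 3 * lam + γ = 2 * (α + β)) :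
    (hyperfac (α + t) * hyperfac (β + t) * hyperfac (γ + t) : ℤ) *
        (Matrix.of fun i j : Fin lam =>
          zchoose (γ + t) ((β : ℤ) + (t : ℤ) + 1 - ((i : ℤ) + 1) - ((j : ℤ) + 1))).det
      = (-1) ^ (lam.choose 2) *
          (hyperfac (2 * t - γ) * hyperfac (2 * t - β) * hyperfac (2 * t - α) *
            hyperfac (α + β + γ) : ℤ) := by
  obtain ⟨c, dα, dβ, hc, hdα, hdβ⟩ :
      ∃ c dα dβ, β + t = c + lam ∧ 2 * t = dα + α ∧ 2 * t = dβ + β :=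
    ⟨β + t - lam, 2 * t - α, 2 * t - β, by omega, by omega, by omega⟩
  have hcd : c = dα := by omega
  have hM : (Matrix.of fun i j : Fin lam =>
        zchoose (γ + t) ((β : ℤ) + (t : ℤ) + 1 - ((i : ℤ) + 1) - ((j : ℤ) + 1)))
      = Matrix.of fun i j : Fin lam =>
          (((γ + t).choose (c + lam - 1 - (i : ℕ) - (j : ℕ)) : ℤ)) := by
    ext i j
    have hi := i.2
    have hj := j.2
    rw [Matrix.of_apply, Matrix.of_apply, zchoose, if_pos (by omega)]
    have hk : ((β : ℤ) + (t : ℤ) + 1 - ((i : ℤ) + 1) - ((j : ℤ) + 1)).toNat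
        = c + lam - 1 - (i : ℕ) - (j : ℕ) := by omega
    rw [hk]
  rw [hM]
  rw [show 2 * t - γ = lam by omega, show 2 * t - β = dβ by omega,
    show 2 * t - α = dα by omega]
  -- pass to ℚ
  have hdet : (((Matrix.of fun i j : Fin lam =>
        (((γ + t).choose (c + lam - 1 - (i : ℕ) - (j : ℕ)) : ℤ))).det : ℤ) : ℚ)
      = (Matrix.of fun i j : Fin lam =>
          (((γ + t).choose (c + lam - 1 - (i : ℕ) - (j : ℕ)) : ℚ))).det := by
    calc (((Matrix.of fun i j : Fin lam =>
            (((γ + t).choose (c + lam - 1 - (i : ℕ) - (j : ℕ)) : ℤ))).det : ℤ) : ℚ)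
        = (Int.castRingHom ℚ) (Matrix.of fun i j : Fin lam =>
            (((γ + t).choose (c + lam - 1 - (i : ℕ) - (j : ℕ)) : ℤ))).det := rfl
      _ = ((Int.castRingHom ℚ).mapMatrix (Matrix.of fun i j : Fin lam =>
            (((γ + t).choose (c + lam - 1 - (i : ℕ) - (j : ℕ)) : ℤ)))).det :=
          RingHom.map_det _ _
      _ = _ := by
          refine congrArg Matrix.det ?_
          ext i j
          simp
  have hbin := det_binom (γ + t) c lam (by omega) (by omega)
  have hprod : hyperfac (α + t) * hyperfac (β + t) * hyperfac (γ + t) *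
      ∏ i ∈ Finset.range lam, ((γ + t + i).factorial * i.factorial)
    = hyperfac lam * hyperfac dβ * hyperfac dα * hyperfac (α + β + γ) *
      ∏ i ∈ Finset.range lam, ((c + i).factorial * ((γ + t) - c + i).factorial) := by
    have e1 : α + β + γ = (γ + t) + lam := by omega
    have e2 : α + t = dβ + lam := by omega
    have e4 : (γ + t) - c = dβ := by omega
    rw [e1, e2, hc, e4, hyperfac_add_s6 (γ + t) lam, hyperfac_add_s6 dβ lam, hyperfac_add_s6 c lam,
      Finset.prod_mul_distrib, Finset.prod_mul_distrib, hcd]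
    have e5 : hyperfac lam = ∏ i ∈ Finset.range lam, i.factorial := rfl
    rw [e5, ← hcd]
    ring
  have hP1 : (∏ i ∈ Finset.range lam,
      ((c + i).factorial * ((γ + t) - c + i).factorial : ℚ)) ≠ 0 := by
    positivity
  have hQ : ((hyperfac (α + t) * hyperfac (β + t) * hyperfac (γ + t) : ℤ) : ℚ) *
      (Matrix.of fun i j : Fin lam =>
          (((γ + t).choose (c + lam - 1 - (i : ℕ) - (j : ℕ)) : ℚ))).det
      = ((-1 : ℚ)) ^ (lam.choose 2) *
        ((hyperfac lam * hyperfac dβ * hyperfac dα * hyperfac (α + β + γ) : ℤ) : ℚ) := by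
    apply mul_left_cancel₀ hP1
    have hprodQ : ((hyperfac (α + t) : ℚ) * hyperfac (β + t) * hyperfac (γ + t)) *
        (∏ i ∈ Finset.range lam, ((γ + t + i).factorial * i.factorial : ℚ))
      = ((hyperfac lam : ℚ) * hyperfac dβ * hyperfac dα * hyperfac (α + β + γ)) *
        ∏ i ∈ Finset.range lam, ((c + i).factorial * ((γ + t) - c + i).factorial : ℚ) := by
      exact_mod_cast hprod
    push_cast
    calc (∏ i ∈ Finset.range lam, ((c + i).factorial * ((γ + t) - c + i).factorial : ℚ)) *
        (((hyperfac (α + t) : ℚ) * hyperfac (β + t) * hyperfac (γ + t)) *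
          (Matrix.of fun i j : Fin lam =>
            (((γ + t).choose (c + lam - 1 - (i : ℕ) - (j : ℕ)) : ℚ))).det)
        = ((hyperfac (α + t) : ℚ) * hyperfac (β + t) * hyperfac (γ + t)) *
          ((∏ i ∈ Finset.range lam, ((c + i).factorial * ((γ + t) - c + i).factorial : ℚ)) *
            (Matrix.of fun i j : Fin lam =>
              (((γ + t).choose (c + lam - 1 - (i : ℕ) - (j : ℕ)) : ℚ))).det) := by ring
      _ = ((hyperfac (α + t) : ℚ) * hyperfac (β + t) * hyperfac (γ + t)) *
            ((-1 : ℚ) ^ (lam.choose 2) *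
              ∏ i ∈ Finset.range lam, ((γ + t + i).factorial * i.factorial : ℚ)) := by
          rw [hbin]
      _ = (-1 : ℚ) ^ (lam.choose 2) *
            (((hyperfac (α + t) : ℚ) * hyperfac (β + t) * hyperfac (γ + t)) *
              (∏ i ∈ Finset.range lam, ((γ + t + i).factorial * i.factorial : ℚ))) := by ring
      _ = (-1 : ℚ) ^ (lam.choose 2) *
            (((hyperfac lam : ℚ) * hyperfac dβ * hyperfac dα * hyperfac (α + β + γ)) *
              ∏ i ∈ Finset.range lam,
                ((c + i).factorial * ((γ + t) - c + i).factorial : ℚ)) := by rw [hprodQ]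
      _ = _ := by ring
  rw [← hdet] at hQ
  exact_mod_cast hQ
end

section
/- Let α, β, γ be integers with 1 ≤ α ≤ β ≤ γ ≤ 2(α+β) and with α+β+γ divisible by 3. Set t = (α+β+γ)/3 and λ = (2(α+β)−γ)/3. Let M be the λ×λ integer matrix with entries M_{i,j} = binom(γ+t, β+t+1−i−j) for 1 ≤ i, j ≤ λ. Then det M ≠ 0, and for every prime number p with p ≥ α + β + γ, p does not divide det M. -/
open Polynomial Finset Matrix Nat

lemma fact_prod_up (a : ℕ) : ∀ d : ℕ,
    ((a + d)! : ℚ) = (a ! : ℚ) * ∏ r ∈ Finset.range d, ((a : ℚ) + 1 + r)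
  | 0 => by simp
  | (d+1) => by
      rw [Finset.prod_range_succ, ← mul_assoc, ← fact_prod_up a d]
      have h : a + (d+1) = (a + d) + 1 := by ring
      rw [h, Nat.factorial_succ]
      push_cast; ring

lemma fact_prod_down (u : ℕ) : ∀ i : ℕ, i ≤ u →
    (u ! : ℚ) = ((u - i)! : ℚ) * ∏ s ∈ Finset.range i, ((u : ℚ) - s)
  | 0, _ => by simp
  | (i+1), h => by
      rw [Finset.prod_range_succ, ← mul_assoc, mul_comm (((u - (i+1))! : ℚ)) _, mul_assoc]
      have h1 : (((u - (i+1))! : ℚ)) * ((u:ℚ) - i) = ((u - i)! : ℚ) := by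
        have h2 : u - i = (u - (i+1)) + 1 := by omega
        rw [h2, Nat.factorial_succ]
        have h3 : ((u - (i+1) + 1 : ℕ) : ℚ) = (u:ℚ) - i := by
          push_cast [Nat.cast_sub (show i+1 ≤ u from h)]; ring
        push_cast
        rw [← h3]; push_cast; ring
      rw [h1, mul_comm, ← fact_prod_down u i (by omega)]

noncomputable def pol (N n i : ℕ) : Polynomial ℚ :=
  (∏ s ∈ Finset.range i, (X - C (s:ℚ))) * (∏ s ∈ Finset.Ico (i+1) n, (C ((N:ℚ) + s) - X))

lemma pol_natDegree_lt (N n i : ℕ) (hi : i < n) : (pol N n i).natDegree < n := by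
  have h1 : (∏ s ∈ Finset.range i, (X - C (s:ℚ))).natDegree ≤ i := by
    apply le_trans (Polynomial.natDegree_prod_le _ _)
    apply le_trans (Finset.sum_le_card_nsmul _ _ 1 ?_)
    · simp
    · intro s _; exact Polynomial.natDegree_X_sub_C_le _
  have h2 : (∏ s ∈ Finset.Ico (i+1) n, (C ((N:ℚ) + s) - X)).natDegree ≤ n - (i+1) := by
    apply le_trans (Polynomial.natDegree_prod_le _ _)
    apply le_trans (Finset.sum_le_card_nsmul _ _ 1 ?_)
    · simp [Nat.card_Ico]
    · intro s _
      have : (C ((N:ℚ) + s) - X) = -(X - C ((N:ℚ) + s)) := by ring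
      rw [this, Polynomial.natDegree_neg]
      exact Polynomial.natDegree_X_sub_C_le _
  have := Polynomial.natDegree_mul_le (p := ∏ s ∈ Finset.range i, (X - C (s:ℚ)))
    (q := ∏ s ∈ Finset.Ico (i+1) n, (C ((N:ℚ) + s) - X))
  unfold pol
  omega

lemma pol_eval (N n i : ℕ) (x : ℚ) :
    (pol N n i).eval x = (∏ s ∈ Finset.range i, (x - s)) *
      (∏ s ∈ Finset.Ico (i+1) n, ((N:ℚ) + s - x)) := by
  simp [pol, eval_prod]

lemma entry_eq (N n i u : ℕ) (hi : i < n) (hu : u < N + n) :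
    ((zchoose N ((u:ℤ) - i)) : ℚ) * ((u)! : ℚ) * ((N + n - 1 - u)! : ℚ)
      = (N ! : ℚ) * (pol N n i).eval (u : ℚ) := by
  rw [pol_eval]
  by_cases hui : u < i
  · -- zchoose is zero, and first product has a zero factor
    have hz : zchoose N ((u:ℤ) - i) = 0 := by
      unfold zchoose
      rw [if_neg (by omega)]
    rw [hz, Finset.prod_eq_zero (Finset.mem_range.2 hui) (by simp : ((u:ℚ) - (u:ℕ)) = 0)]
    simp
  · push_neg at hui
    by_cases hN : u ≤ N + i
    · -- main case
      have hk : u - i ≤ N := by omega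
      have hz : (zchoose N ((u:ℤ) - i) : ℚ) = (N ! : ℚ) / (((u-i)! : ℚ) * ((N - (u-i))! : ℚ)) := by
        unfold zchoose
        rw [if_pos (by omega)]
        have : ((u:ℤ) - i).toNat = u - i := by omega
        rw [this]
        push_cast [Nat.cast_choose ℚ hk]
        ring
      have e1 : ∏ s ∈ Finset.range i, ((u:ℚ) - s) = (u ! : ℚ) / ((u - i)! : ℚ) := by
        rw [eq_div_iff (by positivity), fact_prod_down u i hui]; ring
      have e2 : ∏ s ∈ Finset.Ico (i+1) n, ((N:ℚ) + s - u)
          = ((N + n - 1 - u)! : ℚ) / ((N + i - u)! : ℚ) := by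
        rw [eq_div_iff (by positivity)]
        rw [Finset.prod_Ico_eq_prod_range]
        have e3 : ∀ r ∈ Finset.range (n - (i+1)), (N:ℚ) + ((i+1+r : ℕ) : ℚ) - u = ((N + i - u : ℕ) : ℚ) + 1 + r := by
          intro r _
          push_cast [Nat.cast_sub (show u ≤ N + i from hN)]
          ring
        rw [Finset.prod_congr rfl e3, mul_comm, ← fact_prod_up (N + i - u) (n - (i+1))]
        congr 2
        omega
      rw [hz, e1, e2]
      have hc : N - (u - i) = N + i - u := by omega
      rw [hc]
      field_simp
    · -- u > N + i : choose is zero, second product has a zero factor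
      push_neg at hN
      have hz : zchoose N ((u:ℤ) - i) = 0 := by
        unfold zchoose
        rw [if_pos (by omega)]
        have : ((u:ℤ) - i).toNat = u - i := by omega
        rw [this, Nat.choose_eq_zero_of_lt (by omega)]
        simp
      have hmem : u - N ∈ Finset.Ico (i+1) n := by
        rw [Finset.mem_Ico]; omega
      have hfac : ((N:ℚ) + (u - N : ℕ) - u) = 0 := by
        push_cast [Nat.cast_sub (show N ≤ u by omega)]
        ring
      rw [hz, Finset.prod_eq_zero hmem hfac]
      simp

lemma det_eval (n : ℕ) (p : Fin n → Polynomial ℚ) (hp : ∀ i, (p i).natDegree < n)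
    (x : Fin n → ℚ) :
    (Matrix.of fun i j => (p i).eval (x j)).det
      = (Matrix.of fun i k : Fin n => (p i).coeff k).det *
        ∏ i : Fin n, ∏ j ∈ Finset.Ioi i, (x j - x i) := by
  rw [← Matrix.det_vandermonde, ← Matrix.det_transpose (Matrix.vandermonde x), ← Matrix.det_mul]
  congr 1
  ext i j
  rw [Matrix.mul_apply]
  simp only [Matrix.of_apply, Matrix.transpose_apply, Matrix.vandermonde_apply]
  rw [Polynomial.eval_eq_sum_range' (hp i), ← Fin.sum_univ_eq_sum_range]

lemma det_eval_shift (n c : ℕ) (p : Fin n → Polynomial ℚ) (hp : ∀ i, (p i).natDegree < n) :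
    (Matrix.of fun i j : Fin n => (p i).eval ((c:ℚ) + (j:ℕ))).det
      = (Matrix.of fun i j : Fin n => (p i).eval ((j:ℕ) : ℚ)).det := by
  rw [det_eval n p hp (fun j => (c:ℚ) + (j:ℕ)), det_eval n p hp (fun j => ((j:ℕ) : ℚ))]
  congr 1
  apply Finset.prod_congr rfl
  intro i _
  apply Finset.prod_congr rfl
  intro j _
  ring

lemma det_tri (N n : ℕ) :
    (Matrix.of fun i j : Fin n => (pol N n (i:ℕ)).eval ((j:ℕ) : ℚ)).det
      = ∏ i : Fin n, (((i:ℕ)! : ℚ) * ∏ s ∈ Finset.Ico ((i:ℕ)+1) n, ((N:ℚ) + s - (i:ℕ))) := by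
  rw [Matrix.det_of_upperTriangular]
  · apply Finset.prod_congr rfl
    intro i _
    simp only [Matrix.of_apply]
    rw [pol_eval]
    congr 1
    have := fact_prod_down (i:ℕ) (i:ℕ) le_rfl
    simpa using this.symm
  · intro i j hji
    simp only [Matrix.of_apply]
    rw [pol_eval]
    rw [Finset.prod_eq_zero (Finset.mem_range.2 (show (j:ℕ) < (i:ℕ) from hji)) (by simp)]
    simp

lemma det_formulaQ (n c N : ℕ) (hc : c ≤ N) :
    (Matrix.of fun i j : Fin n => ((zchoose N ((c:ℤ) + (j:ℕ) - (i:ℕ)) : ℤ) : ℚ)).det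
      * ∏ j : Fin n, (((c+(j:ℕ))! : ℚ) * ((N + n - 1 - (c+(j:ℕ)))! : ℚ))
    = (N ! : ℚ)^n *
      ∏ i : Fin n, (((i:ℕ)! : ℚ) * ∏ s ∈ Finset.Ico ((i:ℕ)+1) n, ((N:ℚ) + s - (i:ℕ))) := by
  have key : (Matrix.of fun i j : Fin n =>
      (((c+(j:ℕ))! : ℚ) * ((N + n - 1 - (c+(j:ℕ)))! : ℚ)) *
        ((zchoose N ((c:ℤ) + (j:ℕ) - (i:ℕ)) : ℤ) : ℚ))
      = (Matrix.of fun i j : Fin n => (N ! : ℚ) * (pol N n (i:ℕ)).eval ((c:ℚ) + (j:ℕ))) := by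
    ext i j
    simp only [Matrix.of_apply]
    have h := entry_eq N n (i:ℕ) (c + (j:ℕ)) i.isLt (by omega)
    have harg : ((c + (j:ℕ) : ℕ) : ℤ) - (i:ℕ) = (c:ℤ) + (j:ℕ) - (i:ℕ) := by push_cast; ring
    rw [harg] at h
    have hcj : (((c + (j:ℕ) : ℕ)) : ℚ) = (c:ℚ) + (j:ℕ) := by push_cast; ring
    rw [hcj] at h
    rw [← h]; ring
  have lhs := congrArg Matrix.det key
  have hrow := Matrix.det_mul_row (fun j : Fin n => (((c+(j:ℕ))! : ℚ) * ((N + n - 1 - (c+(j:ℕ)))! : ℚ)))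
    (Matrix.of fun i j : Fin n => ((zchoose N ((c:ℤ) + (j:ℕ) - (i:ℕ)) : ℤ) : ℚ))
  simp only [Matrix.of_apply] at hrow
  rw [hrow] at lhs
  have rhs : (Matrix.of fun i j : Fin n =>
      (N ! : ℚ) * (pol N n (i:ℕ)).eval ((c:ℚ) + (j:ℕ))).det
      = (N ! : ℚ)^n * (Matrix.of fun i j : Fin n => (pol N n (i:ℕ)).eval ((c:ℚ) + (j:ℕ))).det := by
    have := Matrix.det_mul_column (fun _ : Fin n => (N ! : ℚ))
      (Matrix.of fun i j : Fin n => (pol N n (i:ℕ)).eval ((c:ℚ) + (j:ℕ)))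
    simp only [Matrix.of_apply] at this ⊢
    rw [this]
    simp [Finset.prod_const]
  rw [rhs] at lhs
  rw [det_eval_shift n c (fun i : Fin n => pol N n (i:ℕ)) (fun i => pol_natDegree_lt N n _ i.isLt),
    det_tri] at lhs
  rw [mul_comm] at lhs
  exact lhs

lemma det_formulaZ (n c N : ℕ) (hc : c ≤ N) :
    (Matrix.of fun i j : Fin n => zchoose N ((c:ℤ) + (j:ℕ) - (i:ℕ))).det
      * ((∏ j ∈ Finset.range n, ((c+j)! * (N + n - 1 - (c+j))!) : ℕ) : ℤ)
    = ((N ! ^ n * ∏ i ∈ Finset.range n, (i ! * ∏ s ∈ Finset.Ico (i+1) n, (N + s - i)) : ℕ) : ℤ) := by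
  apply (Int.cast_injective (α := ℚ))
  have hQ := det_formulaQ n c N hc
  have hdet : (((Matrix.of fun i j : Fin n => zchoose N ((c:ℤ) + (j:ℕ) - (i:ℕ))).det : ℤ) : ℚ)
      = (Matrix.of fun i j : Fin n => ((zchoose N ((c:ℤ) + (j:ℕ) - (i:ℕ)) : ℤ) : ℚ)).det := by
    rw [show ((((Matrix.of fun i j : Fin n => zchoose N ((c:ℤ) + (j:ℕ) - (i:ℕ))).det : ℤ) : ℚ))
        = (Int.castRingHom ℚ) ((Matrix.of fun i j : Fin n => zchoose N ((c:ℤ) + (j:ℕ) - (i:ℕ))).det) from rfl,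
      RingHom.map_det]
    congr 1
  push_cast
  rw [show ((Matrix.of fun i j : Fin n => zchoose N ((c:ℤ) + (j:ℕ) - (i:ℕ))).map (fun x : ℤ => (x:ℚ))).det
      = (Matrix.of fun i j : Fin n => ((zchoose N ((c:ℤ) + (j:ℕ) - (i:ℕ)) : ℤ) : ℚ)).det from rfl]
  rw [← Fin.prod_univ_eq_prod_range (fun j => (((c+j)! : ℚ) * ((N + n - 1 - (c+j))! : ℚ)))]
  rw [← Fin.prod_univ_eq_prod_range (fun i => ((i ! : ℚ) * ∏ s ∈ Finset.Ico (i+1) n, ((N + s - i : ℕ) : ℚ)))]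
  rw [hQ]
  congr 1
  apply Finset.prod_congr rfl
  intro i _
  congr 1
  apply Finset.prod_congr rfl
  intro s hs
  rw [Finset.mem_Ico] at hs
  push_cast [Nat.cast_sub (show (i:ℕ) ≤ N + s by omega)]
  ring


/-- The `t`-minimal case: for `1 ≤ α ≤ β ≤ γ ≤ 2(α+β)` with `3 ∣ α+β+γ`,
`t = (α+β+γ)/3` and `lam = (2(α+β)-γ)/3` (encoded by `3t = α+β+γ` and
`3·lam + γ = 2(α+β)`), the determinant of the `lam × lam` matrix with entries
`M_{i,j} = binom(γ+t, β+t+1-i-j)` is nonzero, and it is not divisible by any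
prime `p ≥ α + β + γ`. -/
theorem det_t_minimal_ne_zero_and_prime (α β γ t lam : ℕ)
    (hα : 1 ≤ α) (hαβ : α ≤ β) (hβγ : β ≤ γ) (hγ : γ ≤ 2 * (α + β))
    (ht : 3 * t = α + β + γ) (hlam : 3 * lam + γ = 2 * (α + β)) :
    (Matrix.of fun i j : Fin lam =>
        zchoose (γ + t) ((β : ℤ) + (t : ℤ) + 1 - ((i : ℤ) + 1) - ((j : ℤ) + 1))).det ≠ 0 ∧
    ∀ p : ℕ, p.Prime → α + β + γ ≤ p →
      ¬ (p : ℤ) ∣ (Matrix.of fun i j : Fin lam =>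
          zchoose (γ + t) ((β : ℤ) + (t : ℤ) + 1 - ((i : ℤ) + 1) - ((j : ℤ) + 1))).det := by
  rcases Nat.eq_zero_or_pos lam with h0 | hpos
  · subst h0
    rw [Matrix.det_fin_zero]
    refine ⟨one_ne_zero, fun p hp _ hdvd => ?_⟩
    have := Int.eq_one_of_dvd_one (by positivity) hdvd
    omega
  · have hat : α ≤ t := by omega
    have hlg : lam + γ = 2 * t := by omega
    have htbg : t ≤ β + γ := by omega
    set N := γ + t with hN
    set c := β + γ - t with hc0
    have hcN : c ≤ N := by omega
    have hNn : N + lam = 3 * t := by omega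
    set T := Matrix.of fun i j : Fin lam => zchoose N ((c:ℤ) + (j:ℕ) - (i:ℕ)) with hT
    -- the given matrix is T with columns reversed
    have hM : (Matrix.of fun i j : Fin lam =>
        zchoose (γ + t) ((β : ℤ) + (t : ℤ) + 1 - ((i : ℤ) + 1) - ((j : ℤ) + 1)))
        = T.submatrix id (Fin.revPerm) := by
      ext i j
      simp only [hT, Matrix.of_apply, Matrix.submatrix_apply, id_eq, Fin.revPerm_apply]
      have hrev : (Fin.rev j).val = lam - (j.val + 1) := Fin.val_rev j
      have hjlt : j.val < lam := j.isLt
      rw [hN]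
      congr 1
      rw [hrev]
      omega
    -- determinant formula
    have key := det_formulaZ lam c N hcN
    rw [← hT] at key
    set Bn : ℕ := ∏ j ∈ Finset.range lam, ((c+j)! * (N + lam - 1 - (c+j))!) with hBn
    set An : ℕ := N ! ^ lam * ∏ i ∈ Finset.range lam, (i ! * ∏ s ∈ Finset.Ico (i+1) lam, (N + s - i)) with hAn
    have hApos : 0 < An := by
      rw [hAn]
      apply Nat.mul_pos (pow_pos (Nat.factorial_pos N) _)
      apply Finset.prod_pos
      intro i _
      apply Nat.mul_pos (Nat.factorial_pos i)
      apply Finset.prod_pos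
      intro s hs
      rw [Finset.mem_Ico] at hs
      omega
    have hTne : T.det ≠ 0 := by
      intro h
      rw [h, zero_mul] at key
      have : An = 0 := by exact_mod_cast key.symm
      omega
    have hTdvd : ∀ p : ℕ, p.Prime → α + β + γ ≤ p → ¬ (p : ℤ) ∣ T.det := by
      intro p hp hple hdvd
      have hdA : (p:ℤ) ∣ (An : ℤ) := by
        rw [← key]
        exact Dvd.dvd.mul_right hdvd _
      have hdAn : p ∣ An := by exact_mod_cast hdA
      rw [hAn] at hdAn
      rcases (Nat.Prime.dvd_mul hp).1 hdAn with h | h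
      · have h1 : p ∣ N ! := hp.dvd_of_dvd_pow h
        have h2 : p ≤ N := (Nat.Prime.dvd_factorial hp).1 h1
        omega
      · rcases (Nat.Prime.prime hp).dvd_finset_prod_iff _ |>.1 h with ⟨i, hi, hdi⟩
        rw [Finset.mem_range] at hi
        rcases (Nat.Prime.dvd_mul hp).1 hdi with h' | h'
        · have h2 : p ≤ i := (Nat.Prime.dvd_factorial hp).1 h'
          omega
        · rcases (Nat.Prime.prime hp).dvd_finset_prod_iff _ |>.1 h' with ⟨s, hs, hds⟩
          rw [Finset.mem_Ico] at hs
          have h3 : p ≤ N + s - i := Nat.le_of_dvd (by omega) hds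
          omega
    rw [hM, Matrix.det_permute']
    rcases Int.units_eq_one_or (Equiv.Perm.sign (Fin.revPerm : Equiv.Perm (Fin lam))) with hs | hs <;>
      rw [hs] <;>
      constructor
    · simpa using hTne
    · intro p hp hple
      simpa using hTdvd p hp hple
    · simpa using hTne
    · intro p hp hple
      have := hTdvd p hp hple
      simpa [dvd_neg] using this
end

section
/- Let α, β, γ, t be integers with 1 ≤ α ≤ β ≤ γ and t ≥ 1, and for d ∈ ℕ let h(d) be the number of triples (a,b,c) ∈ ℕ³ with a+b+c = d, a < α+t, b < β+t, c < γ+t, and not (a ≥ α and b ≥ β and c ≥ γ). Then for every integer d ≥ 0 one has h(d) = C(d+2,2) − C(d+2−σ,2) − C(d+2−α−t,2) − C(d+2−β−t,2) − C(d+2−γ−t,2) + 3·C(d+2−σ−t,2) + C(d+2−α−β−2t,2) + C(d+2−α−γ−2t,2) + C(d+2−β−γ−2t,2) − 3·C(d+2−σ−2t,2), where σ = α+β+γ and C(m,2) denotes the binomial coefficient binom(m,2) with the convention C(m,2) = 0 for m < 2. -/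
/-- The Hilbert function of `R/I` where
`I = (x^{α+t}, y^{β+t}, z^{γ+t}, x^α y^β z^γ) ⊂ K[x,y,z]`:
`hilb α β γ t d` is the number of triples `(a,b,c) ∈ ℕ³` with `a+b+c = d`,
`a < α+t`, `b < β+t`, `c < γ+t`, and not (`a ≥ α` and `b ≥ β` and `c ≥ γ`). -/
def hilb (α β γ t d : ℕ) : ℕ :=
  ((Finset.range (α + t) ×ˢ Finset.range (β + t) ×ˢ Finset.range (γ + t)).filter
    (fun p => p.1 + p.2.1 + p.2.2 = d ∧ ¬(α ≤ p.1 ∧ β ≤ p.2.1 ∧ γ ≤ p.2.2))).card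

/-- `C2 m = binom(m, 2)` for an integer `m`, with the convention that it is
`0` whenever `m < 2`. -/
def C2 (m : ℤ) : ℤ := if 0 ≤ m then (m.toNat.choose 2 : ℤ) else 0

/-- All triples of naturals with sum `d`. -/
def Tset (d : ℕ) : Finset (ℕ × ℕ × ℕ) :=
  (Finset.range (d+1) ×ˢ Finset.range (d+1) ×ˢ Finset.range (d+1)).filter
    (fun p => p.1 + p.2.1 + p.2.2 = d)

lemma card_Tset (n : ℕ) : (Tset n).card = (n+2).choose 2 := by
  have h1 : (Tset n).card
      = ∑ a ∈ Finset.range (n+1), ∑ b ∈ Finset.range (n+1), ∑ c ∈ Finset.range (n+1),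
          if a + b + c = n then 1 else 0 := by
    rw [Tset, Finset.card_filter, Finset.sum_product]
    refine Finset.sum_congr rfl fun a _ => ?_
    rw [Finset.sum_product]
  rw [h1]
  have h2 : ∀ a b : ℕ, (∑ c ∈ Finset.range (n+1), if a + b + c = n then 1 else 0)
      = if a + b ≤ n then 1 else 0 := by
    intro a b
    by_cases h : a + b ≤ n
    · rw [Finset.sum_congr rfl (fun c _ => by
        have : (a + b + c = n) ↔ (c = n - a - b) := by omega
        rw [if_congr this rfl rfl])]
      rw [Finset.sum_ite_eq' (Finset.range (n+1)) (n - a - b) (fun _ => 1)]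
      rw [if_pos (by simp [Nat.lt_succ_iff]; omega), if_pos h]
    · rw [if_neg h]
      apply Finset.sum_eq_zero
      intro c _
      rw [if_neg (by omega)]
  have h3 : ∀ a : ℕ, (∑ b ∈ Finset.range (n+1), if a + b ≤ n then 1 else 0)
      = n + 1 - a := by
    intro a
    rw [← Finset.card_filter]
    have : (Finset.range (n+1)).filter (fun b => a + b ≤ n) = Finset.range (n + 1 - a) := by
      ext b; simp [Nat.lt_succ_iff]; omega
    rw [this, Finset.card_range]
  calc (∑ a ∈ Finset.range (n+1), ∑ b ∈ Finset.range (n+1), ∑ c ∈ Finset.range (n+1),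
          if a + b + c = n then 1 else 0)
      = ∑ a ∈ Finset.range (n+1), (n + 1 - a) := by
        refine Finset.sum_congr rfl fun a _ => ?_
        rw [Finset.sum_congr rfl (fun b _ => h2 a b), h3]
    _ = ∑ a ∈ Finset.range (n+1), (a + 1) := by
        rw [← Finset.sum_range_reflect]
        refine Finset.sum_congr rfl fun a ha => ?_
        simp at ha; omega
    _ = (n+2).choose 2 := by
        have := Finset.sum_range_id (n+2)
        rw [Finset.sum_range_succ'] at this
        simp at this
        rw [Nat.choose_two_right]
        have h9 : (n+2) - 1 = n+1 := by omega
        rw [h9]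
        omega

lemma C2_eq_zero {m : ℤ} (h : m ≤ 1) : C2 m = 0 := by
  unfold C2
  split
  · norm_num [Nat.choose_eq_zero_of_lt (by omega : m.toNat < 2)]
  · rfl

lemma C2_ofNat (n : ℕ) : C2 (n : ℤ) = (n.choose 2 : ℤ) := by
  simp [C2]

lemma card_shift' (d u v w : ℕ) :
    ((((Tset d)).filter (fun p => u ≤ p.1 ∧ v ≤ p.2.1 ∧ w ≤ p.2.2)).card : ℤ)
      = C2 ((d:ℤ) + 2 - u - v - w) := by
  by_cases h : u + v + w ≤ d
  · have hb : ((Tset d).filter (fun p => u ≤ p.1 ∧ v ≤ p.2.1 ∧ w ≤ p.2.2)).card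
        = (Tset (d - (u+v+w))).card := by
      apply Finset.card_bij' (fun p _ => (p.1 - u, p.2.1 - v, p.2.2 - w))
        (fun q _ => (q.1 + u, q.2.1 + v, q.2.2 + w))
      · intro p hp
        simp only [Tset, Finset.mem_filter, Finset.mem_product, Finset.mem_range] at hp ⊢
        omega
      · intro q hq
        simp only [Tset, Finset.mem_filter, Finset.mem_product, Finset.mem_range] at hq ⊢
        omega
      · intro p hp
        simp only [Tset, Finset.mem_filter, Finset.mem_product, Finset.mem_range] at hp
        ext <;> simp <;> omega
      · intro q hq
        simp only [Tset, Finset.mem_filter, Finset.mem_product, Finset.mem_range] at hq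
        ext <;> simp
    rw [hb, card_Tset]
    have : (d:ℤ) + 2 - u - v - w = ((d - (u+v+w) + 2 : ℕ) : ℤ) := by push_cast; omega
    rw [this, C2_ofNat]
  · have hb : (Tset d).filter (fun p => u ≤ p.1 ∧ v ≤ p.2.1 ∧ w ≤ p.2.2) = ∅ := by
      rw [Finset.filter_eq_empty_iff]
      intro p hp
      simp only [Tset, Finset.mem_filter, Finset.mem_product, Finset.mem_range] at hp
      omega
    rw [hb]
    rw [C2_eq_zero (by omega)]
    simp

lemma pointwise' (α β γ A B C a b c : ℕ) (hA : α ≤ A) (hB : β ≤ B) (hC : γ ≤ C) :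
    (if (a < A ∧ b < B ∧ c < C ∧ ¬(α ≤ a ∧ β ≤ b ∧ γ ≤ c)) then (1:ℤ) else 0)
      = (if (0 ≤ a ∧ 0 ≤ b ∧ 0 ≤ c) then (1:ℤ) else 0)
        - (if (A ≤ a ∧ 0 ≤ b ∧ 0 ≤ c) then (1:ℤ) else 0)
        - (if (0 ≤ a ∧ B ≤ b ∧ 0 ≤ c) then (1:ℤ) else 0)
        - (if (0 ≤ a ∧ 0 ≤ b ∧ C ≤ c) then (1:ℤ) else 0)
        + (if (A ≤ a ∧ B ≤ b ∧ 0 ≤ c) then (1:ℤ) else 0)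
        + (if (A ≤ a ∧ 0 ≤ b ∧ C ≤ c) then (1:ℤ) else 0)
        + (if (0 ≤ a ∧ B ≤ b ∧ C ≤ c) then (1:ℤ) else 0)
        - (if (α ≤ a ∧ β ≤ b ∧ γ ≤ c) then (1:ℤ) else 0)
        + (if (α ≤ a ∧ β ≤ b ∧ C ≤ c) then (1:ℤ) else 0)
        + (if (α ≤ a ∧ B ≤ b ∧ γ ≤ c) then (1:ℤ) else 0)
        + (if (A ≤ a ∧ β ≤ b ∧ γ ≤ c) then (1:ℤ) else 0)
        - (if (α ≤ a ∧ B ≤ b ∧ C ≤ c) then (1:ℤ) else 0)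
        - (if (A ≤ a ∧ β ≤ b ∧ C ≤ c) then (1:ℤ) else 0)
        - (if (A ≤ a ∧ B ≤ b ∧ γ ≤ c) then (1:ℤ) else 0) := by
  rcases Nat.lt_or_ge a A with h1|h1 <;> rcases Nat.lt_or_ge b B with h2|h2 <;>
    rcases Nat.lt_or_ge c C with h3|h3 <;> rcases Nat.lt_or_ge a α with h4|h4 <;>
    rcases Nat.lt_or_ge b β with h5|h5 <;> rcases Nat.lt_or_ge c γ with h6|h6 <;>
    simp_all [Nat.not_le.mpr, Nat.le_of_lt] <;> omega

/-- The Hilbert function of a level Artinian monomial almost complete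
intersection, computed from the free resolution. -/
theorem hilb_eq_of_resolution (α β γ t σ : ℕ)
    (hα : 1 ≤ α) (hαβ : α ≤ β) (hβγ : β ≤ γ) (ht : 1 ≤ t)
    (hσ : σ = α + β + γ) :
    ∀ d : ℕ,
      (hilb α β γ t d : ℤ)
        = C2 ((d : ℤ) + 2) - C2 ((d : ℤ) + 2 - σ)
          - C2 ((d : ℤ) + 2 - α - t) - C2 ((d : ℤ) + 2 - β - t)
          - C2 ((d : ℤ) + 2 - γ - t)
          + 3 * C2 ((d : ℤ) + 2 - σ - t)
          + C2 ((d : ℤ) + 2 - α - β - 2 * t)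
          + C2 ((d : ℤ) + 2 - α - γ - 2 * t)
          + C2 ((d : ℤ) + 2 - β - γ - 2 * t)
          - 3 * C2 ((d : ℤ) + 2 - σ - 2 * t) := by
  intro d
  subst hσ
  have hset : ((Finset.range (α + t) ×ˢ Finset.range (β + t) ×ˢ Finset.range (γ + t)).filter
      (fun p => p.1 + p.2.1 + p.2.2 = d ∧ ¬(α ≤ p.1 ∧ β ≤ p.2.1 ∧ γ ≤ p.2.2)))
      = (Tset d).filter (fun p =>
          p.1 < α + t ∧ p.2.1 < β + t ∧ p.2.2 < γ + t ∧ ¬(α ≤ p.1 ∧ β ≤ p.2.1 ∧ γ ≤ p.2.2)) := by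
    ext ⟨a, b, c⟩
    simp only [Tset, Finset.mem_filter, Finset.mem_product, Finset.mem_range]
    omega
  have hcast : (hilb α β γ t d : ℤ)
      = ∑ p ∈ Tset d, (if (p.1 < α + t ∧ p.2.1 < β + t ∧ p.2.2 < γ + t
          ∧ ¬(α ≤ p.1 ∧ β ≤ p.2.1 ∧ γ ≤ p.2.2)) then (1:ℤ) else 0) := by
    rw [hilb, hset, Finset.card_filter]
    push_cast
    rfl
  rw [hcast]
  rw [Finset.sum_congr rfl (fun p _ => pointwise' α β γ (α+t) (β+t) (γ+t) p.1 p.2.1 p.2.2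
    (by omega) (by omega) (by omega))]
  simp only [Finset.sum_add_distrib, Finset.sum_sub_distrib]
  simp only [Finset.sum_boole]
  rw [card_shift' d 0 0 0, card_shift' d (α+t) 0 0, card_shift' d 0 (β+t) 0,
    card_shift' d 0 0 (γ+t), card_shift' d (α+t) (β+t) 0, card_shift' d (α+t) 0 (γ+t),
    card_shift' d 0 (β+t) (γ+t), card_shift' d α β γ, card_shift' d α β (γ+t),
    card_shift' d α (β+t) γ, card_shift' d (α+t) β γ, card_shift' d α (β+t) (γ+t),
    card_shift' d (α+t) β (γ+t), card_shift' d (α+t) (β+t) γ]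
  push_cast
  ring_nf
end

section
/- Let α, β, γ, t be integers with 1 ≤ α ≤ β ≤ γ and t ≥ 1, and for d ∈ ℕ let h(d) be the number of triples (a,b,c) ∈ ℕ³ with a+b+c = d, a < α+t, b < β+t, c < γ+t, and not (a ≥ α and b ≥ β and c ≥ γ). Set e = α+β+γ+2t−3. Then h(e) = 3, and h(d) = 0 for every integer d > e. -/
/-- The value of the Hilbert function in the socle degree `e = α+β+γ+2t-3`
(encoded by `e + 3 = α+β+γ+2t`) is `3`, the Cohen–Macaulay type, and the
Hilbert function vanishes in all degrees beyond `e`. -/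
theorem hilb_socle (α β γ t e : ℕ)
    (hα : 1 ≤ α) (hαβ : α ≤ β) (hβγ : β ≤ γ) (ht : 1 ≤ t)
    (he : e + 3 = α + β + γ + 2 * t) :
    hilb α β γ t e = 3 ∧ ∀ d : ℕ, e < d → hilb α β γ t d = 0 := by
  constructor
  · have hset : ((Finset.range (α + t) ×ˢ Finset.range (β + t) ×ˢ Finset.range (γ + t)).filter
        (fun p => p.1 + p.2.1 + p.2.2 = e ∧ ¬(α ≤ p.1 ∧ β ≤ p.2.1 ∧ γ ≤ p.2.2)))
        = {(α - 1, (β + t - 1, γ + t - 1)), (α + t - 1, (β - 1, γ + t - 1)),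
           (α + t - 1, (β + t - 1, γ - 1))} := by
      ext ⟨a, b, c⟩
      simp only [Finset.mem_filter, Finset.mem_product, Finset.mem_range,
        Finset.mem_insert, Finset.mem_singleton, Prod.mk.injEq]
      omega
    rw [hilb, hset]
    rw [Finset.card_insert_of_notMem (by simp [Prod.ext_iff]; omega),
      Finset.card_insert_of_notMem (by simp [Prod.ext_iff]; omega),
      Finset.card_singleton]
  · intro d hd
    rw [hilb, Finset.card_eq_zero, Finset.filter_eq_empty_iff]
    rintro ⟨a, b, c⟩ hm
    simp only [Finset.mem_product, Finset.mem_range] at hm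
    simp only [not_and, not_not]
    omega
end

section
/- Let α, β, γ, t be integers with 1 ≤ α ≤ β ≤ γ < 2(α+β), with α+β+γ divisible by 3, and with t > (α+β+γ)/3. Set σ = α+β+γ and s = (2/3)σ + t − 2, and for d ∈ ℕ let h(d) be the number of triples (a,b,c) ∈ ℕ³ with a+b+c = d, a < α+t, b < β+t, c < γ+t, and not (a ≥ α and b ≥ β and c ≥ γ). Then for every integer d with 0 ≤ d ≤ s one has h(d) = C(d+2,2) − C(d+2−σ,2) − C(d+2−α−t,2) − C(d+2−β−t,2) − C(d+2−γ−t,2), where C(m,2) = binom(m,2) with the convention C(m,2) = 0 for m < 2. -/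
lemma sum_add_one (n : ℕ) : ∑ a ∈ Finset.range n, (a + 1) = (n+1).choose 2 := by
  induction n with
  | zero => simp
  | succ n ih =>
    rw [Finset.sum_range_succ, ih, Nat.choose_succ_succ' (n+1) 1, Nat.choose_one_right]
    norm_num; omega

lemma count_eq (d : ℕ) :
    ((Finset.range (d+1) ×ˢ Finset.range (d+1) ×ˢ Finset.range (d+1)).filter
      (fun p => p.1 + p.2.1 + p.2.2 = d)).card = (d+2).choose 2 := by
  have hb : ((Finset.range (d+1) ×ˢ Finset.range (d+1) ×ˢ Finset.range (d+1)).filter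
      (fun p => p.1 + p.2.1 + p.2.2 = d)).card
      = ((Finset.range (d+1)).sigma (fun a => Finset.HasAntidiagonal.antidiagonal (d - a))).card := by
    apply Finset.card_bij' (fun p _ => (⟨p.1, (p.2.1, p.2.2)⟩ : Σ _ : ℕ, ℕ × ℕ))
      (fun q _ => (q.1, q.2.1, q.2.2))
    · intro p hp
      simp only [Finset.mem_filter, Finset.mem_product, Finset.mem_range] at hp
      simp only [Finset.mem_sigma, Finset.mem_range, Finset.HasAntidiagonal.mem_antidiagonal]
      omega
    · intro q hq
      simp only [Finset.mem_sigma, Finset.mem_range, Finset.HasAntidiagonal.mem_antidiagonal] at hq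
      simp only [Finset.mem_filter, Finset.mem_product, Finset.mem_range]
      omega
    · intro p _; rfl
    · intro q _; rfl
  rw [hb, Finset.card_sigma]
  simp only [Finset.Nat.card_antidiagonal]
  have hrefl := Finset.sum_range_reflect (fun a => a + 1) (d+1)
  simp only [Nat.add_sub_cancel] at hrefl
  calc ∑ a ∈ Finset.range (d+1), (d - a + 1)
      = ∑ j ∈ Finset.range (d+1), (d + 1 - 1 - j + 1) := by
        apply Finset.sum_congr rfl; intro a ha; simp only [Finset.mem_range] at ha; omega
    _ = ∑ j ∈ Finset.range (d+1), (j + 1) := hrefl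
    _ = (d+2).choose 2 := sum_add_one (d+1)

lemma count_shift (x y z d : ℕ) :
    ((Finset.range (d+1) ×ˢ Finset.range (d+1) ×ˢ Finset.range (d+1)).filter
      (fun p => p.1 + p.2.1 + p.2.2 = d ∧ x ≤ p.1 ∧ y ≤ p.2.1 ∧ z ≤ p.2.2)).card
    = if x + y + z ≤ d then (d - (x + y + z) + 2).choose 2 else 0 := by
  split_ifs with h
  · set e := d - (x + y + z) with he
    have hb : ((Finset.range (d+1) ×ˢ Finset.range (d+1) ×ˢ Finset.range (d+1)).filter
        (fun p => p.1 + p.2.1 + p.2.2 = d ∧ x ≤ p.1 ∧ y ≤ p.2.1 ∧ z ≤ p.2.2)).card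
        = ((Finset.range (e+1) ×ˢ Finset.range (e+1) ×ˢ Finset.range (e+1)).filter
          (fun p => p.1 + p.2.1 + p.2.2 = e)).card := by
      apply Finset.card_bij' (fun p _ => (p.1 - x, p.2.1 - y, p.2.2 - z))
        (fun q _ => (q.1 + x, q.2.1 + y, q.2.2 + z))
      · intro p hp
        simp only [Finset.mem_filter, Finset.mem_product, Finset.mem_range] at hp ⊢
        omega
      · intro q hq
        simp only [Finset.mem_filter, Finset.mem_product, Finset.mem_range] at hq ⊢
        omega
      · intro p hp
        simp only [Finset.mem_filter, Finset.mem_product, Finset.mem_range] at hp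
        ext <;> simp <;> omega
      · intro q hq
        simp only [Finset.mem_filter, Finset.mem_product, Finset.mem_range] at hq
        ext <;> simp
    rw [hb, count_eq]
  · rw [Finset.card_eq_zero, Finset.filter_eq_empty_iff]
    intro p hp
    simp only [Finset.mem_product, Finset.mem_range] at hp
    omega

lemma C2_eq (k d : ℕ) : C2 ((d:ℤ) + 2 - k) = if k ≤ d then ((d - k + 2).choose 2 : ℤ) else 0 := by
  unfold C2
  split_ifs with h1 h2 h3
  · congr 2; omega
  · have h4 : ((d:ℤ) + 2 - k).toNat = 0 ∨ ((d:ℤ) + 2 - k).toNat = 1 := by omega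
    rcases h4 with h4 | h4 <;> rw [h4] <;> rfl
  · omega
  · rfl

/-- In degrees `d ≤ s = (2/3)σ + t - 2` (encoded by `3(s+2) = 2σ + 3t`),
the Hilbert function is given by the alternating sum coming from the first
part of the free resolution. -/
theorem hilb_formula_low_degrees (α β γ t σ s : ℕ)
    (hα : 1 ≤ α) (hαβ : α ≤ β) (hβγ : β ≤ γ) (hγ : γ < 2 * (α + β))
    (hσ : σ = α + β + γ) (h3 : 3 ∣ σ) (ht : σ < 3 * t)
    (hs : 3 * (s + 2) = 2 * σ + 3 * t) :
    ∀ d : ℕ, d ≤ s →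
      (hilb α β γ t d : ℤ)
        = C2 ((d : ℤ) + 2) - C2 ((d : ℤ) + 2 - σ)
          - C2 ((d : ℤ) + 2 - α - t) - C2 ((d : ℤ) + 2 - β - t)
          - C2 ((d : ℤ) + 2 - γ - t) := by
  subst hσ
  intro d hd
  classical
  set V := (Finset.range (d+1) ×ˢ Finset.range (d+1) ×ˢ Finset.range (d+1)).filter
      (fun p : ℕ × ℕ × ℕ => p.1 + p.2.1 + p.2.2 = d) with hV
  set A := V.filter (fun p => α + t ≤ p.1) with hA
  set B := V.filter (fun p => β + t ≤ p.2.1) with hB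
  set C := V.filter (fun p => γ + t ≤ p.2.2) with hC
  set D := V.filter (fun p => α ≤ p.1 ∧ β ≤ p.2.1 ∧ γ ≤ p.2.2) with hD
  have h1 : hilb α β γ t d = (V.filter (fun p => ¬(α + t ≤ p.1 ∨ β + t ≤ p.2.1 ∨
      γ + t ≤ p.2.2 ∨ (α ≤ p.1 ∧ β ≤ p.2.1 ∧ γ ≤ p.2.2)))).card := by
    unfold hilb
    congr 1
    rw [hV, Finset.filter_filter]
    ext p
    simp only [Finset.mem_filter, Finset.mem_product, Finset.mem_range]
    omega
  have hcard : hilb α β γ t d = V.card - (A ∪ (B ∪ (C ∪ D))).card := by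
    rw [h1, Finset.filter_not, Finset.card_sdiff_of_subset (Finset.filter_subset _ _)]
    congr 2
    rw [Finset.filter_or, Finset.filter_or, Finset.filter_or]
  have memV : ∀ p : ℕ × ℕ × ℕ, p ∈ V → p.1 + p.2.1 + p.2.2 = d := by
    intro p hp; rw [hV, Finset.mem_filter] at hp; exact hp.2
  have dC : Disjoint C D := by
    rw [Finset.disjoint_left]
    intro p hp hq
    rw [hC, Finset.mem_filter] at hp
    rw [hD, Finset.mem_filter] at hq
    have := memV p hp.1
    have h2 := hp.2; have h3 := hq.2
    omega
  have dB : Disjoint B (C ∪ D) := by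
    rw [Finset.disjoint_left]
    intro p hp hq
    rw [hB, Finset.mem_filter] at hp
    rw [Finset.mem_union] at hq
    have := memV p hp.1
    rcases hq with hq | hq
    · rw [hC, Finset.mem_filter] at hq
      have h2 := hp.2; have h3 := hq.2; omega
    · rw [hD, Finset.mem_filter] at hq
      have h2 := hp.2; have h3 := hq.2; omega
  have dA : Disjoint A (B ∪ (C ∪ D)) := by
    rw [Finset.disjoint_left]
    intro p hp hq
    rw [hA, Finset.mem_filter] at hp
    rw [Finset.mem_union, Finset.mem_union] at hq
    have := memV p hp.1
    rcases hq with hq | hq | hq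
    · rw [hB, Finset.mem_filter] at hq
      have h2 := hp.2; have h3 := hq.2; omega
    · rw [hC, Finset.mem_filter] at hq
      have h2 := hp.2; have h3 := hq.2; omega
    · rw [hD, Finset.mem_filter] at hq
      have h2 := hp.2; have h3 := hq.2; omega
  have hunion : (A ∪ (B ∪ (C ∪ D))).card
      = A.card + (B.card + (C.card + D.card)) := by
    rw [Finset.card_union_of_disjoint dA, Finset.card_union_of_disjoint dB,
      Finset.card_union_of_disjoint dC]
  have hsub : A ∪ (B ∪ (C ∪ D)) ⊆ V :=
    Finset.union_subset (Finset.filter_subset _ _)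
      (Finset.union_subset (Finset.filter_subset _ _)
        (Finset.union_subset (Finset.filter_subset _ _) (Finset.filter_subset _ _)))
  have hle : (A ∪ (B ∪ (C ∪ D))).card ≤ V.card := Finset.card_le_card hsub
  have cA : A.card = if α + t ≤ d then ((d - (α + t) + 2).choose 2) else 0 := by
    have h := count_shift (α + t) 0 0 d
    simp only [Nat.zero_le, true_and, and_true, add_zero] at h
    rw [hA, hV, Finset.filter_filter, h]
  have cB : B.card = if β + t ≤ d then ((d - (β + t) + 2).choose 2) else 0 := by
    have h := count_shift 0 (β + t) 0 d
    simp only [Nat.zero_le, true_and, and_true, add_zero, zero_add] at h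
    rw [hB, hV, Finset.filter_filter, h]
  have cC : C.card = if γ + t ≤ d then ((d - (γ + t) + 2).choose 2) else 0 := by
    have h := count_shift 0 0 (γ + t) d
    simp only [Nat.zero_le, true_and, and_true, add_zero, zero_add] at h
    rw [hC, hV, Finset.filter_filter, h]
  have cD : D.card = if α + β + γ ≤ d then ((d - (α + β + γ) + 2).choose 2) else 0 := by
    have h := count_shift α β γ d
    rw [hD, hV, Finset.filter_filter, h]
  have cV : V.card = (d + 2).choose 2 := count_eq d
  have e0 : C2 ((d : ℤ) + 2) = ((d + 2).choose 2 : ℤ) := by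
    unfold C2
    rw [if_pos (by omega)]
    congr 2
  have eσ : C2 ((d : ℤ) + 2 - (α + β + γ : ℕ))
      = if α + β + γ ≤ d then (((d - (α + β + γ) + 2).choose 2 : ℕ) : ℤ) else 0 :=
    C2_eq (α + β + γ) d
  have eα : C2 ((d : ℤ) + 2 - α - t)
      = if α + t ≤ d then (((d - (α + t) + 2).choose 2 : ℕ) : ℤ) else 0 := by
    have hh : (d : ℤ) + 2 - α - t = (d : ℤ) + 2 - ((α + t : ℕ) : ℤ) := by push_cast; ring
    rw [hh, C2_eq]
  have eβ : C2 ((d : ℤ) + 2 - β - t)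
      = if β + t ≤ d then (((d - (β + t) + 2).choose 2 : ℕ) : ℤ) else 0 := by
    have hh : (d : ℤ) + 2 - β - t = (d : ℤ) + 2 - ((β + t : ℕ) : ℤ) := by push_cast; ring
    rw [hh, C2_eq]
  have eγ : C2 ((d : ℤ) + 2 - γ - t)
      = if γ + t ≤ d then (((d - (γ + t) + 2).choose 2 : ℕ) : ℤ) else 0 := by
    have hh : (d : ℤ) + 2 - γ - t = (d : ℤ) + 2 - ((γ + t : ℕ) : ℤ) := by push_cast; ring
    rw [hh, C2_eq]
  rw [hcard, Nat.cast_sub hle, hunion, cV, cA, cB, cC, cD, e0, eσ, eα, eβ, eγ]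
  push_cast [apply_ite (fun n : ℕ => (n : ℤ))]
  ring
end
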